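/- arXiv:1110.6327 — 9 statements merged into one kernel-verified Lean document; each statement's English description precedes it below -/
import Mathlib

section
/- Let α > 1 be a real number, 𝒜 ⊂ ℝ a finite alphabet, J ⊂ ℝ a bounded interval with 0 ∈ J, and D : J → 𝒜 a map such that T(x) = αx − D(x) maps J into J. Assume D is non-decreasing. For x ∈ J let d(x) = (D(T^{k−1}(x)))_{k≥1} ∈ 𝒜^ℕ. Then for all x, y ∈ J: x < y if and only if d(x) ≺_lex d(y). -/
/-!
While the first `i` digits of `x < y` agree, `T^[i] y - T^[i] x = α ^ i * (y - x)`, which is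
unbounded because `α > 1`; since the orbits stay in the bounded set `J`, some digit must differ.
At the first differing index the points `T^[k] x < T^[k] y` are still ordered, so monotonicity
of `D` gives the smaller digit to `x`. The converse follows because `≺_lex` is a strict order.
-/

/-- Lexicographic order on infinite sequences of reals: `x ≺_lex y` iff at the first index
where they differ, the entry of `x` is smaller. -/
def LexLt (x y : ℕ → ℝ) : Prop :=
  ∃ k, (∀ i < k, x i = y i) ∧ x k < y k

namespace LexLt

theorem irrefl (x : ℕ → ℝ) : ¬ LexLt x x := fun ⟨_, _, h⟩ => h.false

theorem asymm {x y : ℕ → ℝ} (hxy : LexLt x y) : ¬ LexLt y x := by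
  rintro ⟨l, hl, hyx⟩
  obtain ⟨k, hk, hxy⟩ := hxy
  rcases lt_trichotomy k l with hkl | rfl | hlk
  · exact hxy.ne' (hl k hkl)
  · exact hxy.not_gt hyx
  · exact hyx.ne' (hk l hlk)

theorem of_exists_ne {x y : ℕ → ℝ} (hne : ∃ k, x k ≠ y k)
    (hle : ∀ k, (∀ i < k, x i = y i) → x k ≤ y k) : LexLt x y := by
  classical
  have hagree : ∀ i < Nat.find hne, x i = y i := fun i hi => not_not.1 (Nat.find_min hne hi)
  exact ⟨Nat.find hne, hagree, (hle _ hagree).lt_of_ne (Nat.find_spec hne)⟩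

end LexLt

theorem lt_iff_lexLt_of_forall_lt {β : Type*} [LinearOrder β] {J : Set β} {f : β → ℕ → ℝ}
    (hf : ∀ x ∈ J, ∀ y ∈ J, x < y → LexLt (f x) (f y)) {x y : β} (hx : x ∈ J) (hy : y ∈ J) :
    x < y ↔ LexLt (f x) (f y) := by
  refine ⟨hf x hx y hy, fun hlex => ?_⟩
  by_contra hxy
  rcases (not_lt.1 hxy).lt_or_eq with hyx | rfl
  · exact hlex.asymm (hf y hy x hx hyx)
  · exact LexLt.irrefl _ hlex

section BetaTransformation

variable {α : ℝ} {D T : ℝ → ℝ}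

theorem iterate_sub_iterate_eq_pow_mul (hT : ∀ x, T x = α * x - D x) {x y : ℝ} :
    ∀ {i : ℕ}, (∀ j < i, D (T^[j] x) = D (T^[j] y)) →
      T^[i] y - T^[i] x = α ^ i * (y - x)
  | 0, _ => by simp
  | i + 1, h => by
    have ih := iterate_sub_iterate_eq_pow_mul hT fun j hj => h j (Nat.lt_succ_of_lt hj)
    rw [Function.iterate_succ_apply', Function.iterate_succ_apply', hT, hT, h i i.lt_succ_self,
      pow_succ', mul_assoc, ← ih]
    ring

theorem exists_digit_iterate_ne {J : Set ℝ} (hα : 1 < α) (hJ : Bornology.IsBounded J)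
    (hT : ∀ x, T x = α * x - D x) (hTJ : Set.MapsTo T J J) {x y : ℝ} (hx : x ∈ J)
    (hy : y ∈ J) (hxy : x < y) : ∃ k, D (T^[k] x) ≠ D (T^[k] y) := by
  by_contra! hall
  obtain ⟨n, hn⟩ := pow_unbounded_of_one_lt (Metric.diam J / (y - x)) hα
  have hgap : T^[n] y - T^[n] x ≤ Metric.diam J :=
    (le_abs_self _).trans ((Real.dist_eq _ _).symm.le.trans
      (Metric.dist_le_diam_of_mem hJ (hTJ.iterate n hy) (hTJ.iterate n hx)))
  rw [iterate_sub_iterate_eq_pow_mul hT fun j _ => hall j] at hgap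
  rw [div_lt_iff₀ (sub_pos.2 hxy)] at hn
  exact hn.not_ge hgap

theorem lexLt_digits_of_lt {J : Set ℝ} (hα : 1 < α) (hJ : Bornology.IsBounded J)
    (hT : ∀ x, T x = α * x - D x) (hTJ : Set.MapsTo T J J) (hD : MonotoneOn D J) {x y : ℝ}
    (hx : x ∈ J) (hy : y ∈ J) (hxy : x < y) :
    LexLt (fun k => D (T^[k] x)) (fun k => D (T^[k] y)) := by
  refine .of_exists_ne (exists_digit_iterate_ne hα hJ hT hTJ hx hy hxy) fun k hk => ?_
  have hlt : T^[k] x < T^[k] y := by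
    rw [← sub_pos, iterate_sub_iterate_eq_pow_mul hT hk]
    exact mul_pos (pow_pos (zero_lt_one.trans hα) k) (sub_pos.2 hxy)
  exact hD (hTJ.iterate k hx) (hTJ.iterate k hy) hlt.le

end BetaTransformation

theorem stmt0_general (α : ℝ) (hα : 1 < α) (J : Set ℝ)
    (hJbdd : Bornology.IsBounded J)
    (D : ℝ → ℝ)
    (T : ℝ → ℝ) (hT : ∀ x, T x = α * x - D x) (hTJ : ∀ x ∈ J, T x ∈ J)
    (hmono : MonotoneOn D J)
    (d : ℝ → ℕ → ℝ) (hd : ∀ x k, d x k = D (T^[k] x)) :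
    ∀ x ∈ J, ∀ y ∈ J, (x < y ↔ LexLt (d x) (d y)) := by
  obtain rfl : d = fun x k => D (T^[k] x) := funext fun x => funext (hd x)
  exact fun x hx y hy => lt_iff_lexLt_of_forall_lt
    (fun x hx y hy => lexLt_digits_of_lt hα hJbdd hT hTJ hmono hx hy) hx hy

theorem stmt0 (α : ℝ) (hα : 1 < α) (A : Finset ℝ) (J : Set ℝ)
    (hJbdd : Bornology.IsBounded J) (hJconn : J.OrdConnected) (h0J : (0 : ℝ) ∈ J)
    (D : ℝ → ℝ) (hDA : ∀ x ∈ J, D x ∈ A)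
    (T : ℝ → ℝ) (hT : ∀ x, T x = α * x - D x) (hTJ : ∀ x ∈ J, T x ∈ J)
    (hmono : MonotoneOn D J)
    (d : ℝ → ℕ → ℝ) (hd : ∀ x k, d x k = D (T^[k] x)) :
    ∀ x ∈ J, ∀ y ∈ J, (x < y ↔ LexLt (d x) (d y)) :=
  stmt0_general α hα J hJbdd D T hT hTJ hmono d hd
end

section
/- Let β > 1 with β ∉ ℕ and 𝒜 = {0,1,…,⌊β⌋}. Then J_{−β,𝒜} = [l, r], where l = −β⌊β⌋/(β²−1) and r = ⌊β⌋/(β²−1); that is, a real number x has a (−β)-representation over 𝒜 if and only if −β⌊β⌋/(β²−1) ≤ x ≤ ⌊β⌋/(β²−1). -/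
/-!
Writing `q = -1/β`, the term `s i q^(i+1)` with `0 ≤ s i ≤ ⌊β⌋` is largest when the digit is
`⌊β⌋` at even powers of `q` and `0` at odd ones, and smallest in the opposite case; the two
geometric series give `r = ⌊β⌋/(β² - 1)` and `l = -β r`. Conversely `[l, r]` is invariant under
the greedy map `T y = -β y - d(y)`, `d(y) = max 0 ⌈-β y - r⌉`, because the interval has length
`(β + 1) r = ⌊β⌋/(β - 1) > 1` and rounding up costs less than `1`. The digits `d(Tⁿ x)` then
represent `x`: the `n`-th partial sum differs from `x` by `Tⁿ(x) / (-β)ⁿ`, which tends to `0`.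
-/

open Filter Set

lemma hasSum_pow_succ_of_abs_lt_one {q : ℝ} (hq : |q| < 1) :
    HasSum (fun i : ℕ => q ^ (i + 1)) (q / (1 - q)) := by
  simpa only [pow_succ', div_eq_mul_inv] using (hasSum_geometric_of_abs_lt_one hq).mul_left q

/-- `(c + |c|) / 2` and `(c - |c|) / 2` are the positive and negative parts of `c`. -/
lemma mul_mem_Icc_of_mem_Icc {a M : ℝ} (ha : a ∈ Icc 0 M) (c : ℝ) :
    a * c ∈ Icc (M / 2 * (c - |c|)) (M / 2 * (c + |c|)) := by
  obtain ⟨ha0, haM⟩ := ha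
  rcases le_total 0 c with hc | hc
  · rw [abs_of_nonneg hc]
    constructor <;> nlinarith
  · rw [abs_of_nonpos hc]
    constructor <;> nlinarith

lemma tsum_mul_pow_succ_mem_Icc {a : ℕ → ℝ} {M q : ℝ} (ha : ∀ i, a i ∈ Icc 0 M)
    (hq : |q| < 1) :
    ∑' i, a i * q ^ (i + 1) ∈
      Icc (M / 2 * (q / (1 - q) - |q| / (1 - |q|))) (M / 2 * (q / (1 - q) + |q| / (1 - |q|))) := by
  have hpos := hasSum_pow_succ_of_abs_lt_one hq
  have habs : HasSum (fun i : ℕ => |q ^ (i + 1)|) (|q| / (1 - |q|)) := by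
    simpa only [abs_pow] using hasSum_pow_succ_of_abs_lt_one (q := |q|) (by rwa [abs_abs])
  have hsum : Summable fun i => a i * q ^ (i + 1) := by
    refine Summable.of_norm_bounded (habs.summable.mul_left M) fun i => ?_
    rw [Real.norm_eq_abs, abs_mul, abs_of_nonneg (ha i).1]
    exact mul_le_mul_of_nonneg_right (ha i).2 (abs_nonneg _)
  exact ⟨hasSum_le (fun i => (mul_mem_Icc_of_mem_Icc (ha i) _).1)
      ((hpos.sub habs).mul_left _) hsum.hasSum,
    hasSum_le (fun i => (mul_mem_Icc_of_mem_Icc (ha i) _).2)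
      hsum.hasSum ((hpos.add habs).mul_left _)⟩

lemma hasSum_div_pow_succ_of_bounded {b C : ℝ} (hb : 1 < |b|) {X s : ℕ → ℝ}
    (hX : ∀ n, |X n| ≤ C) (hrec : ∀ n, X (n + 1) = b * X n - s n) :
    HasSum (fun n => s n / b ^ (n + 1)) (X 0) := by
  have hb0 : b ≠ 0 := abs_pos.mp (one_pos.trans hb)
  have hρ0 : 0 ≤ |b|⁻¹ := inv_nonneg.mpr (abs_nonneg b)
  have hρ1 : |b|⁻¹ < 1 := inv_lt_one_of_one_lt₀ hb
  have hsummable : Summable fun n => s n / b ^ (n + 1) := by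
    refine Summable.of_norm_bounded
      ((summable_geometric_of_lt_one hρ0 hρ1).mul_left ((|b| + 1) * C)) fun n => ?_
    have hs : |s n| ≤ (|b| + 1) * C := by
      calc |s n| = |b * X n - X (n + 1)| := by rw [hrec]; ring_nf
        _ ≤ |b| * |X n| + |X (n + 1)| := by rw [← abs_mul]; exact abs_sub _ _
        _ ≤ (|b| + 1) * C := by nlinarith [hX n, hX (n + 1), abs_nonneg b]
    calc ‖s n / b ^ (n + 1)‖ = |s n| * |b|⁻¹ ^ (n + 1) := by
          rw [Real.norm_eq_abs, abs_div, abs_pow, div_eq_mul_inv, inv_pow]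
      _ ≤ (|b| + 1) * C * |b|⁻¹ ^ n :=
          mul_le_mul hs (pow_le_pow_of_le_one hρ0 hρ1.le n.le_succ) (by positivity)
            ((abs_nonneg _).trans hs)
  have hpartial : ∀ n, X 0 = ∑ i ∈ Finset.range n, s i / b ^ (i + 1) + X n / b ^ n := by
    intro n
    induction n with
    | zero => simp
    | succ n ih =>
      rw [ih, Finset.sum_range_succ, hrec]
      field_simp
      ring
  have hremainder : Tendsto (fun n => X n / b ^ n) atTop (nhds 0) := by
    refine squeeze_zero_norm (a := fun n => C * |b|⁻¹ ^ n) (fun n => ?_) ?_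
    · rw [Real.norm_eq_abs, abs_div, abs_pow, div_eq_mul_inv, inv_pow]
      exact mul_le_mul_of_nonneg_right (hX n) (by positivity)
    · simpa using (tendsto_pow_atTop_nhds_zero_of_lt_one hρ0 hρ1).const_mul C
  rw [hsummable.hasSum_iff_tendsto_nat]
  simpa only [sub_zero] using ((tendsto_const_nhds (x := X 0)).sub hremainder).congr
    fun n => (eq_sub_of_add_eq (hpartial n).symm).symm

lemma tsum_div_neg_pow_succ_mem_Icc {β M : ℝ} (hβ : 1 < β) {s : ℕ → ℝ}
    (hs : ∀ i, s i ∈ Icc 0 M) :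
    ∑' i, s i / (-β) ^ (i + 1) ∈ Icc (-β * M / (β ^ 2 - 1)) (M / (β ^ 2 - 1)) := by
  have hβ0 : 0 < β := one_pos.trans hβ
  have hq : |(-β)⁻¹| = β⁻¹ := by rw [abs_inv, abs_neg, abs_of_pos hβ0]
  have h1 : β - 1 ≠ 0 := sub_ne_zero.mpr hβ.ne'
  have h3 : β ^ 2 - 1 ≠ 0 := by nlinarith
  have hneg : (-β)⁻¹ / (1 - (-β)⁻¹) = -(β + 1)⁻¹ := by
    rw [inv_neg, sub_neg_eq_add]
    field_simp
  have hpos : β⁻¹ / (1 - β⁻¹) = (β - 1)⁻¹ := by field_simp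
  have hlo : M / 2 * (-(β + 1)⁻¹ - (β - 1)⁻¹) = -β * M / (β ^ 2 - 1) := by
    field_simp
    ring
  have hhi : M / 2 * (-(β + 1)⁻¹ + (β - 1)⁻¹) = M / (β ^ 2 - 1) := by
    field_simp
    ring
  have hterm : ∀ i, s i * (-β)⁻¹ ^ (i + 1) = s i / (-β) ^ (i + 1) := fun i => by
    rw [inv_pow, div_eq_mul_inv]
  have hbounds :=
    tsum_mul_pow_succ_mem_Icc hs (q := (-β)⁻¹) (by rw [hq]; exact inv_lt_one_of_one_lt₀ hβ)
  rwa [hq, hneg, hpos, hlo, hhi, tsum_congr hterm] at hbounds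

noncomputable def greedyDigit (β r y : ℝ) : ℤ := max 0 ⌈-β * y - r⌉

lemma greedyDigit_le {β r y : ℝ} {M : ℤ} (hβ : 0 ≤ β) (hM : 0 ≤ M)
    (hrM : (β ^ 2 - 1) * r ≤ M) (hy : -β * r ≤ y) : greedyDigit β r y ≤ M :=
  max_le hM (Int.ceil_le.mpr (by nlinarith))

lemma neg_mul_sub_greedyDigit_mem_Icc {β r y : ℝ} (hβ : 0 ≤ β) (hr : 1 ≤ (β + 1) * r)
    (hy : y ∈ Icc (-β * r) r) : -β * y - greedyDigit β r y ∈ Icc (-β * r) r := by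
  obtain ⟨hy₁, hy₂⟩ := hy
  have hdigit_le : (greedyDigit β r y : ℝ) ≤ -β * y + β * r := by
    rw [greedyDigit, Int.cast_max, Int.cast_zero]
    exact max_le (by nlinarith) (by linarith [Int.ceil_lt_add_one (-β * y - r)])
  have hle_digit : -β * y - r ≤ greedyDigit β r y := by
    rw [greedyDigit, Int.cast_max, Int.cast_zero]
    exact (Int.le_ceil _).trans (le_max_right _ _)
  constructor <;> linarith

lemma exists_digits_hasSum_div_neg_pow_succ {β x : ℝ} {M : ℤ} (hβ : 1 < β) (hM : β - 1 ≤ M)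
    (hx : x ∈ Icc (-β * M / (β ^ 2 - 1)) (M / (β ^ 2 - 1))) :
    ∃ d : ℕ → ℤ, (∀ i, d i ∈ Icc 0 M) ∧ HasSum (fun i => (d i : ℝ) / (-β) ^ (i + 1)) x := by
  rw [mul_div_assoc] at hx
  set r : ℝ := M / (β ^ 2 - 1)
  have hβ0 : 0 < β := one_pos.trans hβ
  have hsq : 0 < β ^ 2 - 1 := by nlinarith
  have hrM : (β ^ 2 - 1) * r = M := mul_div_cancel₀ _ hsq.ne'
  have hr : 1 ≤ (β + 1) * r := by nlinarith
  have hM0 : (0 : ℤ) ≤ M := by exact_mod_cast (sub_pos.mpr hβ).le.trans hM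
  set T : ℝ → ℝ := fun y => -β * y - greedyDigit β r y
  have horbit : ∀ n, T^[n] x ∈ Icc (-β * r) r := by
    intro n
    induction n with
    | zero => exact hx
    | succ n ih =>
      rw [Function.iterate_succ_apply']
      exact neg_mul_sub_greedyDigit_mem_Icc hβ0.le hr ih
  refine ⟨fun n => greedyDigit β r (T^[n] x), fun n => ⟨le_max_left _ _,
    greedyDigit_le hβ0.le hM0 hrM.le (horbit n).1⟩, ?_⟩
  refine hasSum_div_pow_succ_of_bounded (X := fun n => T^[n] x) (C := β * r)
    (by rwa [abs_neg, abs_of_pos hβ0])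
    (fun n => abs_le.mpr ⟨by linarith [(horbit n).1], by nlinarith [(horbit n).2]⟩)
    fun n => Function.iterate_succ_apply' T n x

theorem stmt3_general (β : ℝ) (hβ : 1 < β) (x : ℝ) :
    (∃ s : ℕ → ℝ, (∀ i, ∃ a : ℤ, 0 ≤ a ∧ a ≤ ⌊β⌋ ∧ s i = (a : ℝ)) ∧
        x = ∑' i : ℕ, s i / (-β) ^ (i + 1)) ↔
      (-β * (⌊β⌋ : ℝ) / (β ^ 2 - 1) ≤ x ∧ x ≤ (⌊β⌋ : ℝ) / (β ^ 2 - 1)) := by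
  constructor
  · rintro ⟨s, hs, rfl⟩
    refine tsum_div_neg_pow_succ_mem_Icc hβ fun i => ?_
    obtain ⟨a, ha₀, ha, hsa⟩ := hs i
    rw [hsa]
    exact ⟨by exact_mod_cast ha₀, by exact_mod_cast ha⟩
  · intro hx
    obtain ⟨d, hd, hsum⟩ := exists_digits_hasSum_div_neg_pow_succ hβ (Int.sub_one_lt_floor β).le hx
    exact ⟨fun i => d i, fun i => ⟨d i, (hd i).1, (hd i).2, rfl⟩, hsum.tsum_eq.symm⟩

theorem stmt3 (β : ℝ) (hβ : 1 < β) (hni : ∀ n : ℕ, β ≠ n) (x : ℝ) :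
    (∃ s : ℕ → ℝ, (∀ i, ∃ a : ℤ, 0 ≤ a ∧ a ≤ ⌊β⌋ ∧ s i = (a : ℝ)) ∧
        x = ∑' i : ℕ, s i / (-β) ^ (i + 1)) ↔
      (-β * (⌊β⌋ : ℝ) / (β ^ 2 - 1) ≤ x ∧ x ≤ (⌊β⌋ : ℝ) / (β ^ 2 - 1)) :=
  stmt3_general β hβ x
end

section
/- Let β > 1 with β ∉ ℕ and let x ∈ I. Define ε₀ = x and, for all i ≥ 0, z_{2i+1} = D_v(ε_{2i}), ε_{2i+1} = T_v(ε_{2i}), z_{2i+2} = D_m(ε_{2i+1}), ε_{2i+2} = T_m(ε_{2i+1}). Then z₁z₂z₃… is a (−β)-representation of x over 𝒜 and it is the maximal element of R_{−β,𝒜}(x) with respect to the alternate order, i.e., the greedy (−β)-representation of x. -/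
/-!
The interval `I = [l, r]` is the largest bounded set that the digit maps `y ↦ -β y - a`
(`0 ≤ a ≤ ⌊β⌋`) can keep inside itself: `y ∈ I_a` iff `-β y - a ∈ I`, while outside `I` every
digit map multiplies the distance to `I` by at least `β`. Hence the tails
`t_n = ∑_{i ≥ 0} w_{n+i} (-β)^{-(i+1)}` of any representation `w` of `x` stay in `I`, and
`t_n ∈ I_{w_n}` for every `n`. Bounded remainder sequences with the same digits
coincide, so `t` agrees with the remainders `ε` of the algorithm up to the first index `k`
where `w` and `z` differ. There `ε_k ∈ I_{w_k}`, and `z_k` is the least digit `a` with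
`ε_k ∈ I_a` for even `k` and the greatest for odd `k`, which is exactly `w ≺_alt z`.
-/

/-- Alternate order on infinite sequences of reals. -/
def AltLt (x y : ℕ → ℝ) : Prop :=
  ∃ k, (∀ i < k, x i = y i) ∧ (-1 : ℝ) ^ (k + 1) * x k < (-1 : ℝ) ^ (k + 1) * y k

open Set

namespace NegBeta

noncomputable def left (β : ℝ) : ℝ := -β * (⌊β⌋ : ℝ) / (β ^ 2 - 1)

noncomputable def right (β : ℝ) : ℝ := (⌊β⌋ : ℝ) / (β ^ 2 - 1)

def digitInterval (β : ℝ) (a : ℤ) : Set ℝ :=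
  Icc (left β + ((⌊β⌋ : ℝ) - a) / β) (right β - a / β)

variable {β : ℝ}

lemma left_eq (β : ℝ) : left β = -β * right β := by
  unfold left right; ring

lemma neg_mul_left_sub_floor (hβ : 1 < β) : -β * left β - ⌊β⌋ = right β := by
  have : β ^ 2 - 1 ≠ 0 := by nlinarith
  unfold left right
  field_simp
  ring

lemma one_le_right_sub_left (hβ : 1 < β) : 1 ≤ right β - left β := by
  have hfloor : β < ⌊β⌋ + 1 := Int.lt_floor_add_one β
  have hpos : 0 < β ^ 2 - 1 := by nlinarith
  rw [left_eq, show right β - -β * right β = (β + 1) * right β by ring, right,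
    ← mul_div_assoc, le_div_iff₀ hpos]
  nlinarith

lemma mem_digitInterval_iff (hβ : 1 < β) {a : ℤ} {y : ℝ} :
    y ∈ digitInterval β a ↔ -β * y - a ∈ Icc (left β) (right β) := by
  have hβ0 : 0 < β := by linarith
  have hl := left_eq β
  have hr := neg_mul_left_sub_floor hβ
  rw [digitInterval, mem_Icc, mem_Icc, add_div' _ _ _ hβ0.ne', sub_div' hβ0.ne',
    div_le_iff₀ hβ0, le_div_iff₀ hβ0]
  constructor <;> rintro ⟨h1, h2⟩ <;> constructor <;> linarith

lemma digitInterval_subset (hβ : 0 < β) {a : ℤ} (ha0 : 0 ≤ a) (haB : a ≤ ⌊β⌋) :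
    digitInterval β a ⊆ Icc (left β) (right β) := by
  have h0 : (0 : ℝ) ≤ a := by exact_mod_cast ha0
  have hB : (a : ℝ) ≤ ⌊β⌋ := by exact_mod_cast haB
  refine Icc_subset_Icc ?_ ?_
  · exact le_add_of_nonneg_right (div_nonneg (by linarith) hβ.le)
  · exact sub_le_self _ (div_nonneg h0 hβ.le)

lemma exists_int_sub_mem_Icc {l r u : ℝ} {B : ℤ} (hB : 0 ≤ B) (hlr : 1 ≤ r - l)
    (hlu : l ≤ u) (hur : u ≤ r + B) : ∃ a : ℤ, 0 ≤ a ∧ a ≤ B ∧ u - a ∈ Icc l r := by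
  refine ⟨max 0 ⌈u - r⌉, le_max_left _ _, max_le hB (Int.ceil_le.2 (by linarith)), ?_, ?_⟩
  · rcases max_cases 0 ⌈u - r⌉ with ⟨h, -⟩ | ⟨h, -⟩ <;> rw [h]
    · simpa using hlu
    · linarith [Int.ceil_lt_add_one (u - r)]
  · have hmax : (⌈u - r⌉ : ℝ) ≤ (max 0 ⌈u - r⌉ : ℤ) := by exact_mod_cast le_max_right _ _
    linarith [Int.le_ceil (u - r)]

def admissibleDigits (β y : ℝ) : Set ℤ := {a | 0 ≤ a ∧ a ≤ ⌊β⌋ ∧ y ∈ digitInterval β a}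

lemma nonempty_admissibleDigits (hβ : 1 < β) {y : ℝ} (hy : y ∈ Icc (left β) (right β)) :
    (admissibleDigits β y).Nonempty := by
  have hβ0 : 0 ≤ β := by linarith
  have hl := left_eq β
  have hr := neg_mul_left_sub_floor hβ
  obtain ⟨a, ha0, haB, ha⟩ := exists_int_sub_mem_Icc (u := -β * y)
    (Int.floor_nonneg.2 hβ0) (one_le_right_sub_left hβ)
    (by nlinarith [mul_le_mul_of_nonneg_left hy.2 hβ0])
    (by nlinarith [mul_le_mul_of_nonneg_left hy.1 hβ0])
  exact ⟨a, ha0, haB, (mem_digitInterval_iff hβ).2 ha⟩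

lemma exists_isLeast_admissibleDigits (hβ : 1 < β) {Dv : ℝ → ℝ}
    (hDv0 : ∀ x ∈ digitInterval β 0, Dv x = 0)
    (hDv : ∀ a : ℤ, 1 ≤ a → a ≤ ⌊β⌋ →
      ∀ x ∈ digitInterval β a \ digitInterval β (a - 1), Dv x = a)
    {y : ℝ} (hy : y ∈ Icc (left β) (right β)) :
    ∃ a, IsLeast (admissibleDigits β y) a ∧ Dv y = a := by
  obtain ⟨a, ha, hmin⟩ := Int.exists_least_of_bdd ⟨0, fun c hc => hc.1⟩
    (nonempty_admissibleDigits hβ hy)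
  refine ⟨a, ⟨ha, hmin⟩, ?_⟩
  obtain ⟨ha0, haB, hya⟩ := ha
  rcases ha0.eq_or_lt with rfl | hpos
  · simpa using hDv0 y hya
  · refine hDv a hpos haB y ⟨hya, fun h => ?_⟩
    have := hmin (a - 1) ⟨by omega, by omega, h⟩
    omega

lemma exists_isGreatest_admissibleDigits (hβ : 1 < β) {Dm : ℝ → ℝ}
    (hDmTop : ∀ x ∈ digitInterval β ⌊β⌋, Dm x = ⌊β⌋)
    (hDm : ∀ a : ℤ, 0 ≤ a → a < ⌊β⌋ →
      ∀ x ∈ digitInterval β a \ digitInterval β (a + 1), Dm x = a)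
    {y : ℝ} (hy : y ∈ Icc (left β) (right β)) :
    ∃ a, IsGreatest (admissibleDigits β y) a ∧ Dm y = a := by
  obtain ⟨a, ha, hmax⟩ := Int.exists_greatest_of_bdd ⟨⌊β⌋, fun c hc => hc.2.1⟩
    (nonempty_admissibleDigits hβ hy)
  refine ⟨a, ⟨ha, hmax⟩, ?_⟩
  obtain ⟨ha0, haB, hya⟩ := ha
  rcases haB.eq_or_lt with rfl | hlt
  · exact hDmTop y hya
  · refine hDm a ha0 hlt y ⟨hya, fun h => ?_⟩
    have := hmax (a + 1) ⟨by omega, by omega, h⟩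
    omega


def IsDigitSeq (β : ℝ) (w : ℕ → ℝ) : Prop := ∀ i, ∃ a : ℤ, 0 ≤ a ∧ a ≤ ⌊β⌋ ∧ w i = a

lemma IsDigitSeq.nonneg_and_le {w : ℕ → ℝ} (hw : IsDigitSeq β w) (i : ℕ) :
    0 ≤ w i ∧ w i ≤ ⌊β⌋ := by
  obtain ⟨a, ha0, haB, hwa⟩ := hw i
  rw [hwa]
  exact ⟨by exact_mod_cast ha0, by exact_mod_cast haB⟩

lemma IsDigitSeq.abs_le {w : ℕ → ℝ} (hw : IsDigitSeq β w) (i : ℕ) : |w i| ≤ ⌊β⌋ :=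
  _root_.abs_le.2 ⟨by linarith [hw.nonneg_and_le i], (hw.nonneg_and_le i).2⟩

def IsRemainderSeq (β : ℝ) (d e : ℕ → ℝ) : Prop := ∀ n, e (n + 1) = -β * e n - d n

lemma IsRemainderSeq.eq_of_forall_lt_eq {d d' e e' : ℕ → ℝ} (h : IsRemainderSeq β d e)
    (h' : IsRemainderSeq β d' e') (h0 : e 0 = e' 0) {n : ℕ} (hd : ∀ i < n, d i = d' i) :
    e n = e' n := by
  induction n with
  | zero => exact h0
  | succ n ih => rw [h, h', ih fun i hi => hd i (by omega), hd n (by omega)]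

lemma nonpos_of_forall_pow_mul_le (hβ : 1 < β) {u C : ℝ} (h : ∀ n : ℕ, β ^ n * u ≤ C) :
    u ≤ 0 := by
  by_contra! hu
  obtain ⟨n, hn⟩ := pow_unbounded_of_one_lt (C / u) hβ
  rw [div_lt_iff₀ hu] at hn
  linarith [h n]

lemma IsRemainderSeq.zero_eq_of_bounded {d e e' : ℕ → ℝ} (h : IsRemainderSeq β d e)
    (h' : IsRemainderSeq β d e') (hβ : 1 < β) {C C' : ℝ} (hC : ∀ n, |e n| ≤ C)
    (hC' : ∀ n, |e' n| ≤ C') : e 0 = e' 0 := by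
  have hpow : ∀ n, β ^ n * |e 0 - e' 0| = |e n - e' n| := by
    intro n
    induction n with
    | zero => simp
    | succ n ih =>
      rw [h, h', show -β * e n - d n - (-β * e' n - d n) = -β * (e n - e' n) by ring, abs_mul,
        abs_neg, abs_of_pos (by linarith : 0 < β), ← ih, pow_succ]
      ring
  have hle := nonpos_of_forall_pow_mul_le hβ fun n =>
    (hpow n).trans_le ((abs_sub _ _).trans (add_le_add (hC n) (hC' n)))
  exact sub_eq_zero.1 (abs_nonpos_iff.1 hle)

noncomputable def excess (β y : ℝ) : ℝ := max (y - right β) (left β - y)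

lemma excess_nonpos_iff {y : ℝ} : excess β y ≤ 0 ↔ y ∈ Icc (left β) (right β) := by
  rw [excess, max_le_iff, sub_nonpos, sub_nonpos, mem_Icc, and_comm]

lemma mul_excess_le_excess (hβ : 1 < β) {a : ℝ} (ha0 : 0 ≤ a) (haB : a ≤ ⌊β⌋) (y : ℝ) :
    β * excess β y ≤ excess β (-β * y - a) := by
  have hl := left_eq β
  have hr := neg_mul_left_sub_floor hβ
  rw [excess, excess, mul_max_of_nonneg _ _ (by linarith)]
  exact max_le (le_max_of_le_right (by linarith)) (le_max_of_le_left (by linarith))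

/-- The digit maps expand the distance to `[left β, right β]` by the factor `β`, so only
there can a remainder sequence stay bounded. -/
lemma IsRemainderSeq.mem_Icc_of_bounded {d e : ℕ → ℝ} (h : IsRemainderSeq β d e)
    (hβ : 1 < β) (hd : IsDigitSeq β d) {C : ℝ} (hC : ∀ n, |e n| ≤ C) (n : ℕ) :
    e n ∈ Icc (left β) (right β) := by
  have hgrow : ∀ k, β ^ k * excess β (e n) ≤ excess β (e (n + k)) := by
    intro k
    induction k with
    | zero => simp
    | succ k ih =>
      calc β ^ (k + 1) * excess β (e n) = β * (β ^ k * excess β (e n)) := by ring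
        _ ≤ β * excess β (e (n + k)) := by gcongr
        _ ≤ excess β (e (n + (k + 1))) := by
          rw [← add_assoc, h]
          exact mul_excess_le_excess hβ (hd.nonneg_and_le _).1 (hd.nonneg_and_le _).2 _
  refine excess_nonpos_iff.1 (nonpos_of_forall_pow_mul_le hβ (C := C + |left β| + |right β|)
    fun k => (hgrow k).trans ?_)
  obtain ⟨hlo, hhi⟩ := abs_le.1 (hC (n + k))
  exact max_le (by linarith [neg_abs_le (right β), abs_nonneg (left β)])
    (by linarith [le_abs_self (left β), abs_nonneg (right β)])

noncomputable def tail (β : ℝ) (d : ℕ → ℝ) (n : ℕ) : ℝ := ∑' i, d (n + i) / (-β) ^ (i + 1)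

lemma norm_div_neg_pow_le (hβ : 0 < β) {D x : ℝ} (hx : |x| ≤ D) (i : ℕ) :
    ‖x / (-β) ^ (i + 1)‖ ≤ D * β⁻¹ ^ (i + 1) := by
  rw [norm_div, norm_pow, norm_neg, Real.norm_of_nonneg hβ.le, Real.norm_eq_abs, inv_pow,
    ← div_eq_mul_inv]
  gcongr

lemma summable_mul_inv_pow (hβ : 1 < β) (D : ℝ) : Summable fun i : ℕ => D * β⁻¹ ^ (i + 1) :=
  ((summable_nat_add_iff 1).2 (summable_geometric_of_lt_one (by positivity)
    (inv_lt_one_of_one_lt₀ hβ))).mul_left D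

lemma summable_div_neg_pow (hβ : 1 < β) {d : ℕ → ℝ} {D : ℝ} (hd : ∀ i, |d i| ≤ D) :
    Summable fun i => d i / (-β) ^ (i + 1) :=
  (summable_mul_inv_pow hβ D).of_norm_bounded fun i => norm_div_neg_pow_le (by linarith) (hd i) i

lemma abs_tail_le (hβ : 1 < β) {d : ℕ → ℝ} {D : ℝ} (hd : ∀ i, |d i| ≤ D) (n : ℕ) :
    |tail β d n| ≤ ∑' i : ℕ, D * β⁻¹ ^ (i + 1) :=
  tsum_of_norm_bounded (summable_mul_inv_pow hβ D).hasSum fun i =>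
    norm_div_neg_pow_le (by linarith) (hd (n + i)) i

lemma isRemainderSeq_tail (hβ : 1 < β) {d : ℕ → ℝ} {D : ℝ} (hd : ∀ i, |d i| ≤ D) :
    IsRemainderSeq β d (tail β d) := by
  intro n
  have hne : -β ≠ 0 := by linarith
  have hsplit : tail β d n = d n / -β + (-β)⁻¹ * tail β d (n + 1) := by
    rw [tail, (summable_div_neg_pow hβ fun i => hd (n + i)).tsum_eq_zero_add, tail,
      ← tsum_mul_left]
    congr 1
    · simp
    · refine tsum_congr fun i => ?_
      rw [show n + (i + 1) = n + 1 + i by ring, pow_succ]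
      field_simp
  rw [hsplit]
  field_simp
  ring


/-- Index `n` is position `n + 1` of the paper, so the alternate order compares digits there
through the sign `(-1) ^ (n + 1)`. -/
def IsGreedyDigit (β : ℝ) (n : ℕ) (y : ℝ) (a : ℤ) : Prop :=
  a ∈ admissibleDigits β y ∧
    ∀ c ∈ admissibleDigits β y, (-1 : ℝ) ^ (n + 1) * c ≤ (-1 : ℝ) ^ (n + 1) * a

lemma isGreedyDigit_of_isLeast {n : ℕ} (hn : Even n) {y : ℝ} {a : ℤ}
    (ha : IsLeast (admissibleDigits β y) a) : IsGreedyDigit β n y a := by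
  refine ⟨ha.1, fun c hc => ?_⟩
  rw [hn.add_one.neg_one_pow, neg_one_mul, neg_one_mul, neg_le_neg_iff]
  exact_mod_cast ha.2 hc

lemma isGreedyDigit_of_isGreatest {n : ℕ} (hn : Odd n) {y : ℝ} {a : ℤ}
    (ha : IsGreatest (admissibleDigits β y) a) : IsGreedyDigit β n y a := by
  refine ⟨ha.1, fun c hc => ?_⟩
  rw [hn.add_one.neg_one_pow, one_mul, one_mul]
  exact_mod_cast ha.2 hc

def IsGreedyExpansion (β : ℝ) (z ε : ℕ → ℝ) : Prop :=
  ∀ n, ∃ a : ℤ, z n = a ∧ ε (n + 1) = -β * ε n - a ∧ IsGreedyDigit β n (ε n) a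

namespace IsGreedyExpansion

variable {z ε : ℕ → ℝ}

lemma isDigitSeq (h : IsGreedyExpansion β z ε) : IsDigitSeq β z := fun n => by
  obtain ⟨a, hz, -, ⟨ha0, haB, -⟩, -⟩ := h n
  exact ⟨a, ha0, haB, hz⟩

lemma isRemainderSeq (h : IsGreedyExpansion β z ε) : IsRemainderSeq β z ε := fun n => by
  obtain ⟨a, hz, hε, -⟩ := h n
  rw [hε, hz]

lemma mem_Icc (h : IsGreedyExpansion β z ε) (hβ : 0 < β) (n : ℕ) :
    ε n ∈ Icc (left β) (right β) := by
  obtain ⟨a, -, -, ⟨ha0, haB, hmem⟩, -⟩ := h n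
  exact digitInterval_subset hβ ha0 haB hmem

lemma eq_tsum (h : IsGreedyExpansion β z ε) (hβ : 1 < β) :
    ε 0 = ∑' i, z i / (-β) ^ (i + 1) := by
  have hz := h.isDigitSeq.abs_le
  have hI := h.mem_Icc (by linarith)
  simpa [tail] using h.isRemainderSeq.zero_eq_of_bounded (isRemainderSeq_tail hβ hz) hβ
    (fun n => abs_le_max_abs_abs (hI n).1 (hI n).2) (abs_tail_le hβ hz)

lemma eq_or_altLt (h : IsGreedyExpansion β z ε) (hβ : 1 < β) {w : ℕ → ℝ}
    (hw : IsDigitSeq β w) (hx : ε 0 = ∑' i, w i / (-β) ^ (i + 1)) : w = z ∨ AltLt w z := by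
  rcases eq_or_ne w z with rfl | hne
  · exact Or.inl rfl
  classical
  have hk : ∃ k, w k ≠ z k := Function.ne_iff.1 hne
  set k := Nat.find hk
  have hlt : ∀ i < k, w i = z i := fun i hi => not_not.1 (Nat.find_min hk hi)
  have ht := isRemainderSeq_tail hβ hw.abs_le
  have htk : tail β w k = ε k :=
    ht.eq_of_forall_lt_eq h.isRemainderSeq (by simpa [tail] using hx.symm) hlt
  obtain ⟨a, hza, -, ha⟩ := h k
  obtain ⟨c, hc0, hcB, hwc⟩ := hw k
  have hc : c ∈ admissibleDigits β (ε k) := by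
    refine ⟨hc0, hcB, htk ▸ (mem_digitInterval_iff hβ).2 ?_⟩
    rw [← hwc, ← ht]
    exact ht.mem_Icc_of_bounded hβ hw (abs_tail_le hβ hw.abs_le) (k + 1)
  have hca : (c : ℝ) ≠ a := hwc ▸ hza ▸ Nat.find_spec hk
  refine Or.inr ⟨k, hlt, ?_⟩
  rw [hwc, hza]
  exact (ha.2 c hc).lt_of_ne fun heq =>
    hca (mul_left_cancel₀ (pow_ne_zero _ (by norm_num)) heq)

end IsGreedyExpansion

lemma isGreedyExpansion_of_rec (hβ : 1 < β) {Dm Dv Tm Tv : ℝ → ℝ}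
    (hDmTop : ∀ x ∈ digitInterval β ⌊β⌋, Dm x = ⌊β⌋)
    (hDm : ∀ a : ℤ, 0 ≤ a → a < ⌊β⌋ →
      ∀ x ∈ digitInterval β a \ digitInterval β (a + 1), Dm x = a)
    (hDv0 : ∀ x ∈ digitInterval β 0, Dv x = 0)
    (hDv : ∀ a : ℤ, 1 ≤ a → a ≤ ⌊β⌋ →
      ∀ x ∈ digitInterval β a \ digitInterval β (a - 1), Dv x = a)
    (hTm : ∀ x, Tm x = -β * x - Dm x) (hTv : ∀ x, Tv x = -β * x - Dv x)
    {z ε : ℕ → ℝ} (hε0 : ε 0 ∈ Icc (left β) (right β))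
    (hrec : ∀ i : ℕ,
      z (2 * i) = Dv (ε (2 * i)) ∧ ε (2 * i + 1) = Tv (ε (2 * i)) ∧
        z (2 * i + 1) = Dm (ε (2 * i + 1)) ∧ ε (2 * i + 2) = Tm (ε (2 * i + 1))) :
    IsGreedyExpansion β z ε := by
  have hstep : ∀ n, ε n ∈ Icc (left β) (right β) →
      ∃ a : ℤ, z n = a ∧ ε (n + 1) = -β * ε n - a ∧ IsGreedyDigit β n (ε n) a := by
    intro n hn
    obtain ⟨i, rfl | rfl⟩ := Nat.even_or_odd' n
    · obtain ⟨a, ha, hDa⟩ := exists_isLeast_admissibleDigits hβ hDv0 hDv hn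
      obtain ⟨hz, hε, -, -⟩ := hrec i
      exact ⟨a, hz.trans hDa, by rw [hε, hTv, hDa], isGreedyDigit_of_isLeast (even_two_mul i) ha⟩
    · obtain ⟨a, ha, hDa⟩ := exists_isGreatest_admissibleDigits hβ hDmTop hDm hn
      obtain ⟨-, -, hz, hε⟩ := hrec i
      exact ⟨a, hz.trans hDa, by rw [hε, hTm, hDa],
        isGreedyDigit_of_isGreatest (odd_two_mul_add_one i) ha⟩
  have hmem : ∀ n, ε n ∈ Icc (left β) (right β) := by
    intro n
    induction n with
    | zero => exact hε0
    | succ n ih =>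
      obtain ⟨a, -, hε, ha, -⟩ := hstep n ih
      rw [hε]
      exact (mem_digitInterval_iff hβ).1 ha.2.2
  exact fun n => hstep n (hmem n)

end NegBeta

open NegBeta in
theorem stmt5_general (β : ℝ) (hβ : 1 < β)
    (l r : ℝ) (hl : l = -β * (⌊β⌋ : ℝ) / (β ^ 2 - 1)) (hr : r = (⌊β⌋ : ℝ) / (β ^ 2 - 1))
    (Ia : ℤ → Set ℝ)
    (hIa : ∀ a : ℤ, Ia a = Set.Icc (l + ((⌊β⌋ : ℝ) - a) / β) (r - a / β))
    (Dm Dv : ℝ → ℝ)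
    (hDmTop : ∀ x ∈ Ia ⌊β⌋, Dm x = (⌊β⌋ : ℝ))
    (hDm : ∀ a : ℤ, 0 ≤ a → a < ⌊β⌋ → ∀ x ∈ Ia a \ Ia (a + 1), Dm x = (a : ℝ))
    (hDv0 : ∀ x ∈ Ia 0, Dv x = 0)
    (hDv : ∀ a : ℤ, 1 ≤ a → a ≤ ⌊β⌋ → ∀ x ∈ Ia a \ Ia (a - 1), Dv x = (a : ℝ))
    (Tm Tv : ℝ → ℝ)
    (hTm : ∀ x, Tm x = -β * x - Dm x) (hTv : ∀ x, Tv x = -β * x - Dv x)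
    (x : ℝ) (hx : x ∈ Set.Icc l r)
    (z ε : ℕ → ℝ) (hε0 : ε 0 = x)
    (hrec : ∀ i : ℕ,
      z (2 * i) = Dv (ε (2 * i)) ∧ ε (2 * i + 1) = Tv (ε (2 * i)) ∧
        z (2 * i + 1) = Dm (ε (2 * i + 1)) ∧ ε (2 * i + 2) = Tm (ε (2 * i + 1))) :
    ((∀ i, ∃ a : ℤ, 0 ≤ a ∧ a ≤ ⌊β⌋ ∧ z i = (a : ℝ)) ∧
        x = ∑' i : ℕ, z i / (-β) ^ (i + 1)) ∧
      ∀ w : ℕ → ℝ,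
        ((∀ i, ∃ a : ℤ, 0 ≤ a ∧ a ≤ ⌊β⌋ ∧ w i = (a : ℝ)) ∧
            x = ∑' i : ℕ, w i / (-β) ^ (i + 1)) →
          w = z ∨ AltLt w z := by
  obtain rfl : l = left β := hl
  obtain rfl : r = right β := hr
  obtain rfl : Ia = digitInterval β := funext hIa
  subst hε0
  have hz := isGreedyExpansion_of_rec hβ hDmTop hDm hDv0 hDv hTm hTv hx hrec
  exact ⟨⟨hz.isDigitSeq, hz.eq_tsum hβ⟩, fun w hw => hz.eq_or_altLt hβ hw.1 hw.2⟩

theorem stmt5 (β : ℝ) (hβ : 1 < β) (hni : ∀ n : ℕ, β ≠ n)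
    (l r : ℝ) (hl : l = -β * (⌊β⌋ : ℝ) / (β ^ 2 - 1)) (hr : r = (⌊β⌋ : ℝ) / (β ^ 2 - 1))
    (Ia : ℤ → Set ℝ)
    (hIa : ∀ a : ℤ, Ia a = Set.Icc (l + ((⌊β⌋ : ℝ) - a) / β) (r - a / β))
    (Dm Dv : ℝ → ℝ)
    (hDmTop : ∀ x ∈ Ia ⌊β⌋, Dm x = (⌊β⌋ : ℝ))
    (hDm : ∀ a : ℤ, 0 ≤ a → a < ⌊β⌋ → ∀ x ∈ Ia a \ Ia (a + 1), Dm x = (a : ℝ))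
    (hDv0 : ∀ x ∈ Ia 0, Dv x = 0)
    (hDv : ∀ a : ℤ, 1 ≤ a → a ≤ ⌊β⌋ → ∀ x ∈ Ia a \ Ia (a - 1), Dv x = (a : ℝ))
    (Tm Tv : ℝ → ℝ)
    (hTm : ∀ x, Tm x = -β * x - Dm x) (hTv : ∀ x, Tv x = -β * x - Dv x)
    (x : ℝ) (hx : x ∈ Set.Icc l r)
    (z ε : ℕ → ℝ) (hε0 : ε 0 = x)
    (hrec : ∀ i : ℕ,
      z (2 * i) = Dv (ε (2 * i)) ∧ ε (2 * i + 1) = Tv (ε (2 * i)) ∧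
        z (2 * i + 1) = Dm (ε (2 * i + 1)) ∧ ε (2 * i + 2) = Tm (ε (2 * i + 1))) :
    ((∀ i, ∃ a : ℤ, 0 ≤ a ∧ a ≤ ⌊β⌋ ∧ z i = (a : ℝ)) ∧
        x = ∑' i : ℕ, z i / (-β) ^ (i + 1)) ∧
      ∀ w : ℕ → ℝ,
        ((∀ i, ∃ a : ℤ, 0 ≤ a ∧ a ≤ ⌊β⌋ ∧ w i = (a : ℝ)) ∧
            x = ∑' i : ℕ, w i / (-β) ^ (i + 1)) →
          w = z ∨ AltLt w z :=
  stmt5_general β hβ l r hl hr Ia hIa Dm Dv hDmTop hDm hDv0 hDv Tm Tv hTm hTv x hx z ε hε0 hrec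
end

section
/- Let β > 1 with β ∉ ℕ and let x ∈ I. Define η₀ = x and, for all i ≥ 0, y_{2i+1} = D_m(η_{2i}), η_{2i+1} = T_m(η_{2i}), y_{2i+2} = D_v(η_{2i+1}), η_{2i+2} = T_v(η_{2i+1}). Then y₁y₂y₃… is a (−β)-representation of x over 𝒜 and it is the minimal element of R_{−β,𝒜}(x) with respect to the alternate order, i.e., the lazy (−β)-representation of x. -/
/-!
Write `T_a z = -β * z - a`. Since `T_0 r = l` and `T_N l = r`, a point `z` lies in `I_a` exactly
when `T_a z ∈ [l, r]`, and the inverse branches `z ↦ T_a⁻¹ z` map `[l, r]` into itself; hence every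
partial sum, and so every tail of a (−β)-representation, lies in `[l, r]`. The sequence `η` is the
orbit of `x` under the digit maps chosen by `y`, it stays in `[l, r]`, and
`x - ∑_{i<n} y_i (-β)^{-i-1} = (-β)^{-n} η_n → 0`. If `w` is another representation that first
differs from `y` at `k`, then its `k`-th tail equals `η_k`, so `w_k` is an admissible digit at
`η_k`. As `D_m` picks the largest and `D_v` the smallest admissible digit, `y_k` is the smaller
digit at `k` in the alternate order.
-/

open Finset Filter Set

namespace NegBeta

def IsDigit (N : ℤ) (t : ℝ) : Prop := ∃ a : ℤ, 0 ≤ a ∧ a ≤ N ∧ t = a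

lemma IsDigit.mem_Icc {N : ℤ} {t : ℝ} (h : IsDigit N t) : t ∈ Icc 0 (N : ℝ) := by
  obtain ⟨a, ha0, haN, rfl⟩ := h
  exact ⟨by exact_mod_cast ha0, by exact_mod_cast haN⟩

lemma IsDigit.abs_le {N : ℤ} {t : ℝ} (h : IsDigit N t) : |t| ≤ N :=
  _root_.abs_le.2 ⟨by linarith [h.mem_Icc.1, h.mem_Icc.2], h.mem_Icc.2⟩

/-- `(-β) ^ n` times the error of the `n`-th partial sum: along a (−β)-representation `d` of `x`
this is the orbit `x, T_{d 0} x, T_{d 1} (T_{d 0} x), …` of the digit maps `T_a z = -β * z - a`. -/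
noncomputable def remainder (β x : ℝ) (d : ℕ → ℝ) (n : ℕ) : ℝ :=
  (-β) ^ n * (x - ∑ i ∈ range n, d i / (-β) ^ (i + 1))

variable {β x : ℝ} {d e : ℕ → ℝ}

@[simp]
lemma remainder_zero : remainder β x d 0 = x := by
  simp [remainder]

lemma remainder_succ (hβ : β ≠ 0) (n : ℕ) :
    remainder β x d (n + 1) = -β * remainder β x d n - d n := by
  have : -β ≠ 0 := neg_ne_zero.2 hβ
  simp only [remainder, sum_range_succ]
  field_simp
  ring

lemma remainder_congr {n : ℕ} (h : ∀ i < n, d i = e i) :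
    remainder β x d n = remainder β x e n := by
  unfold remainder
  rw [sum_congr rfl fun i hi => by rw [h i (mem_range.1 hi)]]

lemma eq_remainder_of_succ {η : ℕ → ℝ} (hβ : β ≠ 0) (h0 : η 0 = x)
    (hsucc : ∀ n, η (n + 1) = -β * η n - d n) : η = remainder β x d := by
  funext n
  induction n with
  | zero => rw [h0, remainder_zero]
  | succ n ih => rw [hsucc, ih, remainder_succ hβ]

lemma hasSum_remainder (hβ : β ≠ 0) (h : HasSum (fun i => d i / (-β) ^ (i + 1)) x) (n : ℕ) :
    HasSum (fun i => d (i + n) / (-β) ^ (i + 1)) (remainder β x d n) := by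
  have : -β ≠ 0 := neg_ne_zero.2 hβ
  have hterm : (fun i => d (i + n) / (-β) ^ (i + 1)) =
      fun i => (-β) ^ n * (d (i + n) / (-β) ^ (i + n + 1)) := by
    funext i
    rw [show i + n + 1 = i + 1 + n by ring, pow_add]
    field_simp
    ring
  rw [hterm]
  exact ((hasSum_nat_add_iff' n).2 h).mul_left _

lemma summable_of_abs_le (hβ : 1 < β) {C : ℝ} (hd : ∀ i, |d i| ≤ C) :
    Summable fun i => d i / (-β) ^ (i + 1) := by
  have hβ0 : 0 < β := by linarith
  refine Summable.of_norm_bounded (g := fun i => C / β * (β⁻¹) ^ i)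
    ((summable_geometric_of_lt_one (by positivity) (inv_lt_one_of_one_lt₀ hβ)).mul_left _) ?_
  intro i
  rw [Real.norm_eq_abs, abs_div, abs_pow, abs_neg, abs_of_pos hβ0, inv_pow, pow_succ]
  calc |d i| / (β ^ i * β) ≤ C / (β ^ i * β) := by gcongr; exact hd i
    _ = C / β * (β ^ i)⁻¹ := by field_simp

lemma hasSum_of_abs_remainder_le (hβ : 1 < β) {C M : ℝ} (hd : ∀ i, |d i| ≤ C)
    (hrem : ∀ n, |remainder β x d n| ≤ M) : HasSum (fun i => d i / (-β) ^ (i + 1)) x := by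
  have hβ0 : 0 < β := by linarith
  refine (summable_of_abs_le hβ hd).hasSum_iff_tendsto_nat.2 ?_
  have hpartial : ∀ n, ∑ i ∈ range n, d i / (-β) ^ (i + 1) = x - remainder β x d n / (-β) ^ n := by
    intro n
    have : (-β) ^ n ≠ 0 := pow_ne_zero _ (by linarith)
    simp only [remainder]
    field_simp
    ring
  have hzero : Tendsto (fun n => remainder β x d n / (-β) ^ n) atTop (nhds 0) := by
    refine squeeze_zero_norm (fun n => ?_) (by simpa using (tendsto_pow_atTop_nhds_zero_of_lt_one
      (by positivity) (inv_lt_one_of_one_lt₀ hβ)).const_mul M)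
    rw [Real.norm_eq_abs, abs_div, abs_pow, abs_neg, abs_of_pos hβ0, div_eq_mul_inv]
    exact mul_le_mul_of_nonneg_right (hrem n) (by positivity)
  simpa [hpartial] using hzero.const_sub x

section Interval

variable {N l r : ℝ}

lemma endpoints_swap (hβ : 1 < β) (hl : l = -β * N / (β ^ 2 - 1)) (hr : r = N / (β ^ 2 - 1)) :
    -β * r = l ∧ -β * l - N = r := by
  have : β ^ 2 - 1 ≠ 0 := by nlinarith
  subst hl hr
  exact ⟨by field_simp, by field_simp; ring⟩

lemma neg_mul_sub_mem_Icc_iff (hl : -β * r = l) (hr : -β * l - N = r) (hβ : 0 < β) {z a : ℝ} :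
    -β * z - a ∈ Icc l r ↔ z ∈ Icc (l + (N - a) / β) (r - a / β) := by
  have hlo : l + (N - a) / β = (-r - a) / β := by field_simp; linarith
  have hhi : r - a / β = (-l - a) / β := by field_simp; linarith
  rw [hlo, hhi, Set.mem_Icc, Set.mem_Icc, div_le_iff₀ hβ, le_div_iff₀ hβ]
  constructor <;> rintro ⟨h₁, h₂⟩ <;> constructor <;> linarith

lemma mem_Icc_of_neg_mul_sub_mem_Icc (hl : -β * r = l) (hr : -β * l - N = r) (hβ : 0 < β) {z a : ℝ}
    (ha : a ∈ Icc 0 N) (h : -β * z - a ∈ Icc l r) : z ∈ Icc l r := by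
  rw [neg_mul_sub_mem_Icc_iff hl hr hβ] at h
  refine Icc_subset_Icc ?_ ?_ h
  · have : 0 ≤ (N - a) / β := div_nonneg (by linarith [ha.2]) hβ.le
    linarith
  · have : 0 ≤ a / β := div_nonneg ha.1 hβ.le
    linarith

lemma sum_range_mem_Icc (hl : -β * r = l) (hr : -β * l - N = r) (hβ : 1 < β) (hN : 0 ≤ N)
    (n : ℕ) {d : ℕ → ℝ} (hd : ∀ i, d i ∈ Icc 0 N) :
    ∑ i ∈ range n, d i / (-β) ^ (i + 1) ∈ Icc l r := by
  have hβ0 : 0 < β := by linarith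
  induction n generalizing d with
  | zero =>
    have hNr : (β ^ 2 - 1) * r = N := by linear_combination -β * hl + hr
    have hr0 : 0 ≤ r := (mul_nonneg_iff_of_pos_left (by nlinarith)).1 (hNr ▸ hN)
    simp only [Finset.range_zero, sum_empty]
    exact ⟨by nlinarith, hr0⟩
  | succ n ih =>
    set s := ∑ i ∈ range n, d (i + 1) / (-β) ^ (i + 1)
    have hsum : ∑ i ∈ range (n + 1), d i / (-β) ^ (i + 1) = (s + d 0) / (-β) := by
      rw [sum_range_succ', add_div, sum_div]
      simp only [pow_succ, div_mul_eq_div_div, zero_add, pow_zero, one_mul]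
    rw [hsum]
    refine mem_Icc_of_neg_mul_sub_mem_Icc hl hr hβ0 (hd 0) ?_
    have : -β * ((s + d 0) / -β) - d 0 = s := by field_simp; ring
    rw [this]
    exact ih fun i => hd (i + 1)

lemma mem_Icc_of_hasSum (hl : -β * r = l) (hr : -β * l - N = r) (hβ : 1 < β) (hN : 0 ≤ N)
    {s : ℝ} (hd : ∀ i, d i ∈ Icc 0 N) (h : HasSum (fun i => d i / (-β) ^ (i + 1)) s) :
    s ∈ Icc l r :=
  isClosed_Icc.mem_of_tendsto h.tendsto_sum_nat
    (Eventually.of_forall fun n => sum_range_mem_Icc hl hr hβ hN n hd)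

lemma remainder_mem_Icc (hl : -β * r = l) (hr : -β * l - N = r) (hβ : 1 < β) (hN : 0 ≤ N)
    (hd : ∀ i, d i ∈ Icc 0 N) (h : HasSum (fun i => d i / (-β) ^ (i + 1)) x) (n : ℕ) :
    remainder β x d n ∈ Icc l r :=
  mem_Icc_of_hasSum hl hr hβ hN (fun i => hd (i + n)) (hasSum_remainder (by linarith) h n)

end Interval

lemma exists_digit_neg_mul_sub_mem_Icc (hβ : 1 < β) {N : ℤ} (hN : β - 1 ≤ N) {l r : ℝ}
    (hl : -β * r = l) (hr : -β * l - N = r) {z : ℝ} (hz : z ∈ Icc l r) :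
    ∃ a : ℤ, 0 ≤ a ∧ a ≤ N ∧ -β * z - a ∈ Icc l r := by
  have hβ0 : 0 < β := by linarith
  have hwidth : 1 ≤ r - l := by
    have : (β - 1) * (r - l) = N := by linear_combination -hl + hr
    nlinarith
  have hrz : 0 ≤ β * (r - z) := mul_nonneg hβ0.le (by linarith [hz.2])
  refine ⟨min N ⌊β * (r - z)⌋, le_min (by exact_mod_cast (by linarith : (0 : ℝ) ≤ N))
    (Int.floor_nonneg.2 hrz), min_le_left _ _, ?_, ?_⟩
  · have : ((min N ⌊β * (r - z)⌋ : ℤ) : ℝ) ≤ β * (r - z) :=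
      (Int.cast_le.2 (min_le_right _ _)).trans (Int.floor_le _)
    linarith
  · rcases min_cases N ⌊β * (r - z)⌋ with ⟨hmin, -⟩ | ⟨hmin, -⟩ <;> rw [hmin]
    · nlinarith [hz.1]
    · linarith [Int.sub_one_lt_floor (β * (r - z))]

section DigitChoice

variable {I : ℤ → Set ℝ} {N : ℤ} {z : ℝ}

lemma exists_greatest_digit_eq {D : ℝ → ℝ} (hTop : ∀ x ∈ I N, D x = N)
    (hD : ∀ a : ℤ, 0 ≤ a → a < N → ∀ x ∈ I a \ I (a + 1), D x = a)
    (hz : ∃ a : ℤ, 0 ≤ a ∧ a ≤ N ∧ z ∈ I a) :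
    ∃ a : ℤ, (0 ≤ a ∧ a ≤ N ∧ z ∈ I a) ∧ D z = a ∧
      ∀ b : ℤ, 0 ≤ b ∧ b ≤ N ∧ z ∈ I b → b ≤ a := by
  obtain ⟨a, ha, hmax⟩ := Int.exists_greatest_of_bdd ⟨N, fun b hb => hb.2.1⟩ hz
  refine ⟨a, ha, ?_, hmax⟩
  rcases ha.2.1.lt_or_eq with hlt | rfl
  · exact hD a ha.1 hlt z ⟨ha.2.2, fun h => by linarith [hmax (a + 1) ⟨by omega, hlt, h⟩]⟩
  · exact hTop z ha.2.2

lemma exists_least_digit_eq {D : ℝ → ℝ} (hBot : ∀ x ∈ I 0, D x = 0)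
    (hD : ∀ a : ℤ, 1 ≤ a → a ≤ N → ∀ x ∈ I a \ I (a - 1), D x = a)
    (hz : ∃ a : ℤ, 0 ≤ a ∧ a ≤ N ∧ z ∈ I a) :
    ∃ a : ℤ, (0 ≤ a ∧ a ≤ N ∧ z ∈ I a) ∧ D z = a ∧
      ∀ b : ℤ, 0 ≤ b ∧ b ≤ N ∧ z ∈ I b → a ≤ b := by
  obtain ⟨a, ha, hmin⟩ := Int.exists_least_of_bdd ⟨0, fun b hb => hb.1⟩ hz
  refine ⟨a, ha, ?_, hmin⟩
  rcases ha.1.lt_or_eq with hlt | rfl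
  · exact hD a hlt ha.2.1 z ⟨ha.2.2, fun h => by linarith [hmin (a - 1) ⟨by omega, by omega, h⟩]⟩
  · exact_mod_cast hBot z ha.2.2

/-- The sign `(-1) ^ (n + 1)` folds "largest admissible digit at even `n`, smallest at odd `n`"
into the single inequality that the alternate order compares. -/
lemma exists_alt_extremal_digit {Dm Dv : ℝ → ℝ} (hDmTop : ∀ x ∈ I N, Dm x = N)
    (hDm : ∀ a : ℤ, 0 ≤ a → a < N → ∀ x ∈ I a \ I (a + 1), Dm x = a)
    (hDv0 : ∀ x ∈ I 0, Dv x = 0)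
    (hDv : ∀ a : ℤ, 1 ≤ a → a ≤ N → ∀ x ∈ I a \ I (a - 1), Dv x = a) {y η : ℕ → ℝ}
    (hy : ∀ i, y (2 * i) = Dm (η (2 * i)) ∧ y (2 * i + 1) = Dv (η (2 * i + 1))) {n : ℕ}
    (hn : ∃ a : ℤ, 0 ≤ a ∧ a ≤ N ∧ η n ∈ I a) :
    ∃ a : ℤ, (0 ≤ a ∧ a ≤ N ∧ η n ∈ I a) ∧ y n = a ∧
      ∀ b : ℤ, 0 ≤ b ∧ b ≤ N ∧ η n ∈ I b → (-1) ^ (n + 1) * y n ≤ (-1) ^ (n + 1) * (b : ℝ) := by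
  obtain ⟨i, rfl | rfl⟩ := Nat.even_or_odd' n
  · obtain ⟨a, ha, hDa, hmax⟩ := exists_greatest_digit_eq hDmTop hDm hn
    refine ⟨a, ha, (hy i).1.trans hDa, fun b hb => ?_⟩
    rw [(hy i).1, hDa, (odd_two_mul_add_one i).neg_one_pow, neg_one_mul, neg_one_mul,
      neg_le_neg_iff, Int.cast_le]
    exact hmax b hb
  · obtain ⟨a, ha, hDa, hmin⟩ := exists_least_digit_eq hDv0 hDv hn
    refine ⟨a, ha, (hy i).2.trans hDa, fun b hb => ?_⟩
    rw [(hy i).2, hDa, Even.neg_one_pow (⟨i + 1, by ring⟩ : Even (2 * i + 1 + 1)),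
      one_mul, one_mul, Int.cast_le]
    exact hmin b hb

end DigitChoice

section Orbit

variable {N : ℤ} {l r : ℝ} {y : ℕ → ℝ}

lemma altLt_of_alt_extremal (hl : -β * r = l) (hr : -β * l - N = r) (hβ : 1 < β) (hN : 0 ≤ N)
    (hext : ∀ n (b : ℤ), 0 ≤ b ∧ b ≤ N ∧ -β * remainder β x y n - b ∈ Icc l r →
      (-1) ^ (n + 1) * y n ≤ (-1) ^ (n + 1) * b)
    {w : ℕ → ℝ} (hw : ∀ i, IsDigit N (w i)) (hwx : HasSum (fun i => w i / (-β) ^ (i + 1)) x)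
    (hne : w ≠ y) : AltLt y w := by
  classical
  have hdiff : ∃ k, y k ≠ w k := Function.ne_iff.1 hne.symm
  set k := Nat.find hdiff
  have hagree : ∀ i < k, y i = w i := fun i hi => not_not.1 (Nat.find_min hdiff hi)
  obtain ⟨c, hc0, hcN, hc⟩ := hw k
  have hadm : -β * remainder β x y k - c ∈ Icc l r := by
    rw [remainder_congr hagree, ← hc, ← remainder_succ (by linarith)]
    exact remainder_mem_Icc hl hr hβ (by exact_mod_cast hN) (fun i => (hw i).mem_Icc) hwx _
  refine ⟨k, hagree, (hc ▸ hext k c ⟨hc0, hcN, hadm⟩).lt_of_ne fun h => Nat.find_spec hdiff ?_⟩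
  exact mul_left_cancel₀ (pow_ne_zero _ (by norm_num)) h

theorem isLazy_of_orbit (hl : -β * r = l) (hr : -β * l - N = r) (hβ : 1 < β) (hN : 0 ≤ N)
    {η : ℕ → ℝ} (h0 : η 0 = x) (hx : x ∈ Icc l r) (hsucc : ∀ n, η (n + 1) = -β * η n - y n)
    (hstep : ∀ n, η n ∈ Icc l r → ∃ a : ℤ, (0 ≤ a ∧ a ≤ N ∧ -β * η n - a ∈ Icc l r) ∧ y n = a ∧
      ∀ b : ℤ, 0 ≤ b ∧ b ≤ N ∧ -β * η n - b ∈ Icc l r → (-1) ^ (n + 1) * y n ≤ (-1) ^ (n + 1) * b) :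
    (∀ n, IsDigit N (y n)) ∧ HasSum (fun i => y i / (-β) ^ (i + 1)) x ∧
      ∀ w : ℕ → ℝ, (∀ i, IsDigit N (w i)) → HasSum (fun i => w i / (-β) ^ (i + 1)) x →
        w = y ∨ AltLt y w := by
  have hmem : ∀ n, η n ∈ Icc l r := by
    intro n
    induction n with
    | zero => exact h0 ▸ hx
    | succ n ih =>
      obtain ⟨a, ⟨-, -, ha⟩, hya, -⟩ := hstep n ih
      rwa [hsucc, hya]
  have hdig (n : ℕ) : IsDigit N (y n) :=
    let ⟨a, ⟨ha0, haN, _⟩, hya, _⟩ := hstep n (hmem n); ⟨a, ha0, haN, hya⟩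
  have hrem : η = remainder β x y := eq_remainder_of_succ (by linarith) h0 hsucc
  refine ⟨hdig, hasSum_of_abs_remainder_le hβ (fun i => (hdig i).abs_le)
    fun n => hrem ▸ abs_le_max_abs_abs (hmem n).1 (hmem n).2, fun w hw hwx => ?_⟩
  refine or_iff_not_imp_left.2 (altLt_of_alt_extremal hl hr hβ hN (fun n b hb => ?_) hw hwx)
  obtain ⟨-, -, -, hext⟩ := hstep n (hmem n)
  exact hext b (hrem ▸ hb)

end Orbit

end NegBeta

open NegBeta in
theorem stmt6_general (β : ℝ) (hβ : 1 < β)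
    (l r : ℝ) (hl : l = -β * (⌊β⌋ : ℝ) / (β ^ 2 - 1)) (hr : r = (⌊β⌋ : ℝ) / (β ^ 2 - 1))
    (Ia : ℤ → Set ℝ)
    (hIa : ∀ a : ℤ, Ia a = Set.Icc (l + ((⌊β⌋ : ℝ) - a) / β) (r - a / β))
    (Dm Dv : ℝ → ℝ)
    (hDmTop : ∀ x ∈ Ia ⌊β⌋, Dm x = (⌊β⌋ : ℝ))
    (hDm : ∀ a : ℤ, 0 ≤ a → a < ⌊β⌋ → ∀ x ∈ Ia a \ Ia (a + 1), Dm x = (a : ℝ))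
    (hDv0 : ∀ x ∈ Ia 0, Dv x = 0)
    (hDv : ∀ a : ℤ, 1 ≤ a → a ≤ ⌊β⌋ → ∀ x ∈ Ia a \ Ia (a - 1), Dv x = (a : ℝ))
    (Tm Tv : ℝ → ℝ)
    (hTm : ∀ x, Tm x = -β * x - Dm x) (hTv : ∀ x, Tv x = -β * x - Dv x)
    (x : ℝ) (hx : x ∈ Set.Icc l r)
    (y η : ℕ → ℝ) (hη0 : η 0 = x)
    (hrec : ∀ i : ℕ,
      y (2 * i) = Dm (η (2 * i)) ∧ η (2 * i + 1) = Tm (η (2 * i)) ∧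
        y (2 * i + 1) = Dv (η (2 * i + 1)) ∧ η (2 * i + 2) = Tv (η (2 * i + 1))) :
    ((∀ i, ∃ a : ℤ, 0 ≤ a ∧ a ≤ ⌊β⌋ ∧ y i = (a : ℝ)) ∧
        x = ∑' i : ℕ, y i / (-β) ^ (i + 1)) ∧
      ∀ w : ℕ → ℝ,
        ((∀ i, ∃ a : ℤ, 0 ≤ a ∧ a ≤ ⌊β⌋ ∧ w i = (a : ℝ)) ∧
            x = ∑' i : ℕ, w i / (-β) ^ (i + 1)) →
          w = y ∨ AltLt y w := by
  have hβ0 : 0 < β := by linarith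
  obtain ⟨hl', hr'⟩ := endpoints_swap hβ hl hr
  obtain rfl : Ia = fun a : ℤ => {z | -β * z - a ∈ Icc l r} :=
    funext fun a => Set.ext fun z => by rw [hIa]; exact (neg_mul_sub_mem_Icc_iff hl' hr' hβ0).symm
  have hsucc : ∀ n, η (n + 1) = -β * η n - y n := by
    intro n
    obtain ⟨i, rfl | rfl⟩ := Nat.even_or_odd' n
    · rw [(hrec i).2.1, hTm, (hrec i).1]
    · rw [(hrec i).2.2.2, hTv, (hrec i).2.2.1]
  obtain ⟨hdig, hsum, hleast⟩ := isLazy_of_orbit hl' hr' hβ (Int.floor_nonneg.2 hβ0.le) hη0 hx hsucc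
    fun n hn => exists_alt_extremal_digit hDmTop hDm hDv0 hDv
      (fun i => ⟨(hrec i).1, (hrec i).2.2.1⟩)
      (exists_digit_neg_mul_sub_mem_Icc hβ (Int.sub_one_lt_floor β).le hl' hr' hn)
  refine ⟨⟨hdig, hsum.tsum_eq.symm⟩, fun w ⟨hw, hwx⟩ => hleast w hw ?_⟩
  exact (summable_of_abs_le hβ fun i => IsDigit.abs_le (hw i)).hasSum_iff.2 hwx.symm

theorem stmt6 (β : ℝ) (hβ : 1 < β) (hni : ∀ n : ℕ, β ≠ n)
    (l r : ℝ) (hl : l = -β * (⌊β⌋ : ℝ) / (β ^ 2 - 1)) (hr : r = (⌊β⌋ : ℝ) / (β ^ 2 - 1))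
    (Ia : ℤ → Set ℝ)
    (hIa : ∀ a : ℤ, Ia a = Set.Icc (l + ((⌊β⌋ : ℝ) - a) / β) (r - a / β))
    (Dm Dv : ℝ → ℝ)
    (hDmTop : ∀ x ∈ Ia ⌊β⌋, Dm x = (⌊β⌋ : ℝ))
    (hDm : ∀ a : ℤ, 0 ≤ a → a < ⌊β⌋ → ∀ x ∈ Ia a \ Ia (a + 1), Dm x = (a : ℝ))
    (hDv0 : ∀ x ∈ Ia 0, Dv x = 0)
    (hDv : ∀ a : ℤ, 1 ≤ a → a ≤ ⌊β⌋ → ∀ x ∈ Ia a \ Ia (a - 1), Dv x = (a : ℝ))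
    (Tm Tv : ℝ → ℝ)
    (hTm : ∀ x, Tm x = -β * x - Dm x) (hTv : ∀ x, Tv x = -β * x - Dv x)
    (x : ℝ) (hx : x ∈ Set.Icc l r)
    (y η : ℕ → ℝ) (hη0 : η 0 = x)
    (hrec : ∀ i : ℕ,
      y (2 * i) = Dm (η (2 * i)) ∧ η (2 * i + 1) = Tm (η (2 * i)) ∧
        y (2 * i + 1) = Dv (η (2 * i + 1)) ∧ η (2 * i + 2) = Tv (η (2 * i + 1))) :
    ((∀ i, ∃ a : ℤ, 0 ≤ a ∧ a ≤ ⌊β⌋ ∧ y i = (a : ℝ)) ∧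
        x = ∑' i : ℕ, y i / (-β) ^ (i + 1)) ∧
      ∀ w : ℕ → ℝ,
        ((∀ i, ∃ a : ℤ, 0 ≤ a ∧ a ≤ ⌊β⌋ ∧ w i = (a : ℝ)) ∧
            x = ∑' i : ℕ, w i / (-β) ^ (i + 1)) →
          w = y ∨ AltLt y w :=
  stmt6_general β hβ l r hl hr Ia hIa Dm Dv hDmTop hDm hDv0 hDv Tm Tv hTm hTv x hx y η hη0 hrec
end

section
/- Let β > 1 with β ∉ ℕ and let x ∈ I. Then d_G(x) is a β²-representation of x over ℬ that is maximal in the lexicographic order among all β²-representations of x over ℬ (the greedy β²-representation of x over ℬ), and ψ(d_G(x)) is the maximal element of R_{−β,𝒜}(x) with respect to the alternate order (the greedy (−β)-representation of x over 𝒜). -/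
open Set

noncomputable def digitSum (d : ℝ) (c : ℕ → ℝ) : ℝ := ∑' i, c i / d ^ (i + 1)

-- `remainders d x c n = d ^ n * (x - ∑ i < n, c i / d ^ (i + 1))`
def remainders (d x : ℝ) (c : ℕ → ℝ) : ℕ → ℝ
  | 0 => x
  | n + 1 => d * remainders d x c n - c n

section Expansions

variable {d : ℝ} {c : ℕ → ℝ} {C : ℝ}

lemma hasSum_inv_pow_succ {q : ℝ} (hq : 1 < q) :
    HasSum (fun i : ℕ => (q ^ (i + 1))⁻¹) (q - 1)⁻¹ := by
  have hq0 : 0 < q := by linarith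
  have hterm : (fun i : ℕ => (q ^ (i + 1))⁻¹) = fun i => q⁻¹ * q⁻¹ ^ i := by
    ext i; rw [pow_succ', mul_inv, inv_pow]
  have hsum : (q - 1)⁻¹ = q⁻¹ * (1 - q⁻¹)⁻¹ := by
    rw [← mul_inv, mul_sub, mul_one, mul_inv_cancel₀ hq0.ne']
  rw [hterm, hsum]
  exact (hasSum_geometric_of_lt_one (inv_nonneg.2 hq0.le) (inv_lt_one_of_one_lt₀ hq)).mul_left _

lemma norm_div_pow_succ_le (hc : ∀ i, |c i| ≤ C) (i : ℕ) :
    ‖c i / d ^ (i + 1)‖ ≤ C * (|d| ^ (i + 1))⁻¹ := by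
  rw [Real.norm_eq_abs, abs_div, abs_pow, div_eq_mul_inv]
  exact mul_le_mul_of_nonneg_right (hc i) (by positivity)

lemma summable_div_pow_succ (hd : 1 < |d|) (hc : ∀ i, |c i| ≤ C) :
    Summable fun i => c i / d ^ (i + 1) :=
  .of_norm_bounded ((hasSum_inv_pow_succ hd).mul_left C).summable (norm_div_pow_succ_le hc)

lemma abs_digitSum_le (hd : 1 < |d|) (hc : ∀ i, |c i| ≤ C) :
    |digitSum d c| ≤ C * (|d| - 1)⁻¹ :=
  tsum_of_norm_bounded ((hasSum_inv_pow_succ hd).mul_left C) (norm_div_pow_succ_le hc)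

lemma digitSum_mem_Icc {q m M : ℝ} (hq : 1 < q) (hc : ∀ i, c i ∈ Icc m M) :
    digitSum q c ∈ Icc (m / (q - 1)) (M / (q - 1)) := by
  have hq' : 1 < |q| := by rwa [abs_of_pos (by linarith)]
  have hs := (summable_div_pow_succ hq' fun i => abs_le_max_abs_abs (hc i).1 (hc i).2).hasSum
  have hpos : ∀ i : ℕ, 0 ≤ (q ^ (i + 1))⁻¹ := fun i => by positivity
  simp only [div_eq_mul_inv] at hs ⊢
  exact ⟨hasSum_le (fun i => mul_le_mul_of_nonneg_right (hc i).1 (hpos i))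
      ((hasSum_inv_pow_succ hq).mul_left m) hs,
    hasSum_le (fun i => mul_le_mul_of_nonneg_right (hc i).2 (hpos i)) hs
      ((hasSum_inv_pow_succ hq).mul_left M)⟩

lemma digitSum_shift_succ (hd : 1 < |d|) (hc : ∀ i, |c i| ≤ C) (n : ℕ) :
    digitSum d (fun j => c (j + (n + 1))) = d * digitSum d (fun j => c (j + n)) - c n := by
  have hd0 : d ≠ 0 := abs_pos.1 (by linarith)
  have h := (summable_div_pow_succ hd (c := fun j => c (j + n)) fun j => hc _).tsum_eq_zero_add
  simp only [digitSum] at h ⊢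
  have htail : ∑' j : ℕ, c (j + 1 + n) / d ^ (j + 1 + 1) =
      d⁻¹ * ∑' j : ℕ, c (j + (n + 1)) / d ^ (j + 1) := by
    rw [← tsum_mul_left]
    congr 1; ext j
    rw [add_right_comm j 1 n, add_assoc j n 1, pow_succ]; field_simp
  rw [h, htail, zero_add, pow_one]
  field_simp
  ring

lemma remainders_sub_digitSum (hd : 1 < |d|) (hc : ∀ i, |c i| ≤ C) (x : ℝ) (n : ℕ) :
    remainders d x c n - digitSum d (fun j => c (j + n)) = d ^ n * (x - digitSum d c) := by
  induction n with
  | zero => simp [remainders]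
  | succ n ih =>
    rw [remainders, digitSum_shift_succ hd hc, pow_succ', mul_assoc, ← ih]
    ring

lemma remainders_eq_digitSum (hd : 1 < |d|) (hc : ∀ i, |c i| ≤ C) {x : ℝ}
    (hx : x = digitSum d c) (n : ℕ) : remainders d x c n = digitSum d (fun j => c (j + n)) := by
  rw [← sub_eq_zero, remainders_sub_digitSum hd hc, hx, sub_self, mul_zero]

lemma eq_digitSum_of_abs_remainders_le (hd : 1 < |d|) (hc : ∀ i, |c i| ≤ C) {x M : ℝ}
    (hM : ∀ n, |remainders d x c n| ≤ M) : x = digitSum d c := by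
  by_contra hne
  have he : 0 < |x - digitSum d c| := abs_pos.2 (sub_ne_zero.2 hne)
  obtain ⟨n, hn⟩ := pow_unbounded_of_one_lt ((M + C * (|d| - 1)⁻¹) / |x - digitSum d c|) hd
  have hgrow : |d| ^ n * |x - digitSum d c| ≤ M + C * (|d| - 1)⁻¹ := by
    rw [← abs_pow, ← abs_mul, ← remainders_sub_digitSum hd hc]
    exact (abs_sub _ _).trans (add_le_add (hM n) (abs_digitSum_le hd fun j => hc (j + n)))
  rw [div_lt_iff₀ he] at hn
  linarith

lemma remainders_congr {c' : ℕ → ℝ} {n : ℕ} (h : ∀ i < n, c i = c' i) (x : ℝ) :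
    remainders d x c n = remainders d x c' n := by
  induction n with
  | zero => rfl
  | succ n ih =>
    rw [remainders, remainders, ih fun i hi => h i (by omega), h n (by omega)]

lemma remainders_eq_iterate {T D : ℝ → ℝ} (hT : ∀ z, T z = d * z - D z) {x : ℝ}
    (hc : ∀ k, c k = D (T^[k] x)) (k : ℕ) : remainders d x c k = T^[k] x := by
  induction k with
  | zero => rfl
  | succ k ih => rw [remainders, ih, hc, Function.iterate_succ_apply', hT]

lemma remainders_two_mul (x : ℝ) (k : ℕ) :
    remainders d x c (2 * k) = remainders (d ^ 2) x (fun k => d * c (2 * k) + c (2 * k + 1)) k := by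
  induction k with
  | zero => rfl
  | succ k ih =>
    rw [show 2 * (k + 1) = 2 * k + 1 + 1 by ring, remainders, remainders, remainders, ih]
    ring

-- Grouping digits in pairs: for `d = -β` this is the map `ψ` read backwards.
lemma digitSum_eq_digitSum_sq (hd : 1 < |d|) (hc : ∀ i, |c i| ≤ C) :
    digitSum d c = digitSum (d ^ 2) (fun k => d * c (2 * k) + c (2 * k + 1)) := by
  have hd0 : d ≠ 0 := abs_pos.1 (by linarith)
  have hs := summable_div_pow_succ hd hc
  have hev : Summable fun k => c (2 * k) / d ^ (2 * k + 1) :=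
    hs.comp_injective (mul_right_injective₀ (two_ne_zero' ℕ))
  have hodd : Summable fun k => c (2 * k + 1) / d ^ (2 * k + 1 + 1) :=
    hs.comp_injective ((add_left_injective 1).comp (mul_right_injective₀ (two_ne_zero' ℕ)))
  unfold digitSum
  rw [← tsum_even_add_odd (f := fun i => c i / d ^ (i + 1)) hev hodd, ← hev.tsum_add hodd]
  congr 1; ext k
  rw [show 2 * k + 1 + 1 = 2 * (k + 1) by ring, pow_mul, pow_succ' d (2 * k), pow_mul]
  field_simp
  ring

lemma digitSum_neg_mem_Icc {β M : ℝ} (hβ : 1 < β) (hc : ∀ i, c i ∈ Icc 0 M) :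
    digitSum (-β) c ∈ Icc (-β * M / (β ^ 2 - 1)) (M / (β ^ 2 - 1)) := by
  have hβ' : 1 < |-β| := by rwa [abs_neg, abs_of_pos (by linarith)]
  rw [digitSum_eq_digitSum_sq hβ' (fun i => abs_le_max_abs_abs (hc i).1 (hc i).2), neg_sq]
  refine digitSum_mem_Icc (by nlinarith) fun k => ?_
  obtain ⟨⟨h0, hM⟩, ⟨h0', hM'⟩⟩ := And.intro (hc (2 * k)) (hc (2 * k + 1))
  constructor <;> nlinarith

end Expansions

lemma eq_or_exists_forall_lt_eq {α : Type*} {f g : ℕ → α} {R : ℕ → α → α → Prop}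
    (h : ∀ k, (∀ i < k, f i = g i) → f k ≠ g k → R k (f k) (g k)) :
    f = g ∨ ∃ k, (∀ i < k, f i = g i) ∧ R k (f k) (g k) := by
  classical
  by_cases hfg : ∃ k, f k ≠ g k
  · have hmin : ∀ i < Nat.find hfg, f i = g i := fun i hi => not_not.1 (Nat.find_min hfg hi)
    exact .inr ⟨_, hmin, h _ hmin (Nat.find_spec hfg)⟩
  · exact .inl (funext fun k => not_not.1 (not_exists.1 hfg k))

-- Membership in the alphabets `𝒜 = {0, …, P}` and `ℬ = {-bβ + a : a, b ∈ 𝒜}`.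
def IsDigit (P : ℤ) (t : ℝ) : Prop := ∃ a : ℤ, 0 ≤ a ∧ a ≤ P ∧ t = a

def IsPairDigit (β : ℝ) (P : ℤ) (t : ℝ) : Prop :=
  ∃ a b : ℤ, 0 ≤ a ∧ a ≤ P ∧ 0 ≤ b ∧ b ≤ P ∧ t = -(b : ℝ) * β + a

lemma IsDigit.mem_Icc {P : ℤ} {t : ℝ} (ht : IsDigit P t) : t ∈ Icc 0 (P : ℝ) := by
  obtain ⟨a, h0, hP, rfl⟩ := ht
  exact ⟨by exact_mod_cast h0, by exact_mod_cast hP⟩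

lemma IsPairDigit.mem_Icc {β : ℝ} {P : ℤ} {t : ℝ} (hβ : 0 ≤ β) (ht : IsPairDigit β P t) :
    t ∈ Icc (-β * P) P := by
  obtain ⟨a, b, ha0, haP, hb0, hbP, rfl⟩ := ht
  have ha0' : (0 : ℝ) ≤ a := by exact_mod_cast ha0
  have haP' : (a : ℝ) ≤ P := by exact_mod_cast haP
  have hb0' : (0 : ℝ) ≤ b := by exact_mod_cast hb0
  have hbP' : (b : ℝ) ≤ P := by exact_mod_cast hbP
  constructor <;> nlinarith

def digitSet (J : ℤ → Set ℝ) (P : ℤ) (z : ℝ) : Set ℝ :=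
  Int.cast '' {a : ℤ | 0 ≤ a ∧ a ≤ P ∧ z ∈ J a}

section DigitSet

variable {J : ℤ → Set ℝ} {D : ℝ → ℝ} {P : ℤ} {z : ℝ}

lemma isLeast_digitSet (hD0 : ∀ x ∈ J 0, D x = 0)
    (hD : ∀ a : ℤ, 1 ≤ a → a ≤ P → ∀ x ∈ J a \ J (a - 1), D x = a)
    (hne : (digitSet J P z).Nonempty) : IsLeast (digitSet J P z) (D z) := by
  obtain ⟨b, hb, hbmin⟩ := Int.exists_least_of_bdd (P := fun a => 0 ≤ a ∧ a ≤ P ∧ z ∈ J a)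
    ⟨0, fun a ha => ha.1⟩ (by obtain ⟨_, a, ha, -⟩ := hne; exact ⟨a, ha⟩)
  have hDz : D z = b := by
    rcases hb.1.eq_or_lt with h0 | hpos
    · rw [← h0] at hb ⊢
      exact_mod_cast hD0 z hb.2.2
    · exact hD b hpos hb.2.1 z ⟨hb.2.2, fun h =>
      absurd (hbmin (b - 1) ⟨by omega, by omega, h⟩) (by omega)⟩
  rw [hDz]
  exact Int.cast_mono.map_isLeast ⟨hb, hbmin⟩

lemma isGreatest_digitSet (hDP : ∀ x ∈ J P, D x = P)
    (hD : ∀ a : ℤ, 0 ≤ a → a < P → ∀ x ∈ J a \ J (a + 1), D x = a)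
    (hne : (digitSet J P z).Nonempty) : IsGreatest (digitSet J P z) (D z) := by
  obtain ⟨b, hb, hbmax⟩ := Int.exists_greatest_of_bdd (P := fun a => 0 ≤ a ∧ a ≤ P ∧ z ∈ J a)
    ⟨P, fun a ha => ha.2.1⟩ (by obtain ⟨_, a, ha, -⟩ := hne; exact ⟨a, ha⟩)
  have hDz : D z = b := by
    rcases hb.2.1.eq_or_lt with rfl | hlt
    · exact hDP z hb.2.2
    · exact hD b hb.1 hlt z ⟨hb.2.2, fun h =>
      absurd (hbmax (b + 1) ⟨by omega, by omega, h⟩) (by omega)⟩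
  rw [hDz]
  exact Int.cast_mono.map_isGreatest ⟨hb, hbmax⟩

end DigitSet

section Interval

variable {β l r : ℝ} {P : ℤ}

lemma endpoint_eqs (hβ : 1 < β) (hl : l = -β * P / (β ^ 2 - 1)) (hr : r = P / (β ^ 2 - 1)) :
    l = -β * r ∧ r = -β * l - P := by
  have : β ^ 2 - 1 ≠ 0 := by nlinarith
  subst hl hr
  constructor
  · ring
  · field_simp; ring

lemma mem_Icc_sub_div_iff (hβ : 0 < β) (hlr : l = -β * r) (hrl : r = -β * l - P) (a z : ℝ) :
    z ∈ Icc (l + (P - a) / β) (r - a / β) ↔ -β * z - a ∈ Icc l r := by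
  have hleft : z - (l + (P - a) / β) = (r - (-β * z - a)) / β := by
    rw [hrl]; field_simp; ring
  have hright : r - a / β - z = (-β * z - a - l) / β := by
    rw [hlr]; field_simp; ring
  rw [mem_Icc, mem_Icc, ← sub_nonneg, hleft, ← sub_nonneg (a := r - a / β), hright,
    le_div_iff₀ hβ, le_div_iff₀ hβ, zero_mul, sub_nonneg, sub_nonneg, and_comm]

lemma digitSet_nonempty {J : ℤ → Set ℝ} (hJ : ∀ (a : ℤ) z, z ∈ J a ↔ -β * z - a ∈ Icc l r)
    (hβ : 1 < β) (hβP : β < P + 1) (hlr : l = -β * r) (hrl : r = -β * l - P) {z : ℝ}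
    (hz : z ∈ Icc l r) : (digitSet J P z).Nonempty := by
  have hP : (0 : ℤ) ≤ P := by
    have : (0 : ℝ) < P := by linarith
    exact_mod_cast this.le
  have hwidth : 1 ≤ r - l := by
    have hr : r * (β ^ 2 - 1) = P := by rw [hlr] at hrl; linear_combination -hrl
    nlinarith [hz.1, hz.2]
  have htop : -β * z - r ≤ P := by nlinarith [hz.1]
  have hbot : 0 ≤ -β * z - l := by nlinarith [hz.2]
  set a := min P ⌊-β * z - l⌋
  have ha : (a : ℝ) = min (P : ℝ) (⌊-β * z - l⌋ : ℝ) := Int.cast_min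
  refine ⟨a, a, ⟨le_min hP (Int.floor_nonneg.2 hbot), min_le_left _ _, (hJ a z).2 ⟨?_, ?_⟩⟩, rfl⟩
  · linarith [min_le_right (P : ℝ) ⌊-β * z - l⌋, Int.floor_le (-β * z - l)]
  · rw [ha]
    linarith [le_min htop (by linarith [Int.sub_one_lt_floor (-β * z - l)] :
      -β * z - r ≤ ⌊-β * z - l⌋)]

lemma mem_Icc_of_mem_digitSet {J : ℤ → Set ℝ}
    (hJ : ∀ (a : ℤ) z, z ∈ J a ↔ -β * z - a ∈ Icc l r) (hβ : 0 < β)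
    (hlr : l = -β * r) (hrl : r = -β * l - P) {a z : ℝ} (ha : a ∈ digitSet J P z) :
    z ∈ Icc l r := by
  obtain ⟨n, ⟨hn0, hnP, hz⟩, rfl⟩ := ha
  obtain ⟨hl', hr'⟩ := (hJ n z).1 hz
  have hn0' : (0 : ℝ) ≤ n := by exact_mod_cast hn0
  have hnP' : (n : ℝ) ≤ P := by exact_mod_cast hnP
  constructor <;> nlinarith

lemma le_neg_mul_add_of_isLeast_of_isGreatest {J : ℤ → Set ℝ}
    (hJ : ∀ (a : ℤ) z, z ∈ J a ↔ -β * z - a ∈ Icc l r) (hβ : 0 < β) (hPβ : (P : ℝ) < β)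
    (hlr : l = -β * r) (hrl : r = -β * l - P) {z b a t : ℝ}
    (hb : IsLeast (digitSet J P z) b) (ha : IsGreatest (digitSet J P (-β * z - b)) a)
    (ht : IsPairDigit β P t) (hmem : β ^ 2 * z - t ∈ Icc l r) : t ≤ -β * b + a := by
  obtain ⟨a', b', ha'0, ha'P, hb'0, hb'P, rfl⟩ := ht
  have ha'mem : (a' : ℝ) ∈ digitSet J P (-β * z - b') :=
    ⟨a', ⟨ha'0, ha'P, (hJ a' _).2 (by convert hmem using 1; ring)⟩, rfl⟩
  have hb'mem : (b' : ℝ) ∈ digitSet J P z :=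
    ⟨b', ⟨hb'0, hb'P, (hJ b' z).2 (mem_Icc_of_mem_digitSet hJ hβ hlr hrl ha'mem)⟩, rfl⟩
  obtain ⟨n, -, rfl⟩ := hb.1
  obtain ⟨m, ⟨hm0, -⟩, rfl⟩ := ha.1
  rcases (show n ≤ b' by exact_mod_cast hb.2 hb'mem).eq_or_lt with rfl | hlt
  · linarith [ha.2 ha'mem]
  · -- raising `b` by one costs `β > P ≥ a'`
    have hlt' : (n : ℝ) + 1 ≤ b' := by exact_mod_cast hlt
    have ha'P' : (a' : ℝ) ≤ P := by exact_mod_cast ha'P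
    have hm0' : (0 : ℝ) ≤ m := by exact_mod_cast hm0
    nlinarith

end Interval

section GreedyExpansions

variable {β l r : ℝ} {P : ℤ} {J : ℤ → Set ℝ} {x : ℝ}

lemma greedy_neg_expansion (hJ : ∀ (a : ℤ) z, z ∈ J a ↔ -β * z - a ∈ Icc l r) (hβ : 1 < β)
    (hl : l = -β * P / (β ^ 2 - 1)) (hr : r = P / (β ^ 2 - 1)) {w : ℕ → ℝ}
    (hmin : ∀ k, IsLeast (digitSet J P (remainders (-β) x w (2 * k))) (w (2 * k)))
    (hmax : ∀ k, IsGreatest (digitSet J P (remainders (-β) x w (2 * k + 1))) (w (2 * k + 1))) :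
    (∀ i, IsDigit P (w i)) ∧ x = digitSum (-β) w ∧
      ∀ w', (∀ i, IsDigit P (w' i)) ∧ x = digitSum (-β) w' → w' = w ∨ AltLt w' w := by
  obtain ⟨hlr, hrl⟩ := endpoint_eqs hβ hl hr
  have hβ' : 1 < |-β| := by rwa [abs_neg, abs_of_pos (by linarith)]
  have hmem : ∀ n, w n ∈ digitSet J P (remainders (-β) x w n) := fun n => by
    obtain ⟨k, rfl | rfl⟩ := Nat.even_or_odd' n
    exacts [(hmin k).1, (hmax k).1]
  have hdigit : ∀ i, IsDigit P (w i) := fun i => by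
    obtain ⟨a, ⟨ha0, haP, -⟩, ha⟩ := hmem i
    exact ⟨a, ha0, haP, ha.symm⟩
  have hbound := fun {c : ℕ → ℝ} (hc : ∀ i, IsDigit P (c i)) i =>
    abs_le_max_abs_abs (hc i).mem_Icc.1 (hc i).mem_Icc.2
  have hK := fun {z : ℝ} (hz : z ∈ Icc l r) => abs_le_max_abs_abs hz.1 hz.2
  refine ⟨hdigit, eq_digitSum_of_abs_remainders_le hβ' (hbound hdigit) fun n =>
    hK (mem_Icc_of_mem_digitSet hJ (by linarith) hlr hrl (hmem n)), ?_⟩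
  rintro w' ⟨hw', hxw'⟩
  refine eq_or_exists_forall_lt_eq (R := fun k s t => (-1 : ℝ) ^ (k + 1) * s < (-1) ^ (k + 1) * t)
    fun k hagree hne => ?_
  have htail : -β * remainders (-β) x w k - w' k ∈ Icc l r := by
    rw [← remainders_congr hagree, ← remainders, remainders_eq_digitSum hβ' (hbound hw') hxw',
      hl, hr]
    exact digitSum_neg_mem_Icc hβ fun i => (hw' _).mem_Icc
  obtain ⟨a, ha0, haP, ha⟩ := hw' k
  have hw'k : w' k ∈ digitSet J P (remainders (-β) x w k) :=
    ⟨a, ⟨ha0, haP, (hJ a _).2 (ha ▸ htail)⟩, ha.symm⟩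
  obtain ⟨m, rfl | rfl⟩ := Nat.even_or_odd' k
  · have hsign : (-1 : ℝ) ^ (2 * m + 1) = -1 := by rw [pow_succ, pow_mul]; norm_num
    rw [hsign]
    linarith [lt_of_le_of_ne ((hmin m).2 hw'k) (Ne.symm hne)]
  · have hsign : (-1 : ℝ) ^ (2 * m + 1 + 1) = 1 := by rw [pow_succ, pow_succ, pow_mul]; norm_num
    rw [hsign]
    linarith [lt_of_le_of_ne ((hmax m).2 hw'k) hne]

lemma greedy_sq_expansion (hJ : ∀ (a : ℤ) z, z ∈ J a ↔ -β * z - a ∈ Icc l r) (hβ : 1 < β)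
    (hPβ : (P : ℝ) < β) (hl : l = -β * P / (β ^ 2 - 1)) (hr : r = P / (β ^ 2 - 1)) {c : ℕ → ℝ}
    (hc : ∀ k, ∃ b a, IsLeast (digitSet J P (remainders (β ^ 2) x c k)) b ∧
      IsGreatest (digitSet J P (-β * remainders (β ^ 2) x c k - b)) a ∧ c k = -β * b + a) :
    (∀ k, IsPairDigit β P (c k)) ∧ x = digitSum (β ^ 2) c ∧
      ∀ w', (∀ k, IsPairDigit β P (w' k)) ∧ x = digitSum (β ^ 2) w' → w' = c ∨ LexLt w' c := by
  obtain ⟨hlr, hrl⟩ := endpoint_eqs hβ hl hr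
  have hβ0 : 0 < β := by linarith
  have hβ2 : 1 < β ^ 2 := by nlinarith
  have hβ2' : 1 < |β ^ 2| := by rwa [abs_of_pos (by positivity)]
  choose b a hb ha hcba using hc
  have hdigit : ∀ k, IsPairDigit β P (c k) := fun k => by
    obtain ⟨B, ⟨hB0, hBP, -⟩, hB⟩ := (hb k).1
    obtain ⟨A, ⟨hA0, hAP, -⟩, hA⟩ := (ha k).1
    exact ⟨A, B, hA0, hAP, hB0, hBP, by rw [hcba, ← hA, ← hB]; ring⟩
  have hbound := fun {c : ℕ → ℝ} (hc : ∀ k, IsPairDigit β P (c k)) k =>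
    abs_le_max_abs_abs ((hc k).mem_Icc hβ0.le).1 ((hc k).mem_Icc hβ0.le).2
  have hK := fun {z : ℝ} (hz : z ∈ Icc l r) => abs_le_max_abs_abs hz.1 hz.2
  refine ⟨hdigit, eq_digitSum_of_abs_remainders_le hβ2' (hbound hdigit) fun n =>
    hK (mem_Icc_of_mem_digitSet hJ hβ0 hlr hrl (hb n).1), ?_⟩
  rintro w' ⟨hw', hxw'⟩
  refine eq_or_exists_forall_lt_eq (R := fun _ s t => s < t) fun k hagree hne =>
    lt_of_le_of_ne ?_ hne
  rw [hcba]
  refine le_neg_mul_add_of_isLeast_of_isGreatest hJ hβ0 hPβ hlr hrl (hb k) (ha k) (hw' k) ?_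
  rw [← remainders_congr hagree, ← remainders, remainders_eq_digitSum hβ2' (hbound hw') hxw',
    hl, hr]
  exact digitSum_mem_Icc hβ2 fun i => (hw' _).mem_Icc hβ0.le

lemma isLeast_isGreatest_remainders {Dm Dv : ℝ → ℝ}
    (hJ : ∀ (a : ℤ) z, z ∈ J a ↔ -β * z - a ∈ Icc l r) (hβ : 1 < β) (hβP : β < P + 1)
    (hlr : l = -β * r) (hrl : r = -β * l - P) (hDmP : ∀ x ∈ J P, Dm x = P)
    (hDm : ∀ a : ℤ, 0 ≤ a → a < P → ∀ x ∈ J a \ J (a + 1), Dm x = a)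
    (hDv0 : ∀ x ∈ J 0, Dv x = 0) (hDv : ∀ a : ℤ, 1 ≤ a → a ≤ P → ∀ x ∈ J a \ J (a - 1), Dv x = a)
    (hx : x ∈ Icc l r) {w : ℕ → ℝ}
    (hwv : ∀ k, w (2 * k) = Dv (remainders (-β) x w (2 * k)))
    (hwm : ∀ k, w (2 * k + 1) = Dm (remainders (-β) x w (2 * k + 1))) (k : ℕ) :
    IsLeast (digitSet J P (remainders (-β) x w (2 * k))) (w (2 * k)) ∧
      IsGreatest (digitSet J P (remainders (-β) x w (2 * k + 1))) (w (2 * k + 1)) := by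
  have hne := fun {z} (hz : z ∈ Icc l r) => digitSet_nonempty hJ hβ hβP hlr hrl hz
  have hmem : ∀ n, remainders (-β) x w n ∈ Icc l r := by
    intro n
    induction n with
    | zero => exact hx
    | succ n ih =>
      have hwn : w n ∈ digitSet J P (remainders (-β) x w n) := by
        obtain ⟨k, rfl | rfl⟩ := Nat.even_or_odd' n
        · rw [hwv]; exact (isLeast_digitSet hDv0 hDv (hne ih)).1
        · rw [hwm]; exact (isGreatest_digitSet hDmP hDm (hne ih)).1
      obtain ⟨a, ⟨-, -, ha⟩, hwa⟩ := hwn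
      rw [remainders, ← hwa]
      exact (hJ a _).1 ha
  exact ⟨hwv k ▸ isLeast_digitSet hDv0 hDv (hne (hmem _)),
    hwm k ▸ isGreatest_digitSet hDmP hDm (hne (hmem _))⟩

end GreedyExpansions

theorem stmt7 (β : ℝ) (hβ : 1 < β) (hni : ∀ n : ℕ, β ≠ n)
    (l r : ℝ) (hl : l = -β * (⌊β⌋ : ℝ) / (β ^ 2 - 1)) (hr : r = (⌊β⌋ : ℝ) / (β ^ 2 - 1))
    (Ia : ℤ → Set ℝ)
    (hIa : ∀ a : ℤ, Ia a = Set.Icc (l + ((⌊β⌋ : ℝ) - a) / β) (r - a / β))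
    (Dm Dv : ℝ → ℝ)
    (hDmTop : ∀ x ∈ Ia ⌊β⌋, Dm x = (⌊β⌋ : ℝ))
    (hDm : ∀ a : ℤ, 0 ≤ a → a < ⌊β⌋ → ∀ x ∈ Ia a \ Ia (a + 1), Dm x = (a : ℝ))
    (hDv0 : ∀ x ∈ Ia 0, Dv x = 0)
    (hDv : ∀ a : ℤ, 1 ≤ a → a ≤ ⌊β⌋ → ∀ x ∈ Ia a \ Ia (a - 1), Dv x = (a : ℝ))
    (DG TG : ℝ → ℝ)
    (hDG : ∀ x, DG x = -β * Dv x + Dm (-β * x - Dv x))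
    (hTG : ∀ x, TG x = β ^ 2 * x - DG x)
    (x : ℝ) (hx : x ∈ Set.Icc l r)
    (dG : ℕ → ℝ) (hdG : ∀ k, dG k = DG (TG^[k] x))
    (w : ℕ → ℝ)
    (hw : ∀ k, w (2 * k) = Dv (TG^[k] x) ∧
      w (2 * k + 1) = Dm (-β * TG^[k] x - Dv (TG^[k] x))) :
    -- `d_G(x)` is the greedy β²-representation of x over ℬ (lex-maximal)
    ((∀ k, ∃ a b : ℤ, 0 ≤ a ∧ a ≤ ⌊β⌋ ∧ 0 ≤ b ∧ b ≤ ⌊β⌋ ∧ dG k = -(b : ℝ) * β + a) ∧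
        x = ∑' k : ℕ, dG k / (β ^ 2) ^ (k + 1) ∧
        (∀ w' : ℕ → ℝ,
          ((∀ k, ∃ a b : ℤ, 0 ≤ a ∧ a ≤ ⌊β⌋ ∧ 0 ≤ b ∧ b ≤ ⌊β⌋ ∧ w' k = -(b : ℝ) * β + a) ∧
              x = ∑' k : ℕ, w' k / (β ^ 2) ^ (k + 1)) →
            w' = dG ∨ LexLt w' dG)) ∧
    -- `ψ(d_G(x))` is the greedy (−β)-representation of x over 𝒜 (alt-maximal)
    ((∀ i, ∃ a : ℤ, 0 ≤ a ∧ a ≤ ⌊β⌋ ∧ w i = (a : ℝ)) ∧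
        x = ∑' i : ℕ, w i / (-β) ^ (i + 1) ∧
        (∀ w' : ℕ → ℝ,
          ((∀ i, ∃ a : ℤ, 0 ≤ a ∧ a ≤ ⌊β⌋ ∧ w' i = (a : ℝ)) ∧
              x = ∑' i : ℕ, w' i / (-β) ^ (i + 1)) →
            w' = w ∨ AltLt w' w)) := by
  have hPβ : (⌊β⌋ : ℝ) < β := by
    refine (Int.floor_le β).lt_of_ne fun h => hni ⌊β⌋.toNat (h.symm.trans ?_)
    rw [← Int.cast_natCast, Int.toNat_of_nonneg (Int.floor_nonneg.2 (by linarith))]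
  obtain ⟨hlr, hrl⟩ := endpoint_eqs hβ hl hr
  have hJ : ∀ (a : ℤ) z, z ∈ Ia a ↔ -β * z - a ∈ Icc l r := fun a z => by
    rw [hIa]; exact mem_Icc_sub_div_iff (by linarith) hlr hrl a z
  have hdGw : dG = fun k => -β * w (2 * k) + w (2 * k + 1) := funext fun k => by
    rw [hdG, hDG, (hw k).1, (hw k).2]
  have horbit : ∀ k, remainders (β ^ 2) x dG k = remainders (-β) x w (2 * k) := fun k => by
    rw [remainders_two_mul, neg_sq, ← hdGw]
  have hext := isLeast_isGreatest_remainders hJ hβ (Int.lt_floor_add_one β) hlr hrl hDmTop hDm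
    hDv0 hDv hx (w := w) (fun k => by rw [← horbit, remainders_eq_iterate hTG hdG, (hw k).1])
    (fun k => by rw [(hw k).2, remainders, ← horbit, remainders_eq_iterate hTG hdG, (hw k).1])
  refine ⟨greedy_sq_expansion hJ hβ hPβ hl hr fun k => ⟨w (2 * k), w (2 * k + 1), ?_, ?_,
    congrFun hdGw k⟩, greedy_neg_expansion hJ hβ hl hr (fun k => (hext k).1) fun k => (hext k).2⟩
  · rw [horbit]; exact (hext k).1
  · rw [horbit]; exact (hext k).2
end

section
/- Let β > 1 with β ∉ ℕ and let x ∈ I. Then d_L(x) is a β²-representation of x over ℬ that is minimal in the lexicographic order among all β²-representations of x over ℬ (the lazy β²-representation of x over ℬ), and ψ(d_L(x)) is the minimal element of R_{−β,𝒜}(x) with respect to the alternate order (the lazy (−β)-representation of x over 𝒜). -/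
/-!
The lazy digits are read off the remainders `u₀ = x`, `uᵢ₊₁ = -β uᵢ - wᵢ`: `T_m` takes the
greatest and `T_v` the least digit `a ∈ 𝒜` with `-β u - a ∈ I`, so the remainders stay in `I`.
Every tail of a (−β)-representation over `𝒜` lies in `I`; hence at the first index where another
representation differs from `w`, its digit is admissible for the common remainder, and the sign
`(-1)^(i+1)` of the alternate order says exactly that `w` is smaller there. Grouping digits in
pairs (`ψ⁻¹`) turns (−β)-representations over `𝒜` into β²-representations over `ℬ`, and since
`⌊β⌋ < β`, a larger first digit `b` of a pair makes `-bβ + a` smaller whatever the second digit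
is: the alternate order becomes the lexicographic one.
-/

open Finset Filter Topology

namespace NegBetaExpansion

def remainder (γ x : ℝ) (c : ℕ → ℝ) : ℕ → ℝ
  | 0 => x
  | n + 1 => γ * remainder γ x c n - c n

section Remainder

variable {γ x : ℝ} {c c' : ℕ → ℝ}

theorem remainder_eq (hγ : γ ≠ 0) (n : ℕ) :
    remainder γ x c n = γ ^ n * (x - ∑ i ∈ range n, c i / γ ^ (i + 1)) := by
  induction n with
  | zero => simp [remainder]
  | succ n ih =>
    rw [remainder, ih, sum_range_succ]
    field_simp
    ring

theorem remainder_congr {n : ℕ} (h : ∀ i < n, c i = c' i) :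
    remainder γ x c n = remainder γ x c' n := by
  induction n with
  | zero => rfl
  | succ n ih =>
    rw [remainder, remainder, h n n.lt_succ_self, ih fun i hi => h i (hi.trans n.lt_succ_self)]

theorem summable_div_pow {C : ℝ} (hγ : 1 < |γ|) (hc : ∀ i, |c i| ≤ C) :
    Summable fun i => c i / γ ^ (i + 1) := by
  refine .of_norm_bounded ((summable_geometric_of_lt_one (by positivity)
    (inv_lt_one_of_one_lt₀ hγ)).mul_left (C * |γ|⁻¹)) fun i => ?_
  rw [Real.norm_eq_abs, abs_div, abs_pow, mul_assoc, ← pow_succ', inv_pow, ← div_eq_mul_inv]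
  gcongr
  exact hc i

theorem hasSum_of_abs_remainder_le {C M : ℝ} (hγ : 1 < |γ|) (hc : ∀ i, |c i| ≤ C)
    (hrem : ∀ n, |remainder γ x c n| ≤ M) : HasSum (fun i => c i / γ ^ (i + 1)) x := by
  have hγ0 : γ ≠ 0 := by rintro rfl; norm_num at hγ
  rw [(summable_div_pow hγ hc).hasSum_iff_tendsto_nat]
  have hpartial : ∀ n, ∑ i ∈ range n, c i / γ ^ (i + 1) = x - remainder γ x c n / γ ^ n := by
    intro n
    rw [remainder_eq hγ0]
    field_simp
    ring
  have hdecay : Tendsto (fun n => remainder γ x c n / γ ^ n) atTop (𝓝 0) := by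
    refine squeeze_zero_norm (fun n => ?_) (by simpa using (tendsto_pow_atTop_nhds_zero_of_lt_one
      (by positivity) (inv_lt_one_of_one_lt₀ hγ)).const_mul M)
    rw [Real.norm_eq_abs, abs_div, abs_pow, ← div_eq_mul_inv]
    gcongr
    exact hrem n
  simpa [hpartial] using (tendsto_const_nhds (x := x)).sub hdecay

theorem remainder_eq_tsum (hγ : γ ≠ 0) (h : HasSum (fun i => c i / γ ^ (i + 1)) x) (n : ℕ) :
    remainder γ x c n = ∑' m, c (n + m) / γ ^ (m + 1) := by
  have htail := h.summable.sum_add_tsum_nat_add n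
  rw [h.tsum_eq] at htail
  rw [remainder_eq hγ, ← htail, add_sub_cancel_left, ← tsum_mul_left]
  congr 1
  ext m
  rw [add_comm m n, pow_add]
  field_simp
  ring

end Remainder

theorem hasSum_div_pow_succ {γ : ℝ} (hγ : 1 < γ) (a : ℝ) :
    HasSum (fun k => a / γ ^ (k + 1)) (a / (γ - 1)) := by
  have hγ1 : γ - 1 ≠ 0 := by linarith
  have hterm : (fun k => a / γ ^ (k + 1)) = fun k => a * γ⁻¹ * γ⁻¹ ^ k := by
    ext k
    rw [pow_succ', inv_pow, div_eq_mul_inv, mul_inv, mul_assoc]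
  rw [hterm, show a / (γ - 1) = a * γ⁻¹ * (1 - γ⁻¹)⁻¹ by field_simp]
  exact (hasSum_geometric_of_lt_one (by positivity) (inv_lt_one_of_one_lt₀ hγ)).mul_left _

theorem tsum_div_pow_mem_Icc {γ lo hi : ℝ} {d : ℕ → ℝ} (hγ : 1 < γ)
    (hd : ∀ k, d k ∈ Set.Icc lo hi) :
    ∑' k, d k / γ ^ (k + 1) ∈ Set.Icc (lo / (γ - 1)) (hi / (γ - 1)) := by
  have hs : Summable fun k => d k / γ ^ (k + 1) :=
    summable_div_pow (C := max |lo| |hi|) (by rwa [abs_of_pos (by linarith)])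
      fun k => abs_le_max_abs_abs (hd k).1 (hd k).2
  refine ⟨hasSum_le (fun k => ?_) (hasSum_div_pow_succ hγ lo) hs.hasSum,
    hasSum_le (fun k => ?_) hs.hasSum (hasSum_div_pow_succ hγ hi)⟩ <;>
  gcongr
  exacts [(hd k).1, (hd k).2]


def IsNegBetaDigit (β t : ℝ) : Prop :=
  ∃ a : ℤ, 0 ≤ a ∧ a ≤ ⌊β⌋ ∧ t = a

def IsBetaSqDigit (β t : ℝ) : Prop :=
  ∃ a b : ℤ, 0 ≤ a ∧ a ≤ ⌊β⌋ ∧ 0 ≤ b ∧ b ≤ ⌊β⌋ ∧ t = -(b : ℝ) * β + a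

/-- `ψ⁻¹`: the (−β)-digits `b a` at positions `2k, 2k + 1` give the β²-digit `-bβ + a`. -/
def pairDigits (β : ℝ) (c : ℕ → ℝ) (k : ℕ) : ℝ :=
  -β * c (2 * k) + c (2 * k + 1)

section Digits

variable {β x : ℝ} {c c' : ℕ → ℝ}

theorem IsNegBetaDigit.mem_Icc {t : ℝ} (ht : IsNegBetaDigit β t) : t ∈ Set.Icc 0 (⌊β⌋ : ℝ) := by
  obtain ⟨a, ha0, haB, rfl⟩ := ht
  exact ⟨by exact_mod_cast ha0, by exact_mod_cast haB⟩

theorem IsNegBetaDigit.abs_le {t : ℝ} (ht : IsNegBetaDigit β t) : |t| ≤ ⌊β⌋ := by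
  rw [abs_of_nonneg ht.mem_Icc.1]
  exact ht.mem_Icc.2

theorem isBetaSqDigit_pairDigits (hc : ∀ i, IsNegBetaDigit β (c i)) (k : ℕ) :
    IsBetaSqDigit β (pairDigits β c k) := by
  obtain ⟨b, hb0, hbB, hb⟩ := hc (2 * k)
  obtain ⟨a, ha0, haB, ha⟩ := hc (2 * k + 1)
  exact ⟨a, b, ha0, haB, hb0, hbB, by rw [pairDigits, ha, hb]; ring⟩

theorem exists_pairDigits_eq {d : ℕ → ℝ} (hd : ∀ k, IsBetaSqDigit β (d k)) :
    ∃ c, (∀ i, IsNegBetaDigit β (c i)) ∧ pairDigits β c = d := by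
  choose a b ha0 haB hb0 hbB hd using hd
  refine ⟨fun i => if i % 2 = 0 then (b (i / 2) : ℝ) else a (i / 2), fun i => ?_, ?_⟩
  · dsimp only
    split_ifs
    exacts [⟨_, hb0 _, hbB _, rfl⟩, ⟨_, ha0 _, haB _, rfl⟩]
  · ext k
    simp only [pairDigits]
    rw [if_pos (by omega), if_neg (by omega), show 2 * k / 2 = k by omega,
      show (2 * k + 1) / 2 = k by omega, hd]
    ring

theorem hasSum_pairDigits (hβ : β ≠ 0) (h : HasSum (fun i => c i / (-β) ^ (i + 1)) x) :
    HasSum (fun k => pairDigits β c k / (β ^ 2) ^ (k + 1)) x := by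
  set f := fun i => c i / (-β) ^ (i + 1)
  have hinj : ∀ j, Function.Injective fun k => 2 * k + j := fun j _ _ h => by simpa using h
  have he : Summable fun k => f (2 * k) := h.summable.comp_injective (hinj 0)
  have ho : Summable fun k => f (2 * k + 1) := h.summable.comp_injective (hinj 1)
  have hsum := he.hasSum.add ho.hasSum
  rw [tsum_even_add_odd he ho, h.tsum_eq] at hsum
  convert hsum using 2 with k
  simp only [f, pairDigits]
  rw [show 2 * k + 1 + 1 = 2 * (k + 1) by ring, pow_mul, neg_sq, pow_succ (-β), pow_mul, neg_sq]
  field_simp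
  ring

theorem tsum_pairDigits (hβ : 1 < β) (hc : ∀ i, IsNegBetaDigit β (c i)) :
    ∑' k, pairDigits β c k / (β ^ 2) ^ (k + 1) = ∑' i, c i / (-β) ^ (i + 1) :=
  (hasSum_pairDigits (by positivity) (summable_div_pow (by rwa [abs_neg, abs_of_pos (by positivity)])
    fun i => (hc i).abs_le).hasSum).tsum_eq

theorem lexLt_pairDigits (hβ : (⌊β⌋ : ℝ) < β) (hc : ∀ i, IsNegBetaDigit β (c i))
    (hc' : ∀ i, IsNegBetaDigit β (c' i)) (h : AltLt c c') :
    LexLt (pairDigits β c) (pairDigits β c') := by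
  obtain ⟨i, hpre, hi⟩ := h
  obtain ⟨k, rfl | rfl⟩ := Nat.even_or_odd' i
  · refine ⟨k, fun j hj => by rw [pairDigits, pairDigits, hpre _ (by omega), hpre _ (by omega)], ?_⟩
    rw [pow_succ, pow_mul, neg_one_sq, one_pow, one_mul] at hi
    obtain ⟨a, -, -, ha⟩ := hc (2 * k)
    obtain ⟨a', -, -, ha'⟩ := hc' (2 * k)
    have hstep : c' (2 * k) ≤ c (2 * k) - 1 := by
      rw [ha, ha'] at hi ⊢
      have hlt : a' < a := by exact_mod_cast (by linarith : (a' : ℝ) < a)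
      exact_mod_cast Int.le_sub_one_of_lt hlt
    obtain ⟨-, hcB⟩ := (hc (2 * k + 1)).mem_Icc
    obtain ⟨hc'0, -⟩ := (hc' (2 * k + 1)).mem_Icc
    have hβ0 : 0 ≤ β := by linarith [(hc 0).mem_Icc.2, (hc 0).mem_Icc.1]
    simp only [pairDigits]
    nlinarith [mul_le_mul_of_nonneg_left hstep hβ0]
  · refine ⟨k, fun j hj => by rw [pairDigits, pairDigits, hpre _ (by omega), hpre _ (by omega)], ?_⟩
    rw [show 2 * k + 1 + 1 = 2 * (k + 1) by ring, pow_mul, neg_one_sq, one_pow, one_mul,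
      one_mul] at hi
    simp only [pairDigits]
    rw [hpre (2 * k) (by omega)]
    linarith

end Digits

def admissibleDigits (β l r v : ℝ) : Set ℝ :=
  {t | IsNegBetaDigit β t ∧ -β * v - t ∈ Set.Icc l r}

/-- Positions are counted from `0`, so the sign `(-1)^(i+1)` taken from `AltLt` makes `t` the
greatest admissible digit for even `i` and the least for odd `i`. -/
def IsLazyDigit (β l r : ℝ) (i : ℕ) (v t : ℝ) : Prop :=
  t ∈ admissibleDigits β l r v ∧
    ∀ t' ∈ admissibleDigits β l r v, (-1 : ℝ) ^ (i + 1) * t ≤ (-1) ^ (i + 1) * t'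

section Admissible

variable {β l r x v : ℝ}

theorem neg_mul_endpoints (hβ : 1 < β) (hl : l = -β * (⌊β⌋ : ℝ) / (β ^ 2 - 1))
    (hr : r = (⌊β⌋ : ℝ) / (β ^ 2 - 1)) : -β * r = l ∧ -β * l - ⌊β⌋ = r := by
  have : β ^ 2 - 1 ≠ 0 := by nlinarith
  subst hl hr
  constructor
  · ring
  · field_simp
    ring

theorem mem_Icc_iff_admissible (hβ : 1 < β) (hl : l = -β * (⌊β⌋ : ℝ) / (β ^ 2 - 1))
    (hr : r = (⌊β⌋ : ℝ) / (β ^ 2 - 1)) (a v : ℝ) :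
    v ∈ Set.Icc (l + (⌊β⌋ - a) / β) (r - a / β) ↔ -β * v - a ∈ Set.Icc l r := by
  obtain ⟨hrl, hlr⟩ := neg_mul_endpoints hβ hl hr
  have hβ0 : 0 < β := by linarith
  have ha : a = β * (a / β) := by field_simp
  have hb : ⌊β⌋ - a = β * ((⌊β⌋ - a) / β) := by field_simp
  constructor <;> rintro ⟨h1, h2⟩ <;> constructor <;> nlinarith

theorem one_le_sub_endpoints (hβ : 1 < β) (hl : l = -β * (⌊β⌋ : ℝ) / (β ^ 2 - 1))
    (hr : r = (⌊β⌋ : ℝ) / (β ^ 2 - 1)) : 1 ≤ r - l := by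
  have hprod : (r - l) * (β - 1) = ⌊β⌋ := by
    have : β ^ 2 - 1 ≠ 0 := by nlinarith
    subst hl hr
    field_simp
    ring
  nlinarith [Int.sub_one_lt_floor β]

theorem admissibleDigits_finite (β l r v : ℝ) : (admissibleDigits β l r v).Finite :=
  ((Set.finite_Icc 0 ⌊β⌋).image ((↑) : ℤ → ℝ)).subset
    fun _ ⟨⟨a, ha0, haB, ht⟩, _⟩ => ⟨a, ⟨ha0, haB⟩, ht.symm⟩

/-- The admissible digits at `v` are the integers of `[-βv - r, -βv - l] ∩ [0, ⌊β⌋]`, where the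
first interval has length `r - l ≥ 1`. -/
theorem admissibleDigits_nonempty (hβ : 1 < β) (hl : l = -β * (⌊β⌋ : ℝ) / (β ^ 2 - 1))
    (hr : r = (⌊β⌋ : ℝ) / (β ^ 2 - 1)) (hv : v ∈ Set.Icc l r) :
    (admissibleDigits β l r v).Nonempty := by
  obtain ⟨hrl, hlr⟩ := neg_mul_endpoints hβ hl hr
  have hwidth := one_le_sub_endpoints hβ hl hr
  have hβ0 : 0 < β := by linarith
  have hB : (0 : ℝ) ≤ ⌊β⌋ := by exact_mod_cast Int.floor_nonneg.mpr hβ0.le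
  have hlo : l ≤ -β * v := by nlinarith [hv.2]
  have hhi : -β * v - r ≤ ⌊β⌋ := by nlinarith [hv.1]
  by_cases hp : -β * v - r ≤ 0
  · exact ⟨0, ⟨0, le_rfl, Int.floor_nonneg.mpr hβ0.le, by simp⟩, by simpa using hlo, by linarith⟩
  · refine ⟨⌈-β * v - r⌉, ⟨_, Int.ceil_nonneg (by linarith), Int.ceil_le.mpr hhi, rfl⟩, ?_, ?_⟩
    · linarith [Int.ceil_lt_add_one (-β * v - r)]
    · linarith [Int.le_ceil (-β * v - r)]

theorem tsum_mem_Icc {c : ℕ → ℝ} (hβ : 1 < β) (hl : l = -β * (⌊β⌋ : ℝ) / (β ^ 2 - 1))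
    (hr : r = (⌊β⌋ : ℝ) / (β ^ 2 - 1)) (hc : ∀ i, IsNegBetaDigit β (c i)) :
    ∑' i, c i / (-β) ^ (i + 1) ∈ Set.Icc l r := by
  rw [← tsum_pairDigits hβ hc, hl, hr]
  refine tsum_div_pow_mem_Icc (by nlinarith) fun k => ?_
  obtain ⟨h0, hB⟩ := (hc (2 * k)).mem_Icc
  obtain ⟨h0', hB'⟩ := (hc (2 * k + 1)).mem_Icc
  constructor <;> simp only [pairDigits] <;> nlinarith

theorem remainder_mem_Icc {c : ℕ → ℝ} (hβ : 1 < β) (hl : l = -β * (⌊β⌋ : ℝ) / (β ^ 2 - 1))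
    (hr : r = (⌊β⌋ : ℝ) / (β ^ 2 - 1)) (hc : ∀ i, IsNegBetaDigit β (c i))
    (hx : x = ∑' i, c i / (-β) ^ (i + 1)) (n : ℕ) : remainder (-β) x c n ∈ Set.Icc l r := by
  have hs := summable_div_pow (γ := -β) (by rwa [abs_neg, abs_of_pos (by linarith)])
    fun i => (hc i).abs_le
  have hβ0 : -β ≠ 0 := by linarith
  rw [remainder_eq_tsum hβ0 (by rw [hx]; exact hs.hasSum)]
  exact tsum_mem_Icc hβ hl hr fun i => hc (n + i)

end Admissible

section DigitMaps

variable {β l r v : ℝ} {Ia : ℤ → Set ℝ}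

theorem isGreatest_admissibleDigits {Dm : ℝ → ℝ} (hβ : 1 < β)
    (hl : l = -β * (⌊β⌋ : ℝ) / (β ^ 2 - 1)) (hr : r = (⌊β⌋ : ℝ) / (β ^ 2 - 1))
    (hIa : ∀ a : ℤ, Ia a = Set.Icc (l + ((⌊β⌋ : ℝ) - a) / β) (r - a / β))
    (hDmTop : ∀ x ∈ Ia ⌊β⌋, Dm x = (⌊β⌋ : ℝ))
    (hDm : ∀ a : ℤ, 0 ≤ a → a < ⌊β⌋ → ∀ x ∈ Ia a \ Ia (a + 1), Dm x = (a : ℝ))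
    (hv : v ∈ Set.Icc l r) : IsGreatest (admissibleDigits β l r v) (Dm v) := by
  have hmem (a : ℤ) : v ∈ Ia a ↔ -β * v - a ∈ Set.Icc l r := by
    rw [hIa, mem_Icc_iff_admissible hβ hl hr]
  obtain ⟨t, ht, hmax⟩ := Set.exists_max_image _ id (admissibleDigits_finite β l r v)
    (admissibleDigits_nonempty hβ hl hr hv)
  obtain ⟨⟨n, hn0, hnB, rfl⟩, hadm⟩ := id ht
  suffices Dm v = n from this ▸ ⟨ht, hmax⟩
  rcases hnB.eq_or_lt with rfl | hlt
  · exact hDmTop v ((hmem _).2 hadm)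
  · refine hDm n hn0 hlt v ⟨(hmem n).2 hadm, fun hv' => ?_⟩
    have := hmax _ ⟨⟨n + 1, by omega, hlt, rfl⟩, (hmem _).1 hv'⟩
    simp only [id, Int.cast_add, Int.cast_one] at this
    linarith

theorem isLeast_admissibleDigits {Dv : ℝ → ℝ} (hβ : 1 < β)
    (hl : l = -β * (⌊β⌋ : ℝ) / (β ^ 2 - 1)) (hr : r = (⌊β⌋ : ℝ) / (β ^ 2 - 1))
    (hIa : ∀ a : ℤ, Ia a = Set.Icc (l + ((⌊β⌋ : ℝ) - a) / β) (r - a / β))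
    (hDv0 : ∀ x ∈ Ia 0, Dv x = 0)
    (hDv : ∀ a : ℤ, 1 ≤ a → a ≤ ⌊β⌋ → ∀ x ∈ Ia a \ Ia (a - 1), Dv x = (a : ℝ))
    (hv : v ∈ Set.Icc l r) : IsLeast (admissibleDigits β l r v) (Dv v) := by
  have hmem (a : ℤ) : v ∈ Ia a ↔ -β * v - a ∈ Set.Icc l r := by
    rw [hIa, mem_Icc_iff_admissible hβ hl hr]
  obtain ⟨t, ht, hmin⟩ := Set.exists_min_image _ id (admissibleDigits_finite β l r v)
    (admissibleDigits_nonempty hβ hl hr hv)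
  obtain ⟨⟨n, hn0, hnB, rfl⟩, hadm⟩ := id ht
  suffices Dv v = n from this ▸ ⟨ht, hmin⟩
  rcases hn0.eq_or_lt with rfl | hpos
  · exact (hDv0 v ((hmem _).2 hadm)).trans Int.cast_zero.symm
  · refine hDv n hpos hnB v ⟨(hmem n).2 hadm, fun hv' => ?_⟩
    have := hmin _ ⟨⟨n - 1, by omega, by omega, rfl⟩, (hmem _).1 hv'⟩
    simp only [id, Int.cast_sub, Int.cast_one] at this
    linarith

end DigitMaps

section Lazy

variable {β l r x : ℝ}

theorem isLazyDigit_remainder {Dm Dv TL : ℝ → ℝ} {w : ℕ → ℝ}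
    (hDm : ∀ v ∈ Set.Icc l r, IsGreatest (admissibleDigits β l r v) (Dm v))
    (hDv : ∀ v ∈ Set.Icc l r, IsLeast (admissibleDigits β l r v) (Dv v))
    (hTL : ∀ v, TL v = -β * (-β * v - Dm v) - Dv (-β * v - Dm v)) (hx : x ∈ Set.Icc l r)
    (hw : ∀ k, w (2 * k) = Dm (TL^[k] x) ∧
      w (2 * k + 1) = Dv (-β * TL^[k] x - Dm (TL^[k] x))) (i : ℕ) :
    IsLazyDigit β l r i (remainder (-β) x w i) (w i) := by
  have horbit (k : ℕ) : remainder (-β) x w (2 * k) = TL^[k] x ∧ TL^[k] x ∈ Set.Icc l r := by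
    induction k with
    | zero => exact ⟨rfl, hx⟩
    | succ k ih =>
      rw [Function.iterate_succ_apply', hTL]
      refine ⟨?_, (hDv _ (hDm _ ih.2).1.2).1.2⟩
      rw [show 2 * (k + 1) = 2 * k + 1 + 1 by ring, remainder, remainder, ih.1, (hw k).1,
        (hw k).2]
  obtain ⟨k, rfl | rfl⟩ := Nat.even_or_odd' i
  · obtain ⟨hrem, hmem⟩ := horbit k
    rw [hrem, (hw k).1]
    refine ⟨(hDm _ hmem).1, fun t ht => ?_⟩
    have := (hDm _ hmem).2 ht
    rw [pow_succ, pow_mul, neg_one_sq, one_pow, one_mul]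
    linarith
  · obtain ⟨hrem, hmem⟩ := horbit k
    rw [remainder, hrem, (hw k).1, (hw k).2]
    refine ⟨(hDv _ (hDm _ hmem).1.2).1, fun t ht => ?_⟩
    have := (hDv _ (hDm _ hmem).1.2).2 ht
    rw [show 2 * k + 1 + 1 = 2 * (k + 1) by ring, pow_mul, neg_one_sq, one_pow, one_mul,
      one_mul]
    exact this

theorem remainder_mem_Icc_of_isLazyDigit {w : ℕ → ℝ} (hx : x ∈ Set.Icc l r)
    (hw : ∀ i, IsLazyDigit β l r i (remainder (-β) x w i) (w i)) :
    ∀ i, remainder (-β) x w i ∈ Set.Icc l r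
  | 0 => hx
  | i + 1 => (hw i).1.2

theorem eq_or_altLt_of_isLazyDigit {w w' : ℕ → ℝ} (hβ : 1 < β)
    (hl : l = -β * (⌊β⌋ : ℝ) / (β ^ 2 - 1)) (hr : r = (⌊β⌋ : ℝ) / (β ^ 2 - 1))
    (hw : ∀ i, IsLazyDigit β l r i (remainder (-β) x w i) (w i))
    (hw' : ∀ i, IsNegBetaDigit β (w' i)) (hx : x = ∑' i, w' i / (-β) ^ (i + 1)) :
    w' = w ∨ AltLt w w' := by
  classical
  rcases eq_or_ne w' w with h | hne
  · exact .inl h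
  have hex : ∃ i, w' i ≠ w i := Function.ne_iff.mp hne
  set i := Nat.find hex
  have hpre : ∀ j < i, w' j = w j := fun j hj => not_not.mp (Nat.find_min hex hj)
  have hadm : w' i ∈ admissibleDigits β l r (remainder (-β) x w i) := by
    have := remainder_mem_Icc hβ hl hr hw' hx (i + 1)
    rw [remainder, remainder_congr hpre] at this
    exact ⟨hw' i, this⟩
  refine .inr ⟨i, fun j hj => (hpre j hj).symm, lt_of_le_of_ne ((hw i).2 _ hadm) fun h => ?_⟩
  exact Nat.find_spec hex (mul_left_cancel₀ (pow_ne_zero _ (by norm_num)) h).symm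

end Lazy

theorem floor_lt_of_ne_natCast {β : ℝ} (hβ : 0 ≤ β) (hni : ∀ n : ℕ, β ≠ n) : (⌊β⌋ : ℝ) < β :=
  (Int.floor_le β).lt_of_ne fun h => hni ⌊β⌋.toNat <| by
    rw [← Int.cast_natCast, Int.toNat_of_nonneg (Int.floor_nonneg.mpr hβ), h]

end NegBetaExpansion

open NegBetaExpansion

theorem stmt8 (β : ℝ) (hβ : 1 < β) (hni : ∀ n : ℕ, β ≠ n)
    (l r : ℝ) (hl : l = -β * (⌊β⌋ : ℝ) / (β ^ 2 - 1)) (hr : r = (⌊β⌋ : ℝ) / (β ^ 2 - 1))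
    (Ia : ℤ → Set ℝ)
    (hIa : ∀ a : ℤ, Ia a = Set.Icc (l + ((⌊β⌋ : ℝ) - a) / β) (r - a / β))
    (Dm Dv : ℝ → ℝ)
    (hDmTop : ∀ x ∈ Ia ⌊β⌋, Dm x = (⌊β⌋ : ℝ))
    (hDm : ∀ a : ℤ, 0 ≤ a → a < ⌊β⌋ → ∀ x ∈ Ia a \ Ia (a + 1), Dm x = (a : ℝ))
    (hDv0 : ∀ x ∈ Ia 0, Dv x = 0)
    (hDv : ∀ a : ℤ, 1 ≤ a → a ≤ ⌊β⌋ → ∀ x ∈ Ia a \ Ia (a - 1), Dv x = (a : ℝ))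
    (DL TL : ℝ → ℝ)
    (hDL : ∀ x, DL x = -β * Dm x + Dv (-β * x - Dm x))
    (hTL : ∀ x, TL x = β ^ 2 * x - DL x)
    (x : ℝ) (hx : x ∈ Set.Icc l r)
    (dL : ℕ → ℝ) (hdL : ∀ k, dL k = DL (TL^[k] x))
    (w : ℕ → ℝ)
    (hw : ∀ k, w (2 * k) = Dm (TL^[k] x) ∧
      w (2 * k + 1) = Dv (-β * TL^[k] x - Dm (TL^[k] x))) :
    -- `d_L(x)` is the lazy β²-representation of x over ℬ (lex-minimal)
    ((∀ k, ∃ a b : ℤ, 0 ≤ a ∧ a ≤ ⌊β⌋ ∧ 0 ≤ b ∧ b ≤ ⌊β⌋ ∧ dL k = -(b : ℝ) * β + a) ∧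
        x = ∑' k : ℕ, dL k / (β ^ 2) ^ (k + 1) ∧
        (∀ w' : ℕ → ℝ,
          ((∀ k, ∃ a b : ℤ, 0 ≤ a ∧ a ≤ ⌊β⌋ ∧ 0 ≤ b ∧ b ≤ ⌊β⌋ ∧ w' k = -(b : ℝ) * β + a) ∧
              x = ∑' k : ℕ, w' k / (β ^ 2) ^ (k + 1)) →
            w' = dL ∨ LexLt dL w')) ∧
    -- `ψ(d_L(x))` is the lazy (−β)-representation of x over 𝒜 (alt-minimal)
    ((∀ i, ∃ a : ℤ, 0 ≤ a ∧ a ≤ ⌊β⌋ ∧ w i = (a : ℝ)) ∧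
        x = ∑' i : ℕ, w i / (-β) ^ (i + 1) ∧
        (∀ w' : ℕ → ℝ,
          ((∀ i, ∃ a : ℤ, 0 ≤ a ∧ a ≤ ⌊β⌋ ∧ w' i = (a : ℝ)) ∧
              x = ∑' i : ℕ, w' i / (-β) ^ (i + 1)) →
            w' = w ∨ AltLt w w')) := by
  have hβ0 : 0 < β := by linarith
  have hlazy : ∀ i, IsLazyDigit β l r i (remainder (-β) x w i) (w i) :=
    isLazyDigit_remainder (fun v hv => isGreatest_admissibleDigits hβ hl hr hIa hDmTop hDm hv)
      (fun v hv => isLeast_admissibleDigits hβ hl hr hIa hDv0 hDv hv)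
      (fun v => by rw [hTL, hDL]; ring) hx hw
  have hdig : ∀ i, IsNegBetaDigit β (w i) := fun i => (hlazy i).1.1
  have hsum : HasSum (fun i => w i / (-β) ^ (i + 1)) x :=
    hasSum_of_abs_remainder_le (by rwa [abs_neg, abs_of_pos hβ0]) (fun i => (hdig i).abs_le)
      fun n => abs_le_max_abs_abs (remainder_mem_Icc_of_isLazyDigit hx hlazy n).1
        (remainder_mem_Icc_of_isLazyDigit hx hlazy n).2
  obtain rfl : dL = pairDigits β w :=
    funext fun k => by rw [hdL, hDL, pairDigits, (hw k).1, (hw k).2]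
  refine ⟨⟨isBetaSqDigit_pairDigits hdig, (tsum_pairDigits hβ hdig ▸ hsum.tsum_eq).symm, ?_⟩,
    hdig, hsum.tsum_eq.symm, fun w' hw' => eq_or_altLt_of_isLazyDigit hβ hl hr hlazy hw'.1 hw'.2⟩
  rintro d ⟨hd, hxd⟩
  obtain ⟨c, hc, rfl⟩ := exists_pairDigits_eq hd
  rcases eq_or_altLt_of_isLazyDigit hβ hl hr hlazy hc (hxd.trans (tsum_pairDigits hβ hc)) with
    rfl | hlt
  · exact .inl rfl
  · exact .inr (lexLt_pairDigits (floor_lt_of_ne_natCast hβ0.le hni) hdig hc hlt)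
end

section
/- Let β > 1 with β ∉ ℕ. Let z₁z₂z₃z₄… be the greedy (−β)-representation of a number z ∈ I and let y₁y₂y₃y₄… be the lazy (−β)-representation of a number y ∈ I. Then y_i + z_i = ⌊β⌋ for every i ≥ 1 if and only if y + z = −⌊β⌋/(β+1). -/
namespace AltLt

theorem asymm {x y : ℕ → ℝ} (hxy : AltLt x y) (hyx : AltLt y x) : False := by
  obtain ⟨k, heq, hlt⟩ := hxy
  obtain ⟨m, heq', hlt'⟩ := hyx
  rcases lt_trichotomy k m with hkm | rfl | hmk
  · rw [heq' k hkm] at hlt; exact lt_irrefl _ hlt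
  · linarith
  · rw [heq m hmk] at hlt'; exact lt_irrefl _ hlt'

theorem const_sub (c : ℝ) {x y : ℕ → ℝ} (h : AltLt x y) :
    AltLt (fun i => c - y i) (fun i => c - x i) := by
  obtain ⟨k, heq, hlt⟩ := h
  refine ⟨k, fun i hi => by simp only [heq i hi], ?_⟩
  linarith [mul_sub ((-1 : ℝ) ^ (k + 1)) c (y k), mul_sub ((-1 : ℝ) ^ (k + 1)) c (x k)]

end AltLt

theorem eq_const_sub_of_greedy_of_lazy {Rep : ℝ → (ℕ → ℝ) → Prop} {c K : ℝ}
    (hcompl : ∀ x s, Rep x s → Rep (K - x) (fun i => c - s i))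
    {z y : ℝ} {zs ys : ℕ → ℝ}
    (hzs : Rep z zs) (hzmax : ∀ w, Rep z w → w ≠ zs → AltLt w zs)
    (hys : Rep y ys) (hymin : ∀ w, Rep y w → w ≠ ys → AltLt ys w) (hyz : y + z = K) :
    ys = fun i => c - zs i := by
  have hy : y = K - z := by linarith
  have hz : z = K - y := by linarith
  by_contra hne
  have hlazy : AltLt ys (fun i => c - zs i) :=
    hymin _ (hy ▸ hcompl z zs hzs) (Ne.symm hne)
  have hflip : AltLt zs (fun i => c - ys i) := by
    simpa only [sub_sub_cancel] using hlazy.const_sub c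
  have hne' : (fun i => c - ys i) ≠ zs := by
    intro h
    exact hne (by funext i; rw [← h, sub_sub_cancel])
  exact hflip.asymm (hzmax _ (hz ▸ hcompl y ys hys) hne')

section NegBeta

variable {β : ℝ}

theorem summable_div_neg_pow_of_abs_le (hβ : 1 < β) {s : ℕ → ℝ} {C : ℝ}
    (hs : ∀ i, |s i| ≤ C) :
    Summable (fun i : ℕ => s i / (-β) ^ (i + 1)) := by
  have hβ0 : 0 < β := by linarith
  have hgeom : Summable (fun i : ℕ => C * β⁻¹ * β⁻¹ ^ i) :=
    (summable_geometric_of_lt_one (by positivity) (inv_lt_one_of_one_lt₀ hβ)).mul_left _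
  refine Summable.of_norm_bounded hgeom fun i => ?_
  rw [norm_div, norm_pow, norm_neg, Real.norm_of_nonneg hβ0.le, Real.norm_eq_abs, mul_assoc,
    ← pow_succ', inv_pow, ← div_eq_mul_inv]
  exact div_le_div_of_nonneg_right (hs i) (by positivity)

theorem tsum_const_div_neg_pow (hβ : 1 < β) (c : ℝ) :
    ∑' i : ℕ, c / (-β) ^ (i + 1) = -c / (β + 1) := by
  have hβ0 : 0 < β := by linarith
  have hratio : ‖(-β)⁻¹‖ < 1 := by
    rw [norm_inv, norm_neg, Real.norm_of_nonneg hβ0.le]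
    exact inv_lt_one_of_one_lt₀ hβ
  have hterm : ∀ i : ℕ, c / (-β) ^ (i + 1) = c * (-β)⁻¹ * (-β)⁻¹ ^ i := by
    intro i; rw [div_eq_mul_inv, ← inv_pow, pow_succ']; ring
  rw [tsum_congr hterm, tsum_mul_left, tsum_geometric_of_norm_lt_one hratio]
  have : β + 1 ≠ 0 := by positivity
  have hratio_compl : 1 - (-β)⁻¹ = (β + 1) / β := by field_simp; ring
  rw [hratio_compl, inv_div, inv_neg]
  field_simp

theorem tsum_const_sub_div_neg_pow (hβ : 1 < β) (c : ℝ) {s : ℕ → ℝ} {C : ℝ}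
    (hs : ∀ i, |s i| ≤ C) :
    ∑' i : ℕ, (c - s i) / (-β) ^ (i + 1) = -c / (β + 1) - ∑' i : ℕ, s i / (-β) ^ (i + 1) := by
  simp only [sub_div]
  rw [(summable_div_neg_pow_of_abs_le hβ (fun _ => le_refl |c|)).tsum_sub
    (summable_div_neg_pow_of_abs_le hβ hs), tsum_const_div_neg_pow hβ]

end NegBeta

theorem stmt9_general (β : ℝ) (hβ : 1 < β)
    (Rep : ℝ → (ℕ → ℝ) → Prop)
    (hRep : ∀ t s, Rep t s ↔
      ((∀ i, ∃ a : ℤ, 0 ≤ a ∧ a ≤ ⌊β⌋ ∧ s i = (a : ℝ)) ∧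
        t = ∑' i : ℕ, s i / (-β) ^ (i + 1)))
    (z y : ℝ)
    (zs ys : ℕ → ℝ)
    (hzs : Rep z zs) (hzmax : ∀ w, Rep z w → w ≠ zs → AltLt w zs)
    (hys : Rep y ys) (hymin : ∀ w, Rep y w → w ≠ ys → AltLt ys w) :
    (∀ i, ys i + zs i = (⌊β⌋ : ℝ)) ↔ y + z = -(⌊β⌋ : ℝ) / (β + 1) := by
  have hdigit_abs : ∀ x s, Rep x s → ∀ i, |s i| ≤ ⌊β⌋ := by
    intro x s hs i
    obtain ⟨a, ha0, hab, hsa⟩ := ((hRep x s).mp hs).1 i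
    rw [hsa, abs_of_nonneg (by exact_mod_cast ha0)]
    exact_mod_cast hab
  have hcompl : ∀ x s, Rep x s → Rep (-(⌊β⌋ : ℝ) / (β + 1) - x) (fun i => ⌊β⌋ - s i) := by
    intro x s hs
    obtain ⟨hdigits, hx⟩ := (hRep x s).mp hs
    refine (hRep _ _).mpr ⟨fun i => ?_, ?_⟩
    · obtain ⟨a, ha0, hab, hsa⟩ := hdigits i
      exact ⟨⌊β⌋ - a, by omega, by omega, by push_cast [hsa]; ring⟩
    · rw [tsum_const_sub_div_neg_pow hβ _ (hdigit_abs x s hs), hx]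
  constructor
  · intro hsum
    have hys_eq : ys = fun i => ⌊β⌋ - zs i := funext fun i => by linarith [hsum i]
    have hy := ((hRep y ys).mp hys).2
    rw [hys_eq, tsum_const_sub_div_neg_pow hβ _ (hdigit_abs z zs hzs),
      ← ((hRep z zs).mp hzs).2] at hy
    linarith
  · intro hyz i
    have := congrFun (eq_const_sub_of_greedy_of_lazy hcompl hzs hzmax hys hymin hyz) i
    linarith

theorem stmt9 (β : ℝ) (hβ : 1 < β) (hni : ∀ n : ℕ, β ≠ n)
    (l r : ℝ) (hl : l = -β * (⌊β⌋ : ℝ) / (β ^ 2 - 1)) (hr : r = (⌊β⌋ : ℝ) / (β ^ 2 - 1))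
    (Rep : ℝ → (ℕ → ℝ) → Prop)
    (hRep : ∀ t s, Rep t s ↔
      ((∀ i, ∃ a : ℤ, 0 ≤ a ∧ a ≤ ⌊β⌋ ∧ s i = (a : ℝ)) ∧
        t = ∑' i : ℕ, s i / (-β) ^ (i + 1)))
    (z y : ℝ) (hz : z ∈ Set.Icc l r) (hy : y ∈ Set.Icc l r)
    (zs ys : ℕ → ℝ)
    (hzs : Rep z zs) (hzmax : ∀ w, Rep z w → w ≠ zs → AltLt w zs)
    (hys : Rep y ys) (hymin : ∀ w, Rep y w → w ≠ ys → AltLt ys w) :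
    (∀ i, ys i + zs i = (⌊β⌋ : ℝ)) ↔ y + z = -(⌊β⌋ : ℝ) / (β + 1) :=
  stmt9_general β hβ Rep hRep z y zs ys hzs hzmax hys hymin
end

section
/- Let β > 1 with β ∉ ℕ and write m = ⌊β⌋. Then 𝒜_G = ℬ if and only if β² − mβ − m > 0, i.e., if and only if β > (m + √(m² + 4m))/2; equivalently, 𝒜_G = ℬ holds precisely for β ∈ ⋃_{m∈ℕ, m≥1} ((m + √(m² + 4m))/2, m + 1). -/
/-!
Since `ℬ = {-bβ + a : b ≥ 1} ∪ 𝒜` and every `-bβ + a` with `b ≥ 1` is at most `m - β < m`,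
the two sets agree exactly when the largest digit `m` passes the threshold, i.e. when
`m < β(β - m)`, which is `β² - mβ - m > 0`. As `β` lies right of the vertex `m/2`, this says that
`β` exceeds the larger root `(m + √(m² + 4m))/2` of `x² - mx - m`, a number in `[m, m + 1)`.
-/

/-- With `m = ⌊β⌋`, `shiftedDigits β m 0` is `ℬ`, and `𝒜_G` is
`shiftedDigits β m 1 ∪ digitsBelow m (β * (β - m))`. -/
def shiftedDigits (β : ℝ) (m lo : ℤ) : Set ℝ :=
  {X | ∃ a b : ℤ, 0 ≤ a ∧ a ≤ m ∧ lo ≤ b ∧ b ≤ m ∧ X = -(b : ℝ) * β + a}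

def digitsBelow (m : ℤ) (t : ℝ) : Set ℝ :=
  {X | ∃ a : ℤ, 0 ≤ a ∧ a ≤ m ∧ (a : ℝ) < t ∧ X = a}

section Digits

variable {β t : ℝ} {m : ℤ}

theorem lt_of_mem_shiftedDigits_one (hβ : 0 < β) {X : ℝ} (hX : X ∈ shiftedDigits β m 1) :
    X < m := by
  obtain ⟨a, b, -, ham, hb, -, rfl⟩ := hX
  have ha : (a : ℝ) ≤ m := by exact_mod_cast ham
  have hb : (1 : ℝ) ≤ b := by exact_mod_cast hb
  nlinarith

theorem shiftedDigits_one_union_digitsBelow_subset :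
    shiftedDigits β m 1 ∪ digitsBelow m t ⊆ shiftedDigits β m 0 := by
  rintro X (⟨a, b, ha, ham, hb, hbm, rfl⟩ | ⟨a, ha, ham, -, rfl⟩)
  · exact ⟨a, b, ha, ham, by omega, hbm, rfl⟩
  · exact ⟨a, 0, ha, ham, le_rfl, by omega, by simp⟩

theorem shiftedDigits_one_union_digitsBelow_eq_iff (hβ : 0 < β) (hm : 0 ≤ m) :
    shiftedDigits β m 1 ∪ digitsBelow m t = shiftedDigits β m 0 ↔ (m : ℝ) < t := by
  constructor
  · intro h
    have hmem : (m : ℝ) ∈ shiftedDigits β m 1 ∪ digitsBelow m t :=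
      h ▸ ⟨m, 0, hm, le_rfl, le_rfl, hm, by simp⟩
    rcases hmem with hmem | ⟨a, -, -, hat, ha⟩
    · exact absurd (lt_of_mem_shiftedDigits_one hβ hmem) (lt_irrefl _)
    · rwa [← ha] at hat
  · intro hmt
    refine shiftedDigits_one_union_digitsBelow_subset.antisymm ?_
    rintro X ⟨a, b, ha, ham, hb, hbm, rfl⟩
    obtain rfl | hb := hb.eq_or_lt
    · have hat : (a : ℝ) < t := lt_of_le_of_lt (by exact_mod_cast ham) hmt
      exact Or.inr ⟨a, ha, ham, hat, by simp⟩
    · exact Or.inl ⟨a, b, ha, ham, hb, hbm, rfl⟩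

end Digits

theorem quadratic_root_lt_iff {p q x : ℝ} (hx : p < 2 * x) :
    (p + √(p ^ 2 + 4 * q)) / 2 < x ↔ 0 < x ^ 2 - p * x - q := by
  have hsqrt : √(p ^ 2 + 4 * q) < 2 * x - p ↔ p ^ 2 + 4 * q < (2 * x - p) ^ 2 :=
    Real.sqrt_lt' (by linarith)
  constructor
  · intro h
    nlinarith [hsqrt.1 (by linarith)]
  · intro h
    linarith [hsqrt.2 (by nlinarith)]

theorem le_quadratic_root {p q : ℝ} (hp : 0 ≤ p) (hq : 0 ≤ q) :
    p ≤ (p + √(p ^ 2 + 4 * q)) / 2 := by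
  have : p ≤ √(p ^ 2 + 4 * q) := (Real.le_sqrt hp (by positivity)).2 (by linarith)
  linarith

theorem exists_nat_lt_of_le_iff {β : ℝ} (hβ : 1 ≤ β) {r : ℝ → ℝ}
    (hr : ∀ n : ℕ, (n : ℝ) ≤ r n) :
    (∃ n : ℕ, 1 ≤ n ∧ r n < β ∧ β < n + 1) ↔ r ⌊β⌋₊ < β := by
  constructor
  · rintro ⟨n, -, hrn, hn⟩
    rwa [(Nat.floor_eq_iff (by linarith)).2 ⟨(hr n).trans hrn.le, hn⟩]
  · intro h
    exact ⟨⌊β⌋₊, Nat.le_floor (by simpa using hβ), h, Nat.lt_floor_add_one β⟩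

theorem stmt11_general (β : ℝ) (hβ : 1 < β)
    (B AG : Set ℝ)
    (hB : B = {X : ℝ | ∃ a b : ℤ, 0 ≤ a ∧ a ≤ ⌊β⌋ ∧ 0 ≤ b ∧ b ≤ ⌊β⌋ ∧ X = -(b : ℝ) * β + a})
    (hAG : AG =
      {X : ℝ | ∃ a b : ℤ, 0 ≤ a ∧ a ≤ ⌊β⌋ ∧ 1 ≤ b ∧ b ≤ ⌊β⌋ ∧ X = -(b : ℝ) * β + a} ∪
      {X : ℝ | ∃ a : ℤ, 0 ≤ a ∧ a ≤ ⌊β⌋ ∧ (a : ℝ) < β * (β - ⌊β⌋) ∧ X = (a : ℝ)}) :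
    (AG = B ↔ 0 < β ^ 2 - (⌊β⌋ : ℝ) * β - (⌊β⌋ : ℝ)) ∧
    (AG = B ↔ ((⌊β⌋ : ℝ) + Real.sqrt ((⌊β⌋ : ℝ) ^ 2 + 4 * (⌊β⌋ : ℝ))) / 2 < β) ∧
    (AG = B ↔ ∃ m : ℕ, 1 ≤ m ∧
      ((m : ℝ) + Real.sqrt ((m : ℝ) ^ 2 + 4 * (m : ℝ))) / 2 < β ∧ β < (m : ℝ) + 1) := by
  have hm : (1 : ℤ) ≤ ⌊β⌋ := Int.le_floor.2 (by exact_mod_cast hβ.le)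
  have hmR : (1 : ℝ) ≤ ⌊β⌋ := by exact_mod_cast hm
  have hmβ : (⌊β⌋ : ℝ) ≤ β := Int.floor_le β
  have hpos : AG = B ↔ 0 < β ^ 2 - (⌊β⌋ : ℝ) * β - (⌊β⌋ : ℝ) := by
    subst hB hAG
    refine (shiftedDigits_one_union_digitsBelow_eq_iff (by linarith) (by omega)).trans ?_
    constructor <;> intro h <;> linarith
  have hroot := hpos.trans (quadratic_root_lt_iff (by linarith)).symm
  refine ⟨hpos, hroot, hroot.trans ?_⟩
  rw [← natCast_floor_eq_intCast_floor (by linarith)]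
  exact (exists_nat_lt_of_le_iff (r := fun x => (x + √(x ^ 2 + 4 * x)) / 2) hβ.le
    fun n => le_quadratic_root n.cast_nonneg n.cast_nonneg).symm

theorem stmt11 (β : ℝ) (hβ : 1 < β) (hni : ∀ n : ℕ, β ≠ n)
    (B AG : Set ℝ)
    (hB : B = {X : ℝ | ∃ a b : ℤ, 0 ≤ a ∧ a ≤ ⌊β⌋ ∧ 0 ≤ b ∧ b ≤ ⌊β⌋ ∧ X = -(b : ℝ) * β + a})
    (hAG : AG =
      {X : ℝ | ∃ a b : ℤ, 0 ≤ a ∧ a ≤ ⌊β⌋ ∧ 1 ≤ b ∧ b ≤ ⌊β⌋ ∧ X = -(b : ℝ) * β + a} ∪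
      {X : ℝ | ∃ a : ℤ, 0 ≤ a ∧ a ≤ ⌊β⌋ ∧ (a : ℝ) < β * (β - ⌊β⌋) ∧ X = (a : ℝ)}) :
    (AG = B ↔ 0 < β ^ 2 - (⌊β⌋ : ℝ) * β - (⌊β⌋ : ℝ)) ∧
    (AG = B ↔ ((⌊β⌋ : ℝ) + Real.sqrt ((⌊β⌋ : ℝ) ^ 2 + 4 * (⌊β⌋ : ℝ))) / 2 < β) ∧
    (AG = B ↔ ∃ m : ℕ, 1 ≤ m ∧
      ((m : ℝ) + Real.sqrt ((m : ℝ) ^ 2 + 4 * (m : ℝ))) / 2 < β ∧ β < (m : ℝ) + 1) :=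
  stmt11_general β hβ B AG hB hAG
end

section
/- Let β > 1 with β ∉ ℕ and let X₁X₂X₃… ∈ 𝒜_G^ℕ. Then there exists x ∈ [l, l+1) with d_G(x) = X₁X₂X₃… if and only if for every k ≥ 1 the following hold: if X_k = max 𝒜_G then X_{k+1}X_{k+2}X_{k+3}… ≺_lex d_G*(T_G*(l+1)), and if X_k = −bβ + ⌊β⌋ for some b ∈ 𝒜 with X_k ≠ max 𝒜_G then X_{k+1}X_{k+2}X_{k+3}… ≺_lex d_G*(l + β − ⌊β⌋). -/
open Set Filter Topology

theorem LexLt.of_head_lt {x y : ℕ → ℝ} (h : x 0 < y 0) : LexLt x y :=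
  ⟨0, fun _ hi => absurd hi (Nat.not_lt_zero _), h⟩

theorem LexLt.of_head_eq {x y : ℕ → ℝ} (h0 : x 0 = y 0)
    (h : LexLt (fun i => x (i + 1)) (fun i => y (i + 1))) : LexLt x y := by
  obtain ⟨k, hk, hlt⟩ := h
  refine ⟨k + 1, fun i hi => ?_, hlt⟩
  cases i with
  | zero => exact h0
  | succ i => exact hk i (by omega)

/-- The tails `y j = ∑ i, X (j + i) / γ ^ (i + 1)` of a bounded sequence. -/
theorem exists_seq_eq_add_div {γ a b : ℝ} (hγ : 1 < γ) {X : ℕ → ℝ} (hX : ∀ i, X i ∈ Icc a b) :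
    ∃ y : ℕ → ℝ, (∀ j, y j = (X j + y (j + 1)) / γ) ∧
      ∀ j, y j ∈ Icc (a / (γ - 1)) (b / (γ - 1)) := by
  set q := γ⁻¹ with hq
  have hq0 : 0 < q := inv_pos.mpr (by linarith)
  have hq1 : q < 1 := inv_lt_one_of_one_lt₀ hγ
  have hgeo : HasSum (fun i : ℕ => q ^ (i + 1)) (1 / (γ - 1)) := by
    have hsum : 1 / (γ - 1) = q * (1 - q)⁻¹ := by
      have : γ - 1 ≠ 0 := by linarith
      rw [hq]; field_simp
    simpa only [pow_succ', hsum] using (hasSum_geometric_of_lt_one hq0.le hq1).mul_left q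
  have hsum : ∀ j, Summable fun i => X (j + i) * q ^ (i + 1) := fun j =>
    Summable.of_norm_bounded (hgeo.summable.mul_left (|a| + |b|)) fun i => by
      rw [norm_mul, Real.norm_of_nonneg (pow_pos hq0 _).le, Real.norm_eq_abs]
      gcongr
      have := hX (j + i)
      exact abs_le.mpr ⟨by linarith [neg_abs_le a, abs_nonneg b, this.1],
        by linarith [le_abs_self b, abs_nonneg a, this.2]⟩
  refine ⟨fun j => ∑' i, X (j + i) * q ^ (i + 1), fun j => ?_, fun j => ⟨?_, ?_⟩⟩
  · dsimp only
    rw [(hsum j).tsum_eq_zero_add]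
    simp only [add_zero, zero_add, pow_one, div_eq_mul_inv, ← hq]
    have : ∀ i, X (j + (i + 1)) * q ^ (i + 1 + 1) = X (j + 1 + i) * q ^ (i + 1) * q :=
      fun i => by rw [show j + (i + 1) = j + 1 + i by omega]; ring
    rw [tsum_congr this, tsum_mul_right]; ring
  · rw [div_eq_mul_one_div, ← (hgeo.mul_left a).tsum_eq]
    exact (hgeo.summable.mul_left a).tsum_le_tsum
      (fun i => mul_le_mul_of_nonneg_right (hX _).1 (pow_pos hq0 _).le) (hsum j)
  · rw [div_eq_mul_one_div, ← (hgeo.mul_left b).tsum_eq]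
    exact (hsum j).tsum_le_tsum (fun i => mul_le_mul_of_nonneg_right (hX _).2 (pow_pos hq0 _).le)
      (hgeo.summable.mul_left b)

def greedyMap (γ : ℝ) (D : ℝ → ℝ) (x : ℝ) : ℝ := γ * x - D x

def greedyDigits (γ : ℝ) (D : ℝ → ℝ) (x : ℝ) (k : ℕ) : ℝ := D ((greedyMap γ D)^[k] x)

theorem greedyDigits_iterate (γ : ℝ) (D : ℝ → ℝ) (x : ℝ) (n : ℕ) :
    greedyDigits γ D ((greedyMap γ D)^[n] x) = fun i => greedyDigits γ D x (n + i) := by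
  ext i
  rw [greedyDigits, greedyDigits, ← Function.iterate_add_apply, add_comm]

def IsDigitOnIco (γ l : ℝ) (A : Set ℝ) (r D : ℝ → ℝ) : Prop :=
  ∀ Z ∈ A, ∀ x ∈ Ico ((Z + l) / γ) (r Z), D x = Z

def IsDigitOnIoc (γ l : ℝ) (A : Set ℝ) (r D : ℝ → ℝ) : Prop :=
  ∀ Z ∈ A, ∀ x ∈ Ioc ((Z + l) / γ) (r Z), D x = Z

/-- The branches `[(Z + l) / γ, r Z)`, `Z ∈ A`, tile `[l, l + 1)` in the order of `A`, and the
affine map `x ↦ γ x - Z` sends the branch of `Z` into `[l, l + 1)`. -/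
structure IsGreedyPartition (γ l M : ℝ) (A : Set ℝ) (r : ℝ → ℝ) : Prop where
  one_lt : 1 < γ
  finite : A.Finite
  isGreatest : IsGreatest A M
  isLeast : IsLeast A ((γ - 1) * l)
  right_top : r M = l + 1
  exists_succ : ∀ Z ∈ A, Z ≠ M →
    ∃ W ∈ A, Z < W ∧ (∀ Y ∈ A, Z < Y → W ≤ Y) ∧ r Z = (W + l) / γ
  image_mem : ∀ Z ∈ A, γ * r Z - Z ∈ Ioc l (l + 1)

namespace IsGreedyPartition

variable {γ l M : ℝ} {A : Set ℝ} {r : ℝ → ℝ} {D Ds : ℝ → ℝ}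

theorem pos (h : IsGreedyPartition γ l M A r) : 0 < γ := by linarith [h.one_lt]

theorem left_lt_right (h : IsGreedyPartition γ l M A r) {Z : ℝ} (hZ : Z ∈ A) :
    (Z + l) / γ < r Z := by
  rw [div_lt_iff₀ h.pos]; linarith [(h.image_mem Z hZ).1]

theorem right_le (h : IsGreedyPartition γ l M A r) {Z : ℝ} (hZ : Z ∈ A) : r Z ≤ l + 1 := by
  by_cases hZM : Z = M
  · rw [hZM, h.right_top]
  obtain ⟨W, hW, -, -, hrZ⟩ := h.exists_succ Z hZ hZM
  calc r Z = (W + l) / γ := hrZ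
    _ ≤ (M + l) / γ := by gcongr; exacts [h.pos.le, h.isGreatest.2 hW]
    _ ≤ l + 1 := h.right_top ▸ (h.left_lt_right h.isGreatest.1).le

theorem exists_last (h : IsGreedyPartition γ l M A r) (P : ℝ → Prop) (hP : P ((γ - 1) * l)) :
    ∃ Z ∈ A, P Z ∧ (Z = M ∨ ∃ W ∈ A, ¬ P W ∧ r Z = (W + l) / γ) := by
  have hfin : {Z | Z ∈ A ∧ P Z}.Finite := h.finite.subset fun _ hZ => hZ.1
  obtain ⟨Z, ⟨hZA, hPZ⟩, hmax⟩ := hfin.exists_maximal ⟨_, h.isLeast.1, hP⟩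
  refine ⟨Z, hZA, hPZ, or_iff_not_imp_left.mpr fun hZM => ?_⟩
  obtain ⟨W, hW, hZW, -, hrZ⟩ := h.exists_succ Z hZA hZM
  exact ⟨W, hW, fun hPW => hZW.not_ge (hmax ⟨hW, hPW⟩ hZW.le), hrZ⟩

theorem exists_mem_Ico (h : IsGreedyPartition γ l M A r) {x : ℝ} (hx : x ∈ Ico l (l + 1)) :
    ∃ Z ∈ A, x ∈ Ico ((Z + l) / γ) (r Z) := by
  have hmin : ((γ - 1) * l + l) / γ = l := by field_simp [h.pos.ne']; ring
  obtain ⟨Z, hZ, hPZ, hZM | ⟨W, -, hPW, hrZ⟩⟩ :=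
    h.exists_last (fun Z => (Z + l) / γ ≤ x) (by rw [hmin]; exact hx.1)
  · exact ⟨Z, hZ, hPZ, hZM ▸ h.right_top ▸ hx.2⟩
  · exact ⟨Z, hZ, hPZ, hrZ ▸ not_le.mp hPW⟩

theorem exists_mem_Ioc (h : IsGreedyPartition γ l M A r) {x : ℝ} (hx : x ∈ Ioc l (l + 1)) :
    ∃ Z ∈ A, x ∈ Ioc ((Z + l) / γ) (r Z) := by
  have hmin : ((γ - 1) * l + l) / γ = l := by field_simp [h.pos.ne']; ring
  obtain ⟨Z, hZ, hPZ, hZM | ⟨W, -, hPW, hrZ⟩⟩ :=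
    h.exists_last (fun Z => (Z + l) / γ < x) (by rw [hmin]; exact hx.1)
  · exact ⟨Z, hZ, hPZ, hZM ▸ h.right_top ▸ hx.2⟩
  · exact ⟨Z, hZ, hPZ, hrZ ▸ not_lt.mp hPW⟩

theorem digit_mem_Ico (h : IsGreedyPartition γ l M A r)
    (hD : IsDigitOnIco γ l A r D) {x : ℝ} (hx : x ∈ Ico l (l + 1)) :
    D x ∈ A ∧ x ∈ Ico ((D x + l) / γ) (r (D x)) := by
  obtain ⟨Z, hZ, hxZ⟩ := h.exists_mem_Ico hx
  rw [hD Z hZ x hxZ]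
  exact ⟨hZ, hxZ⟩

theorem digit_mem_Ioc (h : IsGreedyPartition γ l M A r)
    (hDs : IsDigitOnIoc γ l A r Ds) {x : ℝ} (hx : x ∈ Ioc l (l + 1)) :
    Ds x ∈ A ∧ x ∈ Ioc ((Ds x + l) / γ) (r (Ds x)) := by
  obtain ⟨Z, hZ, hxZ⟩ := h.exists_mem_Ioc hx
  rw [hDs Z hZ x hxZ]
  exact ⟨hZ, hxZ⟩

theorem greedyMap_mem_Ico (h : IsGreedyPartition γ l M A r)
    (hD : IsDigitOnIco γ l A r D) {x : ℝ} (hx : x ∈ Ico l (l + 1)) :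
    greedyMap γ D x ∈ Ico l (γ * r (D x) - D x) := by
  obtain ⟨-, hx1, hx2⟩ := h.digit_mem_Ico hD hx
  rw [div_le_iff₀ h.pos] at hx1
  rw [greedyMap]
  exact ⟨by linarith, by linarith [mul_lt_mul_of_pos_left hx2 h.pos]⟩

theorem greedyMap_mem_Ioc (h : IsGreedyPartition γ l M A r)
    (hDs : IsDigitOnIoc γ l A r Ds) {x : ℝ} (hx : x ∈ Ioc l (l + 1)) :
    greedyMap γ Ds x ∈ Ioc l (γ * r (Ds x) - Ds x) := by
  obtain ⟨-, hx1, hx2⟩ := h.digit_mem_Ioc hDs hx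
  rw [div_lt_iff₀ h.pos] at hx1
  rw [greedyMap]
  exact ⟨by linarith, by linarith [mul_le_mul_of_nonneg_left hx2 h.pos.le]⟩

theorem mapsTo_greedyMap_Ico (h : IsGreedyPartition γ l M A r)
    (hD : IsDigitOnIco γ l A r D) :
    MapsTo (greedyMap γ D) (Ico l (l + 1)) (Ico l (l + 1)) := fun _ hx =>
  have hT := h.greedyMap_mem_Ico hD hx
  ⟨hT.1, hT.2.trans_le (h.image_mem _ (h.digit_mem_Ico hD hx).1).2⟩

theorem mapsTo_greedyMap_Ioc (h : IsGreedyPartition γ l M A r)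
    (hDs : IsDigitOnIoc γ l A r Ds) :
    MapsTo (greedyMap γ Ds) (Ioc l (l + 1)) (Ioc l (l + 1)) := fun _ hx =>
  have hT := h.greedyMap_mem_Ioc hDs hx
  ⟨hT.1, hT.2.trans (h.image_mem _ (h.digit_mem_Ioc hDs hx).1).2⟩

theorem digit_le_of_lt (h : IsGreedyPartition γ l M A r)
    (hD : IsDigitOnIco γ l A r D) (hDs : IsDigitOnIoc γ l A r Ds)
    {y z : ℝ} (hy : y ∈ Ico l (l + 1)) (hz : z ∈ Ioc l (l + 1)) (hyz : y < z) : D y ≤ Ds z := by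
  obtain ⟨hDy, hy1, -⟩ := h.digit_mem_Ico hD hy
  obtain ⟨hDz, -, hz2⟩ := h.digit_mem_Ioc hDs hz
  by_contra! hlt
  obtain ⟨W, -, -, hWmin, hrz⟩ :=
    h.exists_succ _ hDz (hlt.trans_le (h.isGreatest.2 hDy)).ne
  have : r (Ds z) ≤ (D y + l) / γ := by
    rw [hrz]; gcongr; exacts [h.pos.le, hWmin _ hDy hlt]
  linarith

theorem lexLt_greedyDigits_of_lt (h : IsGreedyPartition γ l M A r)
    (hD : IsDigitOnIco γ l A r D) (hDs : IsDigitOnIoc γ l A r Ds)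
    {y z : ℝ} (hy : y ∈ Ico l (l + 1)) (hz : z ∈ Ioc l (l + 1)) (hyz : y < z) :
    LexLt (greedyDigits γ D y) (greedyDigits γ Ds z) := by
  -- each equal digit multiplies the gap `z - y` by `γ`, and the gap stays below `1`
  obtain ⟨n, hn⟩ := pow_unbounded_of_one_lt (z - y)⁻¹ h.one_lt
  rw [inv_lt_iff_one_lt_mul₀ (sub_pos.mpr hyz)] at hn
  induction n generalizing y z with
  | zero => linarith [hy.1, hz.2]
  | succ n ih =>
    rcases (h.digit_le_of_lt hD hDs hy hz hyz).lt_or_eq with hlt | heq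
    · exact .of_head_lt hlt
    have hgap : greedyMap γ Ds z - greedyMap γ D y = γ * (z - y) := by
      rw [greedyMap, greedyMap, heq]; ring
    refine .of_head_eq heq (ih (h.mapsTo_greedyMap_Ico hD hy) (h.mapsTo_greedyMap_Ioc hDs hz)
      (sub_pos.mp (hgap ▸ mul_pos h.pos (sub_pos.mpr hyz))) ?_)
    rwa [hgap, ← mul_assoc, ← pow_succ]

theorem lexLt_tail_greedyDigits (h : IsGreedyPartition γ l M A r)
    (hD : IsDigitOnIco γ l A r D) (hDs : IsDigitOnIoc γ l A r Ds) {x : ℝ} (hx : x ∈ Ico l (l + 1))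
    (k : ℕ) :
    LexLt (fun i => greedyDigits γ D x (k + 1 + i))
      (greedyDigits γ Ds (γ * r (greedyDigits γ D x k) - greedyDigits γ D x k)) := by
  have hxk := (h.mapsTo_greedyMap_Ico hD).iterate k hx
  rw [← greedyDigits_iterate, Function.iterate_succ_apply']
  exact h.lexLt_greedyDigits_of_lt hD hDs (h.mapsTo_greedyMap_Ico hD hxk)
    (h.image_mem _ (h.digit_mem_Ico hD hxk).1) (h.greedyMap_mem_Ico hD hxk).2

theorem lt_add_div_of_lexLt (h : IsGreedyPartition γ l M A r)
    (hDs : IsDigitOnIoc γ l A r Ds) {X y : ℕ → ℝ} (hX : ∀ i, X i ∈ A)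
    (hy : ∀ i, y i = (X i + y (i + 1)) / γ) {c : ℝ} (hc : 0 ≤ c)
    (hyc : ∀ i, y (i + 1) ≤ γ * r (X i) - X i + c) {t : ℝ} (ht : t ∈ Ioc l (l + 1)) {n : ℕ}
    (hlex : LexLt (fun i => X (n + i)) (greedyDigits γ Ds t)) : y n < t + c / γ := by
  obtain ⟨m, heq, hlt⟩ := hlex
  set T := greedyMap γ Ds
  -- `y` and the orbit of `t` share their first `m` digits, so their distance is scaled by `γ ^ m`
  have hscale : ∀ i ≤ m, y n - t = (y (n + i) - T^[i] t) / γ ^ i := by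
    intro i
    induction i with
    | zero => simp
    | succ i ih =>
      intro hi
      have hTi : T^[i + 1] t = γ * T^[i] t - X (n + i) := by
        rw [Function.iterate_succ_apply', show X (n + i) = _ from heq i (by omega)]; rfl
      rw [ih (by omega), hy (n + i), hTi, ← add_assoc]
      field_simp [h.pos.ne']
      ring
  have htm : T^[m] t ∈ Ioc l (l + 1) := (h.mapsTo_greedyMap_Ioc hDs).iterate m ht
  obtain ⟨hDA, hDt, -⟩ := h.digit_mem_Ioc hDs htm
  obtain ⟨W, -, -, hWmin, hrW⟩ :=
    h.exists_succ (X (n + m)) (hX _) (hlt.trans_le (h.isGreatest.2 hDA)).ne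
  have hr : r (X (n + m)) < T^[m] t := by
    refine lt_of_le_of_lt ?_ hDt
    rw [hrW]; gcongr; exacts [h.pos.le, hWmin _ hDA hlt]
  have hym : y (n + m) ≤ r (X (n + m)) + c / γ := by
    rw [hy, div_le_iff₀ h.pos, add_mul, div_mul_cancel₀ _ h.pos.ne']
    linarith [hyc (n + m)]
  have hd : y (n + m) - T^[m] t < c / γ := by linarith
  have hγm : 1 ≤ γ ^ m := one_le_pow₀ h.one_lt.le
  rw [← sub_lt_iff_lt_add', hscale m le_rfl]
  rcases lt_or_ge (y (n + m) - T^[m] t) 0 with hneg | hnonneg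
  · exact (div_neg_of_neg_of_pos hneg (by positivity)).trans_le (div_nonneg hc h.pos.le)
  · exact (div_le_self hnonneg hγm).trans_lt hd

theorem lt_image_of_lexLt (h : IsGreedyPartition γ l M A r)
    (hDs : IsDigitOnIoc γ l A r Ds) {X y : ℕ → ℝ} (hX : ∀ i, X i ∈ A)
    (hy : ∀ i, y i = (X i + y (i + 1)) / γ) (hyM : ∀ i, y i ≤ M / (γ - 1))
    (hlex : ∀ j, LexLt (fun i => X (j + 1 + i)) (greedyDigits γ Ds (γ * r (X j) - X j)))
    (j : ℕ) : y (j + 1) < γ * r (X j) - X j := by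
  have hγ1 : 0 < γ - 1 := sub_pos.mpr h.one_lt
  set C := M / (γ - 1) - l
  have hC : 0 ≤ C := by
    rw [sub_nonneg, le_div_iff₀ hγ1, mul_comm]
    exact h.isGreatest.2 h.isLeast.1
  have hbound : ∀ n j, y (j + 1) ≤ γ * r (X j) - X j + C * γ⁻¹ ^ n := by
    intro n
    induction n with
    | zero =>
      intro j
      linarith [hyM (j + 1), (h.image_mem _ (hX j)).1]
    | succ n ih =>
      intro j
      have hc : 0 ≤ C * γ⁻¹ ^ n := mul_nonneg hC (pow_nonneg (inv_nonneg.mpr h.pos.le) n)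
      have := h.lt_add_div_of_lexLt hDs hX hy hc ih (h.image_mem _ (hX j)) (hlex j)
      rw [pow_succ, ← mul_assoc, ← div_eq_mul_inv]
      exact this.le
  have hle : ∀ j, y (j + 1) ≤ γ * r (X j) - X j + 0 := fun j => by
    refine ge_of_tendsto' (x := atTop) ?_ (hbound · j)
    exact tendsto_const_nhds.add <| by simpa using (tendsto_pow_atTop_nhds_zero_of_lt_one
      (inv_nonneg.mpr h.pos.le) (inv_lt_one_of_one_lt₀ h.one_lt)).const_mul C
  simpa using h.lt_add_div_of_lexLt hDs hX hy le_rfl hle (h.image_mem _ (hX j)) (hlex j)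

theorem exists_greedyDigits_eq_of_lexLt (h : IsGreedyPartition γ l M A r)
    (hD : IsDigitOnIco γ l A r D) (hDs : IsDigitOnIoc γ l A r Ds) {X : ℕ → ℝ} (hX : ∀ i, X i ∈ A)
    (hlex : ∀ j, LexLt (fun i => X (j + 1 + i)) (greedyDigits γ Ds (γ * r (X j) - X j))) :
    ∃ x ∈ Ico l (l + 1), greedyDigits γ D x = X := by
  obtain ⟨y, hy, hyb⟩ := exists_seq_eq_add_div h.one_lt
    fun i => ⟨h.isLeast.2 (hX i), h.isGreatest.2 (hX i)⟩
  have hyl : ∀ j, l ≤ y j := fun j => by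
    simpa [mul_div_cancel_left₀ _ (sub_pos.mpr h.one_lt).ne'] using (hyb j).1
  have hmem : ∀ j, y j ∈ Ico ((X j + l) / γ) (r (X j)) := fun j => by
    rw [hy j]
    refine ⟨by gcongr; exacts [h.pos.le, hyl _], ?_⟩
    rw [div_lt_iff₀ h.pos]
    linarith [h.lt_image_of_lexLt hDs hX hy (fun i => (hyb i).2) hlex j]
  have hT : ∀ j, greedyMap γ D (y j) = y (j + 1) := fun j => by
    rw [greedyMap, hD _ (hX j) _ (hmem j), hy j, mul_div_cancel₀ _ h.pos.ne']
    ring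
  have horbit : ∀ k, (greedyMap γ D)^[k] (y 0) = y k := fun k => by
    induction k with
    | zero => rfl
    | succ k ih => rw [Function.iterate_succ_apply', ih, hT]
  refine ⟨y 0, ⟨hyl 0, (hmem 0).2.trans_le (h.right_le (hX 0))⟩, funext fun k => ?_⟩
  rw [greedyDigits, horbit, hD _ (hX k) _ (hmem k)]

theorem exists_greedyDigits_eq_iff (h : IsGreedyPartition γ l M A r)
    (hD : IsDigitOnIco γ l A r D) (hDs : IsDigitOnIoc γ l A r Ds) {X : ℕ → ℝ} (hX : ∀ i, X i ∈ A) :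
    (∃ x ∈ Ico l (l + 1), greedyDigits γ D x = X) ↔
      ∀ j, LexLt (fun i => X (j + 1 + i)) (greedyDigits γ Ds (γ * r (X j) - X j)) := by
  refine ⟨?_, h.exists_greedyDigits_eq_of_lexLt hD hDs hX⟩
  rintro ⟨x, hx, rfl⟩
  exact h.lexLt_tail_greedyDigits hD hDs hx

theorem digit_add_one (h : IsGreedyPartition γ l M A r)
    (hDs : IsDigitOnIoc γ l A r Ds) : Ds (l + 1) = M :=
  hDs M h.isGreatest.1 _ ⟨h.right_top ▸ h.left_lt_right h.isGreatest.1, h.right_top.ge⟩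

theorem greedyMap_add_one (h : IsGreedyPartition γ l M A r)
    (hDs : IsDigitOnIoc γ l A r Ds) :
    greedyMap γ Ds (l + 1) = γ * r M - M := by
  rw [greedyMap, h.digit_add_one hDs, h.right_top]

theorem lexLt_greedyDigits_add_one (h : IsGreedyPartition γ l M A r)
    (hDs : IsDigitOnIoc γ l A r Ds) {Y : ℕ → ℝ} (hY : Y 0 ∈ A)
    (hM : Y 0 = M → LexLt (fun i => Y (i + 1)) (greedyDigits γ Ds (greedyMap γ Ds (l + 1)))) :
    LexLt Y (greedyDigits γ Ds (l + 1)) := by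
  have h0 : greedyDigits γ Ds (l + 1) 0 = M := h.digit_add_one hDs
  rcases (h.isGreatest.2 hY).lt_or_eq with hlt | heq
  · exact .of_head_lt (h0 ▸ hlt)
  · exact .of_head_eq (heq.trans h0.symm) (hM heq)

end IsGreedyPartition

theorem Int.cast_floor_lt_of_forall_ne_natCast {β : ℝ} (hβ : 0 ≤ β) (hni : ∀ n : ℕ, β ≠ n) :
    (⌊β⌋ : ℝ) < β := by
  refine (Int.floor_le β).lt_of_ne fun h => hni ⌊β⌋.toNat ?_
  rw [← Int.cast_natCast, Int.toNat_of_nonneg (Int.floor_nonneg.mpr hβ), h]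

def pairDigits (β : ℝ) : Set ℝ :=
  {X : ℝ | ∃ a b : ℤ, 0 ≤ a ∧ a ≤ ⌊β⌋ ∧ 0 ≤ b ∧ b ≤ ⌊β⌋ ∧ X = -(b : ℝ) * β + a}

def greedyAlphabet (β : ℝ) : Set ℝ :=
  {X : ℝ | ∃ a b : ℤ, 0 ≤ a ∧ a ≤ ⌊β⌋ ∧ 1 ≤ b ∧ b ≤ ⌊β⌋ ∧ X = -(b : ℝ) * β + a} ∪
    {X : ℝ | ∃ a : ℤ, 0 ≤ a ∧ a ≤ ⌊β⌋ ∧ (a : ℝ) < β * (β - ⌊β⌋) ∧ X = (a : ℝ)}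

noncomputable def leftEnd (β : ℝ) : ℝ := -β * (⌊β⌋ : ℝ) / (β ^ 2 - 1)

noncomputable def maxDigit (β : ℝ) : ℤ := ⌈β * (β - ⌊β⌋)⌉ - 1

def IsBlockTop (β Z : ℝ) : Prop := ∃ b : ℤ, 0 ≤ b ∧ b ≤ ⌊β⌋ ∧ Z = -(b : ℝ) * β + (⌊β⌋ : ℝ)

open Classical in
noncomputable def succDigit (β Z : ℝ) : ℝ := Z + if IsBlockTop β Z then β - ⌊β⌋ else 1

section GreedyAlphabet

variable {β : ℝ}

theorem sq_sub_one_mul_leftEnd (hβ : 1 < β) : (β ^ 2 - 1) * leftEnd β = -(⌊β⌋ * β) := by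
  have : β ^ 2 - 1 ≠ 0 := by nlinarith
  rw [leftEnd]; field_simp

theorem maxDigit_lt : (maxDigit β : ℝ) < β * (β - ⌊β⌋) := by
  rw [maxDigit]; push_cast; linarith [Int.ceil_lt_add_one (β * (β - ⌊β⌋))]

theorem le_maxDigit_add_one : β * (β - ⌊β⌋) ≤ maxDigit β + 1 := by
  rw [maxDigit]; push_cast; linarith [Int.le_ceil (β * (β - ⌊β⌋))]

theorem le_maxDigit_of_lt {a : ℤ} (ha : (a : ℝ) < β * (β - ⌊β⌋)) : a ≤ maxDigit β := by
  rw [maxDigit]; have := Int.lt_ceil.mpr ha; omega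

theorem maxDigit_lt_self (hβ : 1 < β) : (maxDigit β : ℝ) < β :=
  maxDigit_lt.trans (by nlinarith [Int.lt_floor_add_one β])

theorem maxDigit_le_floor (hβ : 1 < β) : maxDigit β ≤ ⌊β⌋ :=
  Int.le_floor.mpr (maxDigit_lt_self hβ).le

theorem maxDigit_nonneg (hβ : 1 < β) (hfl : (⌊β⌋ : ℝ) < β) : 0 ≤ maxDigit β :=
  le_maxDigit_of_lt (by push_cast; nlinarith)

theorem isGreatest_greedyAlphabet (hβ : 1 < β) (hfl : (⌊β⌋ : ℝ) < β) :
    IsGreatest (greedyAlphabet β) (maxDigit β) := by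
  refine ⟨.inr ⟨_, maxDigit_nonneg hβ hfl, maxDigit_le_floor hβ, maxDigit_lt, rfl⟩, ?_⟩
  rintro Z (⟨a, b, -, ha, hb, -, rfl⟩ | ⟨a, -, -, hav, rfl⟩)
  · have : (1 : ℝ) ≤ b := by exact_mod_cast hb
    have : (a : ℝ) ≤ ⌊β⌋ := by exact_mod_cast ha
    have : (0 : ℝ) ≤ maxDigit β := by exact_mod_cast maxDigit_nonneg hβ hfl
    nlinarith [Int.floor_le β]
  · exact_mod_cast le_maxDigit_of_lt hav

theorem isLeast_greedyAlphabet (hβ : 1 < β) :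
    IsLeast (greedyAlphabet β) ((β ^ 2 - 1) * leftEnd β) := by
  have hF : 1 ≤ ⌊β⌋ := Int.le_floor.mpr (by exact_mod_cast hβ.le)
  rw [sq_sub_one_mul_leftEnd hβ]
  refine ⟨.inl ⟨0, ⌊β⌋, le_rfl, by omega, hF, le_rfl, by push_cast; ring⟩, ?_⟩
  rintro Z (⟨a, b, ha, -, -, hb, rfl⟩ | ⟨a, ha, -, -, rfl⟩)
  · have : (b : ℝ) ≤ ⌊β⌋ := by exact_mod_cast hb
    have : (0 : ℝ) ≤ a := by exact_mod_cast ha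
    nlinarith
  · have : (0 : ℝ) ≤ a := by exact_mod_cast ha
    have : (0 : ℝ) ≤ ⌊β⌋ := by exact_mod_cast (by omega : (0 : ℤ) ≤ ⌊β⌋)
    nlinarith

theorem greedyAlphabet_finite : (greedyAlphabet β).Finite := by
  refine (((finite_Icc 0 ⌊β⌋).prod (finite_Icc 0 ⌊β⌋)).image
    fun p : ℤ × ℤ => -(p.1 : ℝ) * β + p.2).subset ?_
  rintro Z (⟨a, b, ha, ha', hb, hb', rfl⟩ | ⟨a, ha, ha', -, rfl⟩)
  · exact ⟨(b, a), ⟨⟨by omega, hb'⟩, ha, ha'⟩, rfl⟩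
  · exact ⟨(0, a), ⟨⟨le_rfl, by omega⟩, ha, ha'⟩, by simp⟩

/-- Above `-b β + a`, the next elements of `pairDigits β` lower `b` (a gain of at least `β - a`)
or raise `a` (a gain of at least `1`). -/
theorem min_le_sub_of_lt (hβ : 1 < β) {Y : ℝ} (hY : Y ∈ pairDigits β) {a b : ℤ} (ha : 0 ≤ a)
    (hlt : -(b : ℝ) * β + a < Y) : min 1 (β - a) ≤ Y - (-(b : ℝ) * β + a) := by
  obtain ⟨a', b', ha', ha'F, -, -, rfl⟩ := hY
  have hdiff : -(b' : ℝ) * β + a' - (-(b : ℝ) * β + a) =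
      ((b - b' : ℤ) : ℝ) * β + ((a' - a : ℤ) : ℝ) := by
    push_cast; ring
  rw [← sub_pos, hdiff] at hlt
  rw [hdiff]
  rcases lt_trichotomy (b - b') 0 with hk | hk | hk
  · have : ((b - b' : ℤ) : ℝ) ≤ -1 := by exact_mod_cast (by omega : b - b' ≤ -1)
    have : ((a' - a : ℤ) : ℝ) ≤ ⌊β⌋ := by exact_mod_cast (by omega : a' - a ≤ ⌊β⌋)
    nlinarith [Int.floor_le β]
  · rw [hk, Int.cast_zero, zero_mul, zero_add] at hlt ⊢
    have : (1 : ℝ) ≤ ((a' - a : ℤ) : ℝ) := by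
      exact_mod_cast (by exact_mod_cast hlt : (0 : ℤ) < a' - a)
    exact (min_le_left _ _).trans this
  · have : (1 : ℝ) ≤ ((b - b' : ℤ) : ℝ) := by exact_mod_cast hk
    have : -(a : ℝ) ≤ ((a' - a : ℤ) : ℝ) := by push_cast; exact_mod_cast (by omega : -a ≤ a' - a)
    refine (min_le_right _ _).trans ?_
    nlinarith

theorem isLeast_add_one (hβ : 1 < β) {a b : ℤ} (ha : 0 ≤ a) (haF : a < ⌊β⌋) (hb : 0 ≤ b)
    (hbF : b ≤ ⌊β⌋) :
    IsLeast {Y | Y ∈ pairDigits β ∧ -(b : ℝ) * β + a < Y} (-(b : ℝ) * β + a + 1) := by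
  refine ⟨⟨⟨a + 1, b, by omega, haF, hb, hbF, by push_cast; ring⟩, by linarith⟩, fun Y hY => ?_⟩
  have := min_le_sub_of_lt hβ hY.1 ha hY.2
  have : (a : ℝ) + 1 ≤ ⌊β⌋ := by exact_mod_cast haF
  rw [min_eq_left (by linarith [Int.floor_le β])] at *
  linarith

theorem isLeast_add_sub_floor (hβ : 1 < β) (hfl : (⌊β⌋ : ℝ) < β) {b : ℤ} (hb : 1 ≤ b)
    (hbF : b ≤ ⌊β⌋) :
    IsLeast {Y | Y ∈ pairDigits β ∧ -(b : ℝ) * β + ⌊β⌋ < Y} (-(b : ℝ) * β + ⌊β⌋ + (β - ⌊β⌋)) := by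
  refine ⟨⟨⟨0, b - 1, le_rfl, by omega, by omega, by omega, by push_cast; ring⟩, by linarith⟩,
    fun Y hY => ?_⟩
  have := min_le_sub_of_lt hβ hY.1 (Int.floor_nonneg.mpr (by linarith)) hY.2
  rw [min_eq_right (by linarith [Int.lt_floor_add_one β])] at this
  linarith

theorem not_isBlockTop (hβ : 1 < β) (hfl : (⌊β⌋ : ℝ) < β) {a b : ℤ} (ha : 0 ≤ a) (haF : a < ⌊β⌋) :
    ¬ IsBlockTop β (-(b : ℝ) * β + a) := by
  rintro ⟨b', -, -, h⟩
  have hk : ((b' - b : ℤ) : ℝ) * β = ((⌊β⌋ - a : ℤ) : ℝ) := by push_cast; linarith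
  have h1 : (1 : ℝ) ≤ ((⌊β⌋ - a : ℤ) : ℝ) := by exact_mod_cast (by omega : 1 ≤ ⌊β⌋ - a)
  have h2 : ((⌊β⌋ - a : ℤ) : ℝ) ≤ ⌊β⌋ := by exact_mod_cast (by omega : ⌊β⌋ - a ≤ ⌊β⌋)
  rcases le_or_gt (b' - b) 0 with hk0 | hk1
  · have : ((b' - b : ℤ) : ℝ) ≤ 0 := by exact_mod_cast hk0
    nlinarith
  · have : (1 : ℝ) ≤ ((b' - b : ℤ) : ℝ) := by exact_mod_cast hk1
    nlinarith

theorem succDigit_of_isBlockTop {Z : ℝ} (h : IsBlockTop β Z) : succDigit β Z = Z + (β - ⌊β⌋) := by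
  rw [succDigit, if_pos h]

theorem succDigit_of_not_isBlockTop {Z : ℝ} (h : ¬ IsBlockTop β Z) : succDigit β Z = Z + 1 := by
  rw [succDigit, if_neg h]

theorem succDigit_sub_mem (hfl : (⌊β⌋ : ℝ) < β) (Z : ℝ) : succDigit β Z - Z ∈ Ioc 0 1 := by
  rw [succDigit, add_sub_cancel_left]
  split_ifs
  · exact ⟨sub_pos.mpr hfl, by linarith [Int.lt_floor_add_one β]⟩
  · exact ⟨one_pos, le_rfl⟩

theorem greedyAlphabet_subset_pairDigits : greedyAlphabet β ⊆ pairDigits β := by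
  rintro Z (⟨a, b, ha, haF, hb, hbF, rfl⟩ | ⟨a, ha, haF, -, rfl⟩)
  · exact ⟨a, b, ha, haF, by omega, hbF, rfl⟩
  · exact ⟨a, 0, ha, haF, le_rfl, by omega, by simp⟩

theorem succDigit_mem_and_isLeast (hβ : 1 < β) (hfl : (⌊β⌋ : ℝ) < β) {Z : ℝ}
    (hZ : Z ∈ greedyAlphabet β) (hZM : Z ≠ maxDigit β) :
    succDigit β Z ∈ greedyAlphabet β ∧ IsLeast {Y | Y ∈ pairDigits β ∧ Z < Y} (succDigit β Z) := by
  rcases hZ with ⟨a, b, ha, haF, hb, hbF, rfl⟩ | ⟨a, ha, haF, hav, rfl⟩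
  · rcases haF.lt_or_eq with haF | rfl
    · rw [succDigit_of_not_isBlockTop (not_isBlockTop hβ hfl ha haF)]
      exact ⟨.inl ⟨a + 1, b, by omega, haF, hb, hbF, by push_cast; ring⟩,
        isLeast_add_one hβ ha haF (by omega) hbF⟩
    · rw [succDigit_of_isBlockTop ⟨b, by omega, hbF, rfl⟩]
      refine ⟨?_, isLeast_add_sub_floor hβ hfl hb hbF⟩
      rcases hb.eq_or_lt with rfl | hb
      · exact .inr ⟨0, le_rfl, by omega, by push_cast; nlinarith, by push_cast; ring⟩
      · exact .inl ⟨0, b - 1, le_rfl, by omega, by omega, by omega, by push_cast; ring⟩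
  · have haM : a < maxDigit β := (le_maxDigit_of_lt hav).lt_of_ne fun h => hZM (by rw [h])
    have h0 : (a : ℝ) = -((0 : ℤ) : ℝ) * β + a := by simp
    rw [h0, succDigit_of_not_isBlockTop
      (not_isBlockTop hβ hfl ha (haM.trans_le (maxDigit_le_floor hβ)))]
    refine ⟨.inr ⟨a + 1, by omega, haM.trans_le (maxDigit_le_floor hβ), ?_, by push_cast; ring⟩,
      isLeast_add_one hβ ha (haM.trans_le (maxDigit_le_floor hβ)) le_rfl (by omega)⟩
    have : ((a + 1 : ℤ) : ℝ) ≤ maxDigit β := by exact_mod_cast haM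
    exact this.trans_lt maxDigit_lt

theorem rX_eq_succDigit (hβ : 1 < β) (hfl : (⌊β⌋ : ℝ) < β) {rX : ℝ → ℝ}
    (hrX : ∀ X ∈ greedyAlphabet β, rX X = if X = sSup (greedyAlphabet β) then leftEnd β + 1
      else (sInf {Y : ℝ | Y ∈ pairDigits β ∧ X < Y} + leftEnd β) / β ^ 2)
    {Z : ℝ} (hZ : Z ∈ greedyAlphabet β) (hZM : Z ≠ maxDigit β) :
    rX Z = (succDigit β Z + leftEnd β) / β ^ 2 := by
  rw [hrX Z hZ, if_neg ((isGreatest_greedyAlphabet hβ hfl).csSup_eq ▸ hZM),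
    (succDigit_mem_and_isLeast hβ hfl hZ hZM).2.csInf_eq]

theorem isGreedyPartition_greedyAlphabet (hβ : 1 < β) (hfl : (⌊β⌋ : ℝ) < β) {rX : ℝ → ℝ}
    (hrX : ∀ X ∈ greedyAlphabet β, rX X = if X = sSup (greedyAlphabet β) then leftEnd β + 1
      else (sInf {Y : ℝ | Y ∈ pairDigits β ∧ X < Y} + leftEnd β) / β ^ 2) :
    IsGreedyPartition (β ^ 2) (leftEnd β) (maxDigit β) (greedyAlphabet β) rX where
  one_lt := by nlinarith
  finite := greedyAlphabet_finite
  isGreatest := isGreatest_greedyAlphabet hβ hfl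
  isLeast := isLeast_greedyAlphabet hβ
  right_top := by
    rw [hrX _ (isGreatest_greedyAlphabet hβ hfl).1,
      if_pos (isGreatest_greedyAlphabet hβ hfl).csSup_eq.symm]
  exists_succ Z hZ hZM := by
    obtain ⟨hW, hleast⟩ := succDigit_mem_and_isLeast hβ hfl hZ hZM
    exact ⟨_, hW, hleast.1.2, fun Y hY hZY => hleast.2 ⟨greedyAlphabet_subset_pairDigits hY, hZY⟩,
      rX_eq_succDigit hβ hfl hrX hZ hZM⟩
  image_mem Z hZ := by
    by_cases hZM : Z = maxDigit β
    · have hl := sq_sub_one_mul_leftEnd hβ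
      rw [hZM, hrX _ (isGreatest_greedyAlphabet hβ hfl).1,
        if_pos (isGreatest_greedyAlphabet hβ hfl).csSup_eq.symm]
      constructor <;> nlinarith [maxDigit_lt (β := β), le_maxDigit_add_one (β := β)]
    · have hsub := succDigit_sub_mem hfl Z
      rw [rX_eq_succDigit hβ hfl hrX hZ hZM, mul_div_cancel₀ _ (by positivity)]
      constructor <;> linarith [hsub.1, hsub.2]

end GreedyAlphabet

theorem stmt12_general (β : ℝ) (hβ : 1 < β) (hni : ∀ n : ℕ, β ≠ n)
    (l : ℝ) (hl : l = -β * (⌊β⌋ : ℝ) / (β ^ 2 - 1))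
    (B AG : Set ℝ)
    (hB : B = {X : ℝ | ∃ a b : ℤ, 0 ≤ a ∧ a ≤ ⌊β⌋ ∧ 0 ≤ b ∧ b ≤ ⌊β⌋ ∧ X = -(b : ℝ) * β + a})
    (hAG : AG =
      {X : ℝ | ∃ a b : ℤ, 0 ≤ a ∧ a ≤ ⌊β⌋ ∧ 1 ≤ b ∧ b ≤ ⌊β⌋ ∧ X = -(b : ℝ) * β + a} ∪
      {X : ℝ | ∃ a : ℤ, 0 ≤ a ∧ a ≤ ⌊β⌋ ∧ (a : ℝ) < β * (β - ⌊β⌋) ∧ X = (a : ℝ)})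
    (lX rX : ℝ → ℝ)
    (hlX : ∀ X, lX X = (X + l) / β ^ 2)
    (hrX : ∀ X ∈ AG, rX X =
      if X = sSup AG then l + 1 else (sInf {Y : ℝ | Y ∈ B ∧ X < Y} + l) / β ^ 2)
    -- the right-continuous greedy maps on [l, l+1)
    (DG TG : ℝ → ℝ)
    (hDG : ∀ X ∈ AG, ∀ x ∈ Set.Ico (lX X) (rX X), DG x = X)
    (hTG : ∀ x, TG x = β ^ 2 * x - DG x)
    (dG : ℝ → ℕ → ℝ) (hdG : ∀ x k, dG x k = DG (TG^[k] x))
    -- the left-continuous variants on (l, l+1]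
    (DGs TGs : ℝ → ℝ)
    (hDGs : ∀ X ∈ AG, ∀ x ∈ Set.Ioc (lX X) (rX X), DGs x = X)
    (hTGs : ∀ x, TGs x = β ^ 2 * x - DGs x)
    (dGs : ℝ → ℕ → ℝ) (hdGs : ∀ x k, dGs x k = DGs (TGs^[k] x))
    (X : ℕ → ℝ) (hX : ∀ k, X k ∈ AG) :
    (∃ x ∈ Set.Ico l (l + 1), dG x = X) ↔
      ∀ k : ℕ,
        (X k = sSup AG → LexLt (fun i => X (k + 1 + i)) (dGs (TGs (l + 1)))) ∧
        ((∃ b : ℤ, 0 ≤ b ∧ b ≤ ⌊β⌋ ∧ X k = -(b : ℝ) * β + (⌊β⌋ : ℝ)) → X k ≠ sSup AG →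
          LexLt (fun i => X (k + 1 + i)) (dGs (l + (β - ⌊β⌋)))) := by
  have hfl := Int.cast_floor_lt_of_forall_ne_natCast (by linarith) hni
  obtain rfl : l = leftEnd β := hl
  obtain rfl : B = pairDigits β := hB
  obtain rfl : AG = greedyAlphabet β := hAG
  obtain rfl : lX = fun X => (X + leftEnd β) / β ^ 2 := funext hlX
  obtain rfl : TG = greedyMap (β ^ 2) DG := funext hTG
  obtain rfl : TGs = greedyMap (β ^ 2) DGs := funext hTGs
  obtain rfl : dG = greedyDigits (β ^ 2) DG := funext₂ hdG
  obtain rfl : dGs = greedyDigits (β ^ 2) DGs := funext₂ hdGs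
  have hP := isGreedyPartition_greedyAlphabet hβ hfl hrX
  have himage : ∀ k, X k ≠ maxDigit β →
      β ^ 2 * rX (X k) - X k = leftEnd β + (succDigit β (X k) - X k) := fun k hk => by
    rw [rX_eq_succDigit hβ hfl hrX (hX k) hk, mul_div_cancel₀ _ (by positivity)]; ring
  rw [hP.isGreatest.csSup_eq, hP.exists_greedyDigits_eq_iff hDG hDGs hX]
  refine ⟨fun H k => ⟨fun hk => ?_, fun hb hk => ?_⟩, fun H k => ?_⟩
  · simpa only [hk, hP.greedyMap_add_one hDGs] using H k
  · simpa only [himage k hk, succDigit_of_isBlockTop hb, add_sub_cancel_left] using H k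
  · by_cases hk : X k = maxDigit β
    · simpa only [hk, hP.greedyMap_add_one hDGs] using (H k).1 hk
    by_cases hb : IsBlockTop β (X k)
    · simpa only [himage k hk, succDigit_of_isBlockTop hb, add_sub_cancel_left] using (H k).2 hb hk
    · rw [himage k hk, succDigit_of_not_isBlockTop hb, add_sub_cancel_left]
      exact hP.lexLt_greedyDigits_add_one hDGs (hX _) fun hM => by
        convert (H (k + 1)).1 hM using 3
        ring

theorem stmt12 (β : ℝ) (hβ : 1 < β) (hni : ∀ n : ℕ, β ≠ n)
    (l r : ℝ) (hl : l = -β * (⌊β⌋ : ℝ) / (β ^ 2 - 1)) (hr : r = (⌊β⌋ : ℝ) / (β ^ 2 - 1))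
    (B AG : Set ℝ)
    (hB : B = {X : ℝ | ∃ a b : ℤ, 0 ≤ a ∧ a ≤ ⌊β⌋ ∧ 0 ≤ b ∧ b ≤ ⌊β⌋ ∧ X = -(b : ℝ) * β + a})
    (hAG : AG =
      {X : ℝ | ∃ a b : ℤ, 0 ≤ a ∧ a ≤ ⌊β⌋ ∧ 1 ≤ b ∧ b ≤ ⌊β⌋ ∧ X = -(b : ℝ) * β + a} ∪
      {X : ℝ | ∃ a : ℤ, 0 ≤ a ∧ a ≤ ⌊β⌋ ∧ (a : ℝ) < β * (β - ⌊β⌋) ∧ X = (a : ℝ)})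
    (lX rX : ℝ → ℝ)
    (hlX : ∀ X, lX X = (X + l) / β ^ 2)
    (hrX : ∀ X ∈ AG, rX X =
      if X = sSup AG then l + 1 else (sInf {Y : ℝ | Y ∈ B ∧ X < Y} + l) / β ^ 2)
    -- the right-continuous greedy maps on [l, l+1)
    (DG TG : ℝ → ℝ)
    (hDG : ∀ X ∈ AG, ∀ x ∈ Set.Ico (lX X) (rX X), DG x = X)
    (hTG : ∀ x, TG x = β ^ 2 * x - DG x)
    (dG : ℝ → ℕ → ℝ) (hdG : ∀ x k, dG x k = DG (TG^[k] x))
    -- the left-continuous variants on (l, l+1]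
    (DGs TGs : ℝ → ℝ)
    (hDGs : ∀ X ∈ AG, ∀ x ∈ Set.Ioc (lX X) (rX X), DGs x = X)
    (hTGs : ∀ x, TGs x = β ^ 2 * x - DGs x)
    (dGs : ℝ → ℕ → ℝ) (hdGs : ∀ x k, dGs x k = DGs (TGs^[k] x))
    (X : ℕ → ℝ) (hX : ∀ k, X k ∈ AG) :
    (∃ x ∈ Set.Ico l (l + 1), dG x = X) ↔
      ∀ k : ℕ,
        (X k = sSup AG → LexLt (fun i => X (k + 1 + i)) (dGs (TGs (l + 1)))) ∧
        ((∃ b : ℤ, 0 ≤ b ∧ b ≤ ⌊β⌋ ∧ X k = -(b : ℝ) * β + (⌊β⌋ : ℝ)) → X k ≠ sSup AG →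
          LexLt (fun i => X (k + 1 + i)) (dGs (l + (β - ⌊β⌋)))) :=
  stmt12_general β hβ hni l hl B AG hB hAG lX rX hlX hrX DG TG hDG hTG dG hdG DGs TGs hDGs hTGs dGs
    hdGs X hX
end
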